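/- arXiv:2311.06197 — 13 statements merged into one kernel-verified Lean document; each statement's English description precedes it below -/
import Mathlib

section
/- Let A = ℕ \ ⋃_{t∈ℕ} (p_t ℕ + t), where (p_t) is a sequence of primes with ∑ 1/p_t < 1. Then for every integer t ≥ 0, the shifted set A - t contains only finitely many multiples of p_t; consequently A - t does not contain the finite sums set FS(B) of any infinite set B ⊂ ℕ. -/
/-- The finite sums set of `B`: all sums of finitely many distinct elements of `B`. -/
def FS (B : Set ℕ) : Set ℕ :=
  {n | ∃ F : Finset ℕ, ↑F ⊆ B ∧ F.Nonempty ∧ ∑ i ∈ F, i = n}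

/-- Straus's example: if `A = ℕ \ ⋃ₜ (pₜℕ + t)` for a sequence of primes with
`∑ 1/pₜ < 1`, then for every `t ≥ 0` the shift `A - t` contains only finitely many
multiples of `pₜ`, and consequently contains no finite sums set of an infinite set. -/
theorem straus_example (p : ℕ → ℕ) (hp : ∀ t, (p t).Prime)
    (hsummable : Summable fun t => (1 : ℝ) / p t)
    (hsum : ∑' t, (1 : ℝ) / p t < 1)
    (A : Set ℕ)
    (hA : A = {n : ℕ | 0 < n ∧ ∀ t : ℕ, ¬ ∃ k : ℕ, 0 < k ∧ n = p t * k + t}) :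
    ∀ t : ℕ,
      {n : ℕ | n + t ∈ A ∧ p t ∣ n}.Finite ∧
      ∀ B : Set ℕ, B.Infinite → ¬ (FS B ⊆ {n : ℕ | n + t ∈ A}) := by
  intro t
  -- Key fact: any n with n + t ∈ A and p t ∣ n must be 0.
  have key : ∀ n : ℕ, n + t ∈ A → p t ∣ n → n = 0 := by
    intro n hnA hdvd
    rw [hA] at hnA
    obtain ⟨k, hk⟩ := hdvd
    by_contra h0
    have hk0 : 0 < k := by
      rcases Nat.eq_zero_or_pos k with hk' | hk'
      · subst hk'; simp at hk; exact absurd hk h0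
      · exact hk'
    exact hnA.2 t ⟨k, hk0, by rw [hk]⟩
  constructor
  · apply Set.Finite.subset (Set.finite_singleton 0)
    intro n hn
    exact key n hn.1 hn.2
  · intro B hB hsub
    -- drop 0 from B
    have hB' : (B \ {0}).Infinite := hB.diff (Set.finite_singleton 0)
    set f : ℕ → ℕ := fun k => (hB'.natEmbedding _ k : ℕ) with hf
    have hfmem : ∀ k, f k ∈ B \ {0} := fun k => (hB'.natEmbedding _ k).2
    have hfinj : Function.Injective f := fun a b h => by
      have := (hB'.natEmbedding _).injective (Subtype.ext h); exact this
    have hfpos : ∀ k, 0 < f k := fun k => Nat.pos_of_ne_zero (fun h => (hfmem k).2 h)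
    set S : ℕ → ℕ := fun j => ∑ i ∈ Finset.range j, f i with hS
    have hppos : 0 < p t := (hp t).pos
    -- pigeonhole: two partial sums congruent mod p t
    have : ∃ i ∈ Finset.range (p t + 1), ∃ j ∈ Finset.range (p t + 1),
        i ≠ j ∧ S i % p t = S j % p t := by
      have hmaps : ∀ i ∈ Finset.range (p t + 1), S i % p t ∈ Finset.range (p t) := by
        intro i _; exact Finset.mem_range.2 (Nat.mod_lt _ hppos)
      have hcard : (Finset.range (p t)).card < (Finset.range (p t + 1)).card := by
        simp
      obtain ⟨i, hi, j, hj, hij, h⟩ :=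
        Finset.exists_ne_map_eq_of_card_lt_of_maps_to hcard hmaps
      exact ⟨i, hi, j, hj, hij, h⟩
    obtain ⟨i, hi1, j, hj1, hij, hmod⟩ := this
    -- wlog i < j
    wlog hlt : i < j generalizing i j
    · exact this j hj1 i hi1 hij.symm hmod.symm (by omega)
    -- n = sum over Ico i j
    set n : ℕ := ∑ k ∈ Finset.Ico i j, f k with hn
    have hsplit : S i + n = S j := by
      rw [hS]; simp only [Finset.range_eq_Ico]
      exact Finset.sum_Ico_consecutive _ (Nat.zero_le i) (le_of_lt hlt)
    have hnpos : 0 < n := by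
      apply Finset.sum_pos (fun k _ => hfpos k)
      exact ⟨i, Finset.mem_Ico.2 ⟨le_refl i, hlt⟩⟩
    have hdvd : p t ∣ n := by
      have : S i ≡ S j [MOD p t] := hmod
      have h2 : p t ∣ S j - S i := (Nat.modEq_iff_dvd' (by omega)).1 this
      have heq : S j - S i = n := by omega
      exact heq ▸ h2
    -- n ∈ FS B
    have hnFS : n ∈ FS B := by
      refine ⟨(Finset.Ico i j).image f, ?_, ?_, ?_⟩
      · intro x hx
        simp only [Finset.coe_image, Set.mem_image] at hx
        obtain ⟨k, _, rfl⟩ := hx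
        exact (hfmem k).1
      · exact Finset.Nonempty.image ⟨i, Finset.mem_Ico.2 ⟨le_refl i, hlt⟩⟩ f
      · rw [Finset.sum_image (fun a _ b _ h => hfinj h)]
    have := key n (hsub hnFS) hdvd
    omega
end

section
/- Fix 1 < c < 2 and let A = ℕ ∩ ⋃_{n∈ℕ} [4^n, c·4^n). Then there do not exist an infinite set B ⊂ ℕ and an integer t ≥ 0 such that { b₁ + b₂ + t : b₁, b₂ ∈ B } ⊆ A (where b₁ = b₂ is allowed). -/
/-- For `1 < c < 2`, the set `A = ℕ ∩ ⋃ₙ [4ⁿ, c·4ⁿ)` does not contain any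
unrestricted shifted sumset `B + B + t` with `B ⊆ ℕ` infinite and `t ≥ 0`. -/
theorem no_unrestricted_sumset_in_lacunary_intervals (c : ℝ) (hc1 : 1 < c) (hc2 : c < 2)
    (A : Set ℕ)
    (hA : A = {m : ℕ | ∃ n : ℕ, 1 ≤ n ∧ (4 : ℝ) ^ n ≤ (m : ℝ) ∧ (m : ℝ) < c * 4 ^ n}) :
    ¬ ∃ (B : Set ℕ) (t : ℕ), B.Infinite ∧
        {x : ℕ | ∃ b₁ ∈ B, ∃ b₂ ∈ B, x = b₁ + b₂ + t} ⊆ A := by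
  rintro ⟨B, t, hBinf, hsub⟩
  obtain ⟨b₁, hb₁⟩ := hBinf.nonempty
  obtain ⟨b, hbB, hb⟩ := hBinf.exists_gt (max b₁ ⌈(c * b₁ + (c - 1) * t) / (2 - c)⌉₊)
  have hb1b : (b₁ : ℝ) ≤ b := by
    exact_mod_cast le_of_lt (lt_of_le_of_lt (le_max_left _ _) hb)
  have hbig : (c * b₁ + (c - 1) * t) / (2 - c) < (b : ℝ) := by
    calc (c * b₁ + (c - 1) * t) / (2 - c) ≤ (⌈(c * b₁ + (c - 1) * t) / (2 - c)⌉₊ : ℝ) :=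
          Nat.le_ceil _
      _ < b := by exact_mod_cast lt_of_le_of_lt (le_max_right _ _) hb
  have hS : b₁ + b + t ∈ A := hsub ⟨b₁, hb₁, b, hbB, rfl⟩
  have h2b : b + b + t ∈ A := hsub ⟨b, hbB, b, hbB, rfl⟩
  rw [hA] at hS h2b
  obtain ⟨k, hk1, hkl, hku⟩ := hS
  obtain ⟨m, hm1, hml, hmu⟩ := h2b
  push_cast at hkl hku hml hmu
  have h4pos : (0 : ℝ) < 4 ^ k := by positivity
  have hcpos : (0 : ℝ) < c := by linarith
  have ht0 : (0 : ℝ) ≤ (t : ℝ) := Nat.cast_nonneg t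
  have hb10 : (0 : ℝ) ≤ (b₁ : ℝ) := Nat.cast_nonneg b₁
  have hmk : m ≤ k := by
    have h1 : (4 : ℝ) ^ m < 4 ^ (k + 1) := by
      calc (4 : ℝ) ^ m ≤ b + b + t := hml
        _ ≤ 2 * (b₁ + b + t) := by linarith
        _ < 2 * (c * 4 ^ k) := by linarith
        _ < 4 ^ (k + 1) := by rw [pow_succ]; nlinarith
    have := (pow_lt_pow_iff_right₀ (by norm_num : (1 : ℝ) < 4)).mp h1
    omega
  have hfin : (b : ℝ) + b + t < c * (b₁ + b + t) := by
    calc (b : ℝ) + b + t < c * 4 ^ m := hmu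
      _ ≤ c * 4 ^ k := by
          have := pow_le_pow_right₀ (by norm_num : (1 : ℝ) ≤ 4) hmk
          nlinarith
      _ ≤ c * (b₁ + b + t) := by nlinarith
  have h2c : (0 : ℝ) < 2 - c := by linarith
  rw [div_lt_iff₀ h2c] at hbig
  nlinarith
end

section
/- The following are equivalent for each fixed k ∈ ℕ: (1) every A ⊂ ℕ with d*(A) > 0 contains B^{⊕k} + t for some infinite B ⊂ ℕ and integer t ≥ 0; (2) every A ⊂ ℕ with d*(A) > 0 contains B^{⊕k} + t for some infinite B ⊂ ℕ and t ∈ {0, …, k−1}; (3) every A ⊂ ℕ with d*(A ∩ kℕ) > 0 contains B^{⊕k} for some infinite B ⊂ ℕ, where in (3) additionally A ⊆ kℕ may be assumed. -/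
open Classical in
/-- The upper Banach density `d*(A) = limsup_{N-M→∞} |A ∩ (M, N]| / (N - M)`. -/
noncomputable def upperBanachDensity (A : Set ℕ) : ℝ :=
  Filter.limsup
    (fun p : ℕ × ℕ =>
      (((Finset.Ioc p.1 p.2).filter (fun n => n ∈ A)).card : ℝ) / ((p.2 - p.1 : ℕ) : ℝ))
    (Filter.atTop.comap (fun p : ℕ × ℕ => p.2 - p.1))

/-- `B^{⊕k}`: the set of sums of `k` distinct elements of `B`. -/
def sumsOfK (k : ℕ) (B : Set ℕ) : Set ℕ :=
  {n | ∃ F : Finset ℕ, ↑F ⊆ B ∧ F.card = k ∧ ∑ i ∈ F, i = n}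

namespace BDaux

noncomputable def L : Filter (ℕ × ℕ) := Filter.atTop.comap (fun p : ℕ × ℕ => p.2 - p.1)

open Classical in
noncomputable def F (A : Set ℕ) (p : ℕ × ℕ) : ℝ :=
  (((Finset.Ioc p.1 p.2).filter (fun n => n ∈ A)).card : ℝ) / ((p.2 - p.1 : ℕ) : ℝ)

lemma ubd_eq (A : Set ℕ) : upperBanachDensity A = Filter.limsup (F A) L := rfl

instance : L.NeBot := by
  rw [L, Filter.comap_neBot_iff]
  intro t ht
  rcases Filter.mem_atTop_sets.1 ht with ⟨n, hn⟩
  exact ⟨(0, n), hn n (by simp)⟩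

lemma card_filter_ext {α : Type*} {p q : α → Prop} (h1 : DecidablePred p) (h2 : DecidablePred q)
    (s : Finset α) (hpq : ∀ a, p a ↔ q a) :
    (@Finset.filter α p h1 s).card = (@Finset.filter α q h2 s).card := by
  congr 1
  ext a
  simp only [Finset.mem_filter]
  exact and_congr_right fun _ => hpq a

lemma F_nonneg (A : Set ℕ) (p : ℕ × ℕ) : 0 ≤ F A p :=
  div_nonneg (Nat.cast_nonneg _) (Nat.cast_nonneg _)

lemma F_le_one (A : Set ℕ) (p : ℕ × ℕ) : F A p ≤ 1 := by
  classical
  rcases Nat.eq_zero_or_pos (p.2 - p.1) with h | h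
  · simp [F, h]
  · rw [F, div_le_one (by exact_mod_cast h)]
    have := Finset.card_le_card (Finset.filter_subset (fun n => n ∈ A) (Finset.Ioc p.1 p.2))
    rw [Nat.card_Ioc] at this
    exact_mod_cast this

lemma F_bddAbove (A : Set ℕ) : Filter.IsBoundedUnder (· ≤ ·) L (F A) :=
  Filter.isBoundedUnder_of ⟨1, F_le_one A⟩

lemma F_bddBelow (A : Set ℕ) : Filter.IsBoundedUnder (· ≥ ·) L (F A) :=
  Filter.isBoundedUnder_of ⟨0, F_nonneg A⟩

lemma F_cobdd (A : Set ℕ) : Filter.IsCoboundedUnder (· ≤ ·) L (F A) :=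
  (F_bddBelow A).isCoboundedUnder_flip

lemma ubd_nonneg (A : Set ℕ) : 0 ≤ upperBanachDensity A := by
  rw [ubd_eq]
  exact Filter.le_limsup_of_frequently_le
    (Filter.Eventually.frequently (Filter.Eventually.of_forall (F_nonneg A))) (F_bddAbove A)

lemma ubd_mono {A B : Set ℕ} (h : A ⊆ B) : upperBanachDensity A ≤ upperBanachDensity B := by
  rw [ubd_eq, ubd_eq]
  refine Filter.limsup_le_limsup (Filter.Eventually.of_forall fun p => ?_) (F_cobdd A) (F_bddAbove B)
  classical
  unfold F
  gcongr

lemma ubd_union_le (A B : Set ℕ) :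
    upperBanachDensity (A ∪ B) ≤ upperBanachDensity A + upperBanachDensity B := by
  rw [ubd_eq, ubd_eq, ubd_eq]
  have hptwise : ∀ p, F (A ∪ B) p ≤ (F A + F B) p := by
    intro p
    rcases Nat.eq_zero_or_pos (p.2 - p.1) with h | h
    · simp only [F, h, Nat.cast_zero, div_zero, Pi.add_apply]
      positivity
    · simp only [F, Pi.add_apply, ← add_div]
      rw [div_le_div_iff_of_pos_right (by exact_mod_cast h : (0:ℝ) < ((p.2 - p.1 : ℕ) : ℝ))]
      classical
      have : (Finset.Ioc p.1 p.2).filter (fun n => n ∈ A ∪ B) ⊆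
          (Finset.Ioc p.1 p.2).filter (fun n => n ∈ A) ∪
          (Finset.Ioc p.1 p.2).filter (fun n => n ∈ B) := by
        intro x hx
        simp only [Finset.mem_filter, Finset.mem_union, Set.mem_union] at hx ⊢
        tauto
      have h1 := Finset.card_le_card this
      have h2 := Finset.card_union_le ((Finset.Ioc p.1 p.2).filter (fun n => n ∈ A))
        ((Finset.Ioc p.1 p.2).filter (fun n => n ∈ B))
      have h3 := le_trans h1 h2
      rw [card_filter_ext (fun a => Classical.propDecidable _) (fun a => A.decidableUnion B a)
        (Finset.Ioc p.1 p.2) (fun a => Iff.rfl)]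
      exact_mod_cast h3
  calc Filter.limsup (F (A ∪ B)) L ≤ Filter.limsup (F A + F B) L :=
        Filter.limsup_le_limsup (Filter.Eventually.of_forall hptwise) (F_cobdd _)
          (Filter.isBoundedUnder_le_add (F_bddAbove A) (F_bddAbove B))
    _ ≤ _ := limsup_add_le (F_bddBelow A) (F_bddAbove A) (F_cobdd B) (F_bddAbove B)


lemma eventually_L {P : ℕ × ℕ → Prop} :
    (∀ᶠ p in L, P p) ↔ ∃ n : ℕ, ∀ p : ℕ × ℕ, n ≤ p.2 - p.1 → P p := by
  constructor
  · intro h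
    rcases Filter.mem_comap.1 h with ⟨t, ht, hsub⟩
    rcases Filter.mem_atTop_sets.1 ht with ⟨n, hn⟩
    exact ⟨n, fun p hp => hsub (hn _ hp)⟩
  · rintro ⟨n, hn⟩
    exact Filter.mem_comap.2 ⟨Set.Ici n, Filter.mem_atTop n, fun p hp => hn p hp⟩

lemma real_le_of_forall_pos_le_add {a b : ℝ} (h : ∀ ε : ℝ, 0 < ε → a ≤ b + ε) : a ≤ b := by
  by_contra hab
  push_neg at hab
  have := h ((a - b)/2) (by linarith)
  linarith

lemma ubd_lt_le_zero (k : ℕ) : upperBanachDensity {n : ℕ | n < k} ≤ 0 := by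
  refine real_le_of_forall_pos_le_add (fun ε hε => ?_)
  rw [ubd_eq]
  rw [zero_add]
  apply Filter.limsup_le_of_le (F_cobdd _)
  obtain ⟨n, hn⟩ := exists_nat_gt ((k : ℝ)/ε)
  refine eventually_L.2 ⟨max n 1, fun p hp => ?_⟩
  have h1 : 1 ≤ p.2 - p.1 := le_trans (le_max_right n 1) hp
  have h2 : n ≤ p.2 - p.1 := le_trans (le_max_left n 1) hp
  have hD : (0:ℝ) < ((p.2 - p.1 : ℕ) : ℝ) := by exact_mod_cast h1
  have hcard : (@Finset.filter ℕ (fun n => n ∈ {n : ℕ | n < k})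
      (fun a => Classical.propDecidable _) (Finset.Ioc p.1 p.2)).card ≤ k := by
    refine le_trans (Finset.card_le_card ?_) (by simp : (Finset.range k).card ≤ k)
    intro x hx
    simp only [Finset.mem_filter, Set.mem_setOf_eq] at hx
    exact Finset.mem_range.2 hx.2
  have hkd : (k : ℝ) / ε ≤ ((p.2 - p.1 : ℕ) : ℝ) := by
    refine le_trans (le_of_lt hn) ?_
    exact_mod_cast le_trans (le_max_left n 1) hp
  have : F {n : ℕ | n < k} p ≤ (k : ℝ) / ((p.2 - p.1 : ℕ) : ℝ) := by
    unfold F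
    gcongr
  refine le_trans this ?_
  rw [div_le_iff₀ hD]
  rw [div_le_iff₀ hε] at hkd
  linarith [mul_comm ε ((p.2 - p.1 : ℕ) : ℝ)]

lemma ubd_empty_le : upperBanachDensity (∅ : Set ℕ) ≤ 0 := by
  refine le_trans (ubd_mono ?_) (ubd_lt_le_zero 0)
  simp

lemma ubd_biUnion_le {ι : Type*} [DecidableEq ι] (s : Finset ι) (g : ι → Set ℕ) :
    upperBanachDensity (⋃ i ∈ s, g i) ≤ ∑ i ∈ s, upperBanachDensity (g i) := by
  induction s using Finset.induction with
  | empty =>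
      simpa using ubd_empty_le
  | @insert a s ha ih =>
      rw [Finset.set_biUnion_insert, Finset.sum_insert ha]
      exact le_trans (ubd_union_le _ _) (add_le_add le_rfl ih)


open Classical in
lemma ubd_shift (S : Set ℕ) (r : ℕ) :
    upperBanachDensity S ≤ upperBanachDensity {n : ℕ | n + r ∈ S} := by
  set T := {n : ℕ | n + r ∈ S} with hT
  refine real_le_of_forall_pos_le_add (fun ε hε => ?_)
  have hlt : upperBanachDensity T < upperBanachDensity T + ε/2 := by linarith
  rw [ubd_eq T] at hlt
  obtain ⟨n₀, hn₀⟩ := eventually_L.1 (Filter.eventually_lt_of_limsup_lt hlt (F_bddAbove T))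
  obtain ⟨K, hK⟩ := exists_nat_gt (2 * (r : ℝ) / ε)
  set n₁ := max (n₀ + r + 1) (K + 1) with hn₁def
  rw [ubd_eq S, ubd_eq T]
  have key : ∀ p : ℕ × ℕ, n₁ ≤ p.2 - p.1 →
      F S p ≤ Filter.limsup (F T) L + ε := by
    rintro ⟨M, N⟩ hd
    simp only at hd
    set M'' := max M r with hM''
    have hrM : r ≤ M'' := le_max_right M r
    have hMM : M ≤ M'' := le_max_left M r
    have hub : M'' ≤ M + r := max_le (Nat.le_add_right M r) (Nat.le_add_left r M)
    have hn₁a : n₀ + r + 1 ≤ n₁ := le_max_left _ _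
    have hn₁b : K + 1 ≤ n₁ := le_max_right _ _
    have hNM : n₀ + r + 1 ≤ N - M := le_trans hn₁a hd
    have hrN : r + 1 ≤ N := by omega
    have hM''N : M'' ≤ N := max_le (by omega) (by omega)
    -- the shifted pair
    have hd' : (N - r) - (M'' - r) = N - M'' := by omega
    have hd'n₀ : n₀ ≤ (N - r) - (M'' - r) := by omega
    have hcount : ((Finset.Ioc (M'' - r) (N - r)).filter (fun n => n ∈ T)).card
        = ((Finset.Ioc M'' N).filter (fun n => n ∈ S)).card := by
      apply Finset.card_bij (fun n _ => n + r)
      · intro a ha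
        simp only [Finset.mem_filter, Finset.mem_Ioc, hT, Set.mem_setOf_eq] at ha ⊢
        refine ⟨⟨by omega, by omega⟩, ha.2⟩
      · intro a _ b _ h
        omega
      · intro b hb
        simp only [Finset.mem_filter, Finset.mem_Ioc, hT, Set.mem_setOf_eq] at hb ⊢
        refine ⟨b - r, ⟨⟨by omega, by omega⟩, ?_⟩, by omega⟩
        have : b - r + r = b := by omega
        rw [this]
        exact hb.2
    have hsplit : ((Finset.Ioc M N).filter (fun n => n ∈ S)).card
        ≤ ((Finset.Ioc M'' N).filter (fun n => n ∈ S)).card + r := by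
      have hsub : (Finset.Ioc M N).filter (fun n => n ∈ S)
          ⊆ ((Finset.Ioc M'' N).filter (fun n => n ∈ S)) ∪ Finset.Ioc M M'' := by
        intro x hx
        simp only [Finset.mem_filter, Finset.mem_Ioc, Finset.mem_union] at hx ⊢
        rcases le_or_gt x M'' with h | h
        · exact Or.inr ⟨hx.1.1, h⟩
        · exact Or.inl ⟨⟨h, hx.1.2⟩, hx.2⟩
      refine le_trans (Finset.card_le_card hsub) (le_trans (Finset.card_union_le _ _) ?_)
      have : (Finset.Ioc M M'').card ≤ r := by
        rw [Nat.card_Ioc]; omega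
      omega
    -- real arithmetic
    have hDpos : (0:ℝ) < ((N - M : ℕ) : ℝ) := by
      have : 1 ≤ N - M := by omega
      exact_mod_cast this
    have hD'pos : (0:ℝ) < (((N - r) - (M'' - r) : ℕ) : ℝ) := by
      have : 1 ≤ (N - r) - (M'' - r) := by omega
      exact_mod_cast this
    have hD'le : (((N - r) - (M'' - r) : ℕ) : ℝ) ≤ ((N - M : ℕ) : ℝ) := by
      have : (N - r) - (M'' - r) ≤ N - M := by omega
      exact_mod_cast this
    have hFT := hn₀ (M'' - r, N - r) hd'n₀
    have step1 : F S (M, N)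
        ≤ ((((Finset.Ioc M'' N).filter (fun n => n ∈ S)).card : ℝ) + r) / ((N - M : ℕ) : ℝ) := by
      unfold F
      simp only
      gcongr
      exact_mod_cast hsplit
    have step2 : ((((Finset.Ioc M'' N).filter (fun n => n ∈ S)).card : ℝ)) / ((N - M : ℕ) : ℝ)
        ≤ F T (M'' - r, N - r) := by
      unfold F
      simp only
      rw [← hcount]
      exact div_le_div_of_nonneg_left (Nat.cast_nonneg _) hD'pos hD'le
    have step3 : (r : ℝ) / ((N - M : ℕ) : ℝ) ≤ ε / 2 := by
      have hKD : 2 * (r : ℝ) / ε < ((N - M : ℕ) : ℝ) := by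
        refine lt_of_lt_of_le hK ?_
        exact_mod_cast by omega
      rw [div_lt_iff₀ hε] at hKD
      rw [div_le_iff₀ hDpos]
      nlinarith
    have := add_div (((((Finset.Ioc M'' N).filter (fun n => n ∈ S)).card) : ℝ)) (r : ℝ)
      ((N - M : ℕ) : ℝ)
    calc F S (M, N) ≤ _ := step1
      _ = _ := this
      _ ≤ F T (M'' - r, N - r) + ε / 2 := add_le_add step2 step3
      _ ≤ Filter.limsup (F T) L + ε/2 + ε/2 := by
          exact add_le_add (le_of_lt hFT) le_rfl
      _ = Filter.limsup (F T) L + ε := by ring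
  exact Filter.limsup_le_of_le (F_cobdd S) (eventually_L.2 ⟨n₁, key⟩)


lemma sums_of_image_add {k q : ℕ} {B : Set ℕ} {s' : ℕ}
    (h : s' ∈ sumsOfK k ((fun b => b + q) '' B)) :
    ∃ s, s ∈ sumsOfK k B ∧ s' = s + k * q := by
  obtain ⟨F', hF'B, hcard, hsum⟩ := h
  have hq : ∀ x ∈ F', q ≤ x := by
    intro x hx
    obtain ⟨b, _, rfl⟩ := hF'B hx
    exact Nat.le_add_left q b
  have hinj : ∀ a ∈ F', ∀ b ∈ F', a - q = b - q → a = b := by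
    intro a ha b hb hab
    have := hq a ha
    have := hq b hb
    omega
  refine ⟨∑ x ∈ F', (x - q), ⟨F'.image (fun x => x - q), ?_, ?_, ?_⟩, ?_⟩
  · intro x hx
    simp only [Finset.coe_image, Set.mem_image, Finset.mem_coe] at hx
    obtain ⟨y, hy, rfl⟩ := hx
    obtain ⟨b, hb, rfl⟩ := hF'B hy
    simpa [Nat.add_sub_cancel] using hb
  · rw [Finset.card_image_of_injOn (fun a ha b hb => hinj a ha b hb), hcard]
  · rw [Finset.sum_image hinj]
  · have hsum2 : ∑ x ∈ F', (x - q) + F'.card * q = ∑ x ∈ F', x := by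
      rw [← smul_eq_mul, ← Finset.sum_const, ← Finset.sum_add_distrib]
      exact Finset.sum_congr rfl (fun x hx => by have := hq x hx; omega)
    rw [hcard] at hsum2
    omega

lemma image_add_infinite {B : Set ℕ} (hB : B.Infinite) (q : ℕ) :
    ((fun b => b + q) '' B).Infinite :=
  hB.image (Set.injOn_of_injective (add_left_injective q))

lemma all_mod_eq {k : ℕ} (hk : 0 < k) {t : ℕ} {B : Set ℕ} (hB : B.Infinite)
    (h : ∀ s ∈ sumsOfK k B, k ∣ s + t) :
    k ∣ t ∧ ∀ s ∈ sumsOfK k B, k ∣ s := by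
  have hcong : ∀ b ∈ B, ∀ b' ∈ B, b % k = b' % k := by
    intro b hb b' hb'
    have hinf : (B \ {b, b'}).Infinite :=
      hB.diff ((Set.finite_singleton b').insert b)
    obtain ⟨G, hGsub, hGcard⟩ := hinf.exists_subset_card_eq (k - 1)
    have hGB : ↑G ⊆ B := fun x hx => ((hGsub hx).1)
    have hbG : b ∉ G := fun hG => (hGsub hG).2 (by simp)
    have hb'G : b' ∉ G := fun hG => (hGsub hG).2 (by simp)
    have hmem : ∀ c ∈ B, c ∉ G → (c + ∑ i ∈ G, i) ∈ sumsOfK k B := by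
      intro c hc hcG
      refine ⟨insert c G, ?_, ?_, ?_⟩
      · intro x hx
        simp only [Finset.coe_insert, Set.mem_insert_iff] at hx
        rcases hx with rfl | hx
        · exact hc
        · exact hGB hx
      · rw [Finset.card_insert_of_notMem hcG, hGcard]; omega
      · rw [Finset.sum_insert hcG]
    have h1 := h _ (hmem b hb hbG)
    have h2 := h _ (hmem b' hb' hb'G)
    have m1 : b + (∑ i ∈ G, i + t) ≡ 0 [MOD k] := by
      rw [Nat.modEq_zero_iff_dvd, ← add_assoc]; exact h1
    have m2 : b' + (∑ i ∈ G, i + t) ≡ 0 [MOD k] := by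
      rw [Nat.modEq_zero_iff_dvd, ← add_assoc]; exact h2
    exact Nat.ModEq.add_right_cancel' _ (m1.trans m2.symm)
  obtain ⟨b₀, hb₀⟩ := hB.nonempty
  have hdvd : ∀ s ∈ sumsOfK k B, k ∣ s := by
    rintro s ⟨F, hFB, hFcard, rfl⟩
    have : (∑ i ∈ F, i) % k = 0 := by
      rw [Finset.sum_nat_mod]
      have : ∑ i ∈ F, i % k = ∑ _i ∈ F, b₀ % k :=
        Finset.sum_congr rfl (fun i hi => hcong i (hFB hi) b₀ hb₀)
      rw [this, Finset.sum_const, smul_eq_mul, hFcard, Nat.mul_mod_right]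
    exact Nat.dvd_iff_mod_eq_zero.mpr this
  obtain ⟨F₀, hF₀B, hF₀card⟩ := hB.exists_subset_card_eq k
  have hs₀ : (∑ i ∈ F₀, i) ∈ sumsOfK k B := ⟨F₀, hF₀B, hF₀card, rfl⟩
  have h1 := hdvd _ hs₀
  have h2 := h _ hs₀
  refine ⟨?_, hdvd⟩
  have := Nat.dvd_sub h2 h1
  simpa using this

end BDaux

open BDaux

/-- Equivalences for the shift in the conjecture that positive upper Banach density
sets contain `B^{⊕k} + t`. -/
theorem shift_equivalences (k : ℕ) (hk : 0 < k) :
    ((∀ A : Set ℕ, 0 < upperBanachDensity A →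
        ∃ (B : Set ℕ) (t : ℕ), B.Infinite ∧ ∀ s ∈ sumsOfK k B, s + t ∈ A) ↔
      (∀ A : Set ℕ, 0 < upperBanachDensity A →
        ∃ (B : Set ℕ) (t : ℕ), B.Infinite ∧ t < k ∧ ∀ s ∈ sumsOfK k B, s + t ∈ A)) ∧
    ((∀ A : Set ℕ, 0 < upperBanachDensity A →
        ∃ (B : Set ℕ) (t : ℕ), B.Infinite ∧ ∀ s ∈ sumsOfK k B, s + t ∈ A) ↔
      (∀ A : Set ℕ, 0 < upperBanachDensity (A ∩ {n : ℕ | ∃ m : ℕ, 0 < m ∧ n = k * m}) →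
        ∃ B : Set ℕ, B.Infinite ∧ sumsOfK k B ⊆ A)) := by
  constructor
  · constructor
    · intro h1 A hA
      obtain ⟨B, t, hB, hsum⟩ := h1 A hA
      refine ⟨(fun b => b + t / k) '' B, t % k, image_add_infinite hB _, Nat.mod_lt _ hk, ?_⟩
      intro s' hs'
      obtain ⟨s, hs, rfl⟩ := sums_of_image_add hs'
      have heq : s + k * (t / k) + t % k = s + t := by
        have := Nat.div_add_mod t k; omega
      rw [heq]
      exact hsum s hs
    · intro h2 A hA
      obtain ⟨B, t, hB, _, hsum⟩ := h2 A hA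
      exact ⟨B, t, hB, hsum⟩
  · constructor
    · intro h1 A hA
      obtain ⟨B, t, hB, hsum⟩ := h1 _ hA
      have hdivsum : ∀ s ∈ sumsOfK k B, k ∣ s + t := by
        intro s hs
        obtain ⟨hsA, m, hm, hEq⟩ := hsum s hs
        exact ⟨m, hEq⟩
      obtain ⟨⟨q, rfl⟩, hdvds⟩ := all_mod_eq hk hB hdivsum
      refine ⟨(fun b => b + q) '' B, image_add_infinite hB q, ?_⟩
      intro s' hs'
      obtain ⟨s, hs, rfl⟩ := sums_of_image_add hs'
      exact (hsum s hs).1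
    · intro h3 A hA
      set g : ℕ → Set ℕ := fun r => A ∩ {n : ℕ | ∃ j : ℕ, 0 < j ∧ n = k * j + r} with hg
      have hcover : A ⊆ {n : ℕ | n < k} ∪ ⋃ r ∈ Finset.range k, g r := by
        intro n hn
        rcases lt_or_ge n k with h | h
        · exact Or.inl h
        · refine Or.inr ?_
          simp only [Set.mem_iUnion, Finset.mem_range]
          refine ⟨n % k, Nat.mod_lt _ hk, hn, n / k, Nat.div_pos h hk,
            (Nat.div_add_mod n k).symm⟩
      have hle := ubd_mono hcover
      have hun := ubd_union_le {n : ℕ | n < k} (⋃ r ∈ Finset.range k, g r)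
      have hsumle := ubd_biUnion_le (Finset.range k) g
      have hk0 := ubd_lt_le_zero k
      obtain ⟨r, hrmem, hr⟩ : ∃ r ∈ Finset.range k, 0 < upperBanachDensity (g r) := by
        by_contra hcon
        push_neg at hcon
        have hnp : ∑ r ∈ Finset.range k, upperBanachDensity (g r) ≤ 0 :=
          Finset.sum_nonpos (fun i hi => hcon i hi)
        linarith
      set A' := {n : ℕ | n + r ∈ A} with hA'
      have hTeq : {n : ℕ | n + r ∈ g r} = A' ∩ {n : ℕ | ∃ m : ℕ, 0 < m ∧ n = k * m} := by
        ext n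
        simp only [hg, Set.mem_setOf_eq, Set.mem_inter_iff, hA']
        constructor
        · rintro ⟨hnA, j, hj, hEq⟩
          exact ⟨hnA, j, hj, by omega⟩
        · rintro ⟨hnA, m, hm, rfl⟩
          exact ⟨hnA, m, hm, rfl⟩
      have hshift := ubd_shift (g r) r
      rw [hTeq] at hshift
      obtain ⟨B, hB, hBsub⟩ := h3 A' (lt_of_lt_of_le hr hshift)
      exact ⟨B, r, hB, fun s hs => hBsub hs⟩
end

section
/- Suppose every A ⊂ ℕ with positive upper Banach density contains B + C for some infinite sets B, C ⊂ ℕ. Then for any A ⊂ ℕ with d*(A) > 0 and any syndetic sets P, Q ⊂ ℕ, there exist infinite sets P′ ⊆ P, Q′ ⊆ Q and an integer t ≥ 0 such that P′ + Q′ + t ⊆ A. -/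
/-- A set `S ⊆ ℕ` is syndetic if `(S - 1) ∪ ⋯ ∪ (S - h) = ℕ` for some `h`. -/
def Syndetic (S : Set ℕ) : Prop :=
  ∃ h : ℕ, ∀ n : ℕ, ∃ i : ℕ, 1 ≤ i ∧ i ≤ h ∧ n + i ∈ S

/-- From an infinite set `B` and a syndetic set `P`, one can find an infinite subset
`B'` of `B` and a fixed shift `s` such that `b - s ∈ P` for all `b ∈ B'`. -/
lemma exists_shift_of_syndetic {P : Set ℕ} (hP : Syndetic P) {B : Set ℕ}
    (hB : B.Infinite) :
    ∃ (s : ℕ) (B' : Set ℕ), B' ⊆ B ∧ B'.Infinite ∧ ∀ b ∈ B', b - s ∈ P ∧ s ≤ b := by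
  obtain ⟨h, hs⟩ := hP
  -- the chosen element of P near each n
  set g : ℕ → ℕ := fun b => b - ((b - h) + (hs (b - h)).choose) with hg
  set B₁ : Set ℕ := {b ∈ B | h ≤ b} with hB₁
  have hB₁inf : B₁.Infinite := by
    have heq : B₁ = B \ Set.Iio h := by
      ext b; simp [hB₁, Set.mem_diff, not_lt]
    rw [heq]
    exact hB.diff (Set.finite_Iio h)
  have key : ∀ b ∈ B₁, g b < h ∧ b - g b ∈ P ∧ g b ≤ b := by
    intro b hb
    obtain ⟨hb1, hbh⟩ := hb
    obtain ⟨hi1, hi2, hiP⟩ := (hs (b - h)).choose_spec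
    set i := (hs (b - h)).choose
    set p := (b - h) + i with hp
    have hple : p ≤ b := by omega
    have hgb : g b = b - p := rfl
    refine ⟨by omega, ?_, by omega⟩
    have : b - g b = p := by omega
    rw [this]; exact hiP
  -- pigeonhole: some value of g occurs infinitely often on B₁
  have : ∃ s ∈ Finset.range h, {b ∈ B₁ | g b = s}.Infinite := by
    by_contra hcon
    push_neg at hcon
    have hfin : (⋃ s ∈ Finset.range h, {b ∈ B₁ | g b = s}).Finite :=
      Set.Finite.biUnion (Finset.finite_toSet _) (fun s hsm => hcon s hsm)
    have hsub : B₁ ⊆ ⋃ s ∈ Finset.range h, {b ∈ B₁ | g b = s} := by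
      intro b hb
      have := (key b hb).1
      exact Set.mem_biUnion (Finset.mem_range.mpr this) ⟨hb, rfl⟩
    exact (hfin.subset hsub).not_infinite hB₁inf
  obtain ⟨s, _, hsinf⟩ := this
  refine ⟨s, {b ∈ B₁ | g b = s}, ?_, hsinf, ?_⟩
  · intro b hb; exact hb.1.1
  · rintro b ⟨hb, rfl⟩
    exact ⟨(key b hb).2.1, (key b hb).2.2⟩

/-- Assuming every positive upper Banach density set contains `B + C` with `B, C`
infinite, any positive density set contains `P' + Q' + t` with `P' ⊆ P`, `Q' ⊆ Q`
infinite, for any syndetic sets `P, Q`. -/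
theorem syndetic_summands
    (H : ∀ A : Set ℕ, 0 < upperBanachDensity A →
      ∃ B C : Set ℕ, B.Infinite ∧ C.Infinite ∧
        {x : ℕ | ∃ b ∈ B, ∃ c ∈ C, x = b + c} ⊆ A) :
    ∀ A : Set ℕ, 0 < upperBanachDensity A →
      ∀ P Q : Set ℕ, Syndetic P → Syndetic Q →
        ∃ (P' Q' : Set ℕ) (t : ℕ), P' ⊆ P ∧ Q' ⊆ Q ∧ P'.Infinite ∧ Q'.Infinite ∧
          {x : ℕ | ∃ p ∈ P', ∃ q ∈ Q', x = p + q + t} ⊆ A := by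
  intro A hA P Q hPsyn hQsyn
  obtain ⟨B, C, hBinf, hCinf, hBC⟩ := H A hA
  obtain ⟨s, B', hB'B, hB'inf, hB'⟩ := exists_shift_of_syndetic hPsyn hBinf
  obtain ⟨r, C', hC'C, hC'inf, hC'⟩ := exists_shift_of_syndetic hQsyn hCinf
  refine ⟨(fun b => b - s) '' B', (fun c => c - r) '' C', s + r, ?_, ?_, ?_, ?_, ?_⟩
  · rintro _ ⟨b, hb, rfl⟩; exact (hB' b hb).1
  · rintro _ ⟨c, hc, rfl⟩; exact (hC' c hc).1
  · exact hB'inf.image (fun a ha b hb hab => by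
      have := (hB' a ha).2; have := (hB' b hb).2; omega)
  · exact hC'inf.image (fun a ha b hb hab => by
      have := (hC' a ha).2; have := (hC' b hb).2; omega)
  · rintro x ⟨_, ⟨b, hb, rfl⟩, _, ⟨c, hc, rfl⟩, rfl⟩
    have hbs := (hB' b hb).2
    have hcr := (hC' c hc).2
    have : b - s + (c - r) + (s + r) = b + c := by omega
    rw [this]
    exact hBC ⟨b, hB'B hb, c, hC'C hc, rfl⟩
end

section
/- Let W ⊂ ℕ and let Φ = (Φ_N) be a Følner sequence in ℕ such that the density d_Φ(W) exists and equals 0. Then there exists A ⊂ ℕ with d_Φ(A) = 1 such that whenever B, C ⊂ ℕ satisfy C ⊆ W and B + C ⊆ A, the set C is finite. -/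
open Filter Finset

/-- A Følner sequence in `(ℕ, +)`. -/
def IsFolner (Φ : ℕ → Finset ℕ) : Prop :=
  (∀ N, (Φ N).Nonempty) ∧
  ∀ t : ℕ, Filter.Tendsto
    (fun N => (((Φ N).filter (fun n => n + t ∈ Φ N)).card : ℝ) / ((Φ N).card : ℝ))
    Filter.atTop (nhds 1)

open Classical in
/-- `A` has density `d` along the Følner sequence `Φ`. -/
noncomputable def HasDensityAlong (Φ : ℕ → Finset ℕ) (A : Set ℕ) (d : ℝ) : Prop :=
  Filter.Tendsto
    (fun N => (((Φ N).filter (fun n => n ∈ A)).card : ℝ) / ((Φ N).card : ℝ))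
    Filter.atTop (nhds d)

open Classical in
lemma card_shift_le (Φ : Finset ℕ) (W : Set ℕ) (s : ℕ) :
    (Φ.filter (fun x => s ≤ x ∧ x - s ∈ W)).card ≤
      (Φ.filter (fun n => n ∈ W)).card + (Φ.card - (Φ.filter (fun n => n + s ∈ Φ)).card) := by
  classical
  set S := Φ.filter (fun x => s ≤ x ∧ x - s ∈ W) with hS
  set T := S.image (fun x => x - s) with hT
  set D := (Φ.image (fun x => x - s)).filter (fun y => y + s ∈ Φ) with hD
  have hcardT : T.card = S.card := by
    apply Finset.card_image_of_injOn
    intro x hx y hy hxy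
    simp only [hS, Finset.mem_coe, Finset.mem_filter] at hx hy
    have hxy' : x - s = y - s := hxy
    omega
  have hsub : T ⊆ (Φ.filter (fun n => n ∈ W)) ∪ (D \ Φ) := by
    intro y hy
    simp only [hT, Finset.mem_image] at hy
    obtain ⟨x, hx, rfl⟩ := hy
    simp only [hS, Finset.mem_filter] at hx
    obtain ⟨hxΦ, hsx, hw⟩ := hx
    have hadd : x - s + s = x := Nat.sub_add_cancel hsx
    by_cases hyΦ : x - s ∈ Φ
    · exact Finset.mem_union_left _ (Finset.mem_filter.2 ⟨hyΦ, hw⟩)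
    · refine Finset.mem_union_right _ (Finset.mem_sdiff.2 ⟨?_, hyΦ⟩)
      simp only [hD, Finset.mem_filter, Finset.mem_image]
      exact ⟨⟨x, hxΦ, rfl⟩, by rw [hadd]; exact hxΦ⟩
  have h1 : (D \ Φ).card ≤ Φ.card - (Φ.filter (fun n => n + s ∈ Φ)).card := by
    have hDle : D.card ≤ Φ.card := le_trans (Finset.card_filter_le _ _) (Finset.card_image_le)
    have hfil : Φ.filter (fun n => n + s ∈ Φ) ⊆ D ∩ Φ := by
      intro n hn
      simp only [Finset.mem_filter] at hn
      refine Finset.mem_inter.2 ⟨?_, hn.1⟩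
      simp only [hD, Finset.mem_filter, Finset.mem_image]
      refine ⟨⟨n + s, hn.2, by omega⟩, ?_⟩
      simpa using hn.2
    have h2 := Finset.card_le_card hfil
    have h3 := Finset.card_inter_add_card_sdiff D Φ
    omega
  calc S.card = T.card := hcardT.symm
    _ ≤ _ := le_trans (Finset.card_le_card hsub) (Finset.card_union_le _ _)
    _ ≤ _ := by
      have := Finset.card_le_card hsub
      omega

open Classical in
/-- The finset of elements of `Φ N` lying in `A`. -/
noncomputable def densF (Φ : ℕ → Finset ℕ) (A : Set ℕ) (N : ℕ) : Finset ℕ :=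
  (Φ N).filter (fun n => n ∈ A)

/-- The density ratio at stage `N`. -/
noncomputable def densR (Φ : ℕ → Finset ℕ) (A : Set ℕ) (N : ℕ) : ℝ :=
  ((densF Φ A N).card : ℝ) / ((Φ N).card : ℝ)

lemma hasDensityAlong_iff (Φ : ℕ → Finset ℕ) (A : Set ℕ) (d : ℝ) :
    HasDensityAlong Φ A d ↔ Filter.Tendsto (densR Φ A) Filter.atTop (nhds d) := Iff.rfl

lemma mem_densF {Φ : ℕ → Finset ℕ} {A : Set ℕ} {N x : ℕ} :
    x ∈ densF Φ A N ↔ x ∈ Φ N ∧ x ∈ A := by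
  simp [densF]

lemma densR_nonneg (Φ : ℕ → Finset ℕ) (A : Set ℕ) (N : ℕ) : 0 ≤ densR Φ A N :=
  div_nonneg (by positivity) (by positivity)

lemma densR_le_densR {Φ : ℕ → Finset ℕ} {S T : Set ℕ} {N : ℕ}
    (h : ∀ x ∈ Φ N, x ∈ S → x ∈ T) : densR Φ S N ≤ densR Φ T N := by
  unfold densR
  apply div_le_div_of_nonneg_right ?_ (by positivity)
  exact_mod_cast Finset.card_le_card (fun x hx => by
    rw [mem_densF] at hx ⊢; exact ⟨hx.1, h x hx.1 hx.2⟩)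

lemma shift_density_zero (W : Set ℕ) (Φ : ℕ → Finset ℕ) (hΦ : IsFolner Φ)
    (hW : HasDensityAlong Φ W 0) (s : ℕ) :
    HasDensityAlong Φ {x | s ≤ x ∧ x - s ∈ W} 0 := by
  classical
  have hc : ∀ N, (0:ℝ) < ((Φ N).card : ℝ) := fun N => by exact_mod_cast Finset.card_pos.2 (hΦ.1 N)
  rw [hasDensityAlong_iff]
  have hupper : ∀ N, densR Φ {x | s ≤ x ∧ x - s ∈ W} N
      ≤ densR Φ W N + (1 - (((Φ N).filter (fun n => n + s ∈ Φ N)).card : ℝ) / ((Φ N).card : ℝ)) := by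
    intro N
    have h2 : ((Φ N).filter (fun n => n + s ∈ Φ N)).card ≤ (Φ N).card := Finset.card_filter_le _ _
    have hcard : (densF Φ {x | s ≤ x ∧ x - s ∈ W} N).card ≤
        (densF Φ W N).card + ((Φ N).card - ((Φ N).filter (fun n => n + s ∈ Φ N)).card) := by
      have hfc : densF Φ {x | s ≤ x ∧ x - s ∈ W} N = (Φ N).filter (fun x => s ≤ x ∧ x - s ∈ W) := by
        ext x
        simp [densF, Set.mem_setOf_eq]
      have hfc2 : densF Φ W N = (Φ N).filter (fun n => n ∈ W) := by
        ext x
        simp [densF]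
      rw [hfc, hfc2]
      exact card_shift_le (Φ N) W s
    have h3 : ((densF Φ {x | s ≤ x ∧ x - s ∈ W} N).card : ℝ) ≤
        ((densF Φ W N).card : ℝ) + (((Φ N).card : ℝ) - (((Φ N).filter (fun n => n + s ∈ Φ N)).card : ℝ)) := by
      rw [← Nat.cast_sub h2, ← Nat.cast_add]
      exact_mod_cast hcard
    have hne : ((Φ N).card : ℝ) ≠ 0 := ne_of_gt (hc N)
    have heq : (((densF Φ W N).card : ℝ)
          + (((Φ N).card : ℝ) - (((Φ N).filter (fun n => n + s ∈ Φ N)).card : ℝ))) / ((Φ N).card : ℝ)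
        = densR Φ W N + (1 - (((Φ N).filter (fun n => n + s ∈ Φ N)).card : ℝ) / ((Φ N).card : ℝ)) := by
      unfold densR
      field_simp
    rw [← heq]
    exact div_le_div_of_nonneg_right h3 (hc N).le
  have hlim : Tendsto (fun N => densR Φ W N
      + (1 - (((Φ N).filter (fun n => n + s ∈ Φ N)).card : ℝ) / ((Φ N).card : ℝ))) atTop (nhds 0) := by
    have := hW.add ((tendsto_const_nhds (x := (1:ℝ))).sub (hΦ.2 s))
    simpa [densR, densF] using this
  exact tendsto_of_tendsto_of_tendsto_of_le_of_le tendsto_const_nhds hlim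
    (fun N => densR_nonneg Φ _ N) (fun N => hupper N)

lemma density_zero_union (Φ : ℕ → Finset ℕ) (hΦ : IsFolner Φ) {S T : Set ℕ}
    (hS : HasDensityAlong Φ S 0) (hT : HasDensityAlong Φ T 0) :
    HasDensityAlong Φ (S ∪ T) 0 := by
  classical
  have hc : ∀ N, (0:ℝ) < ((Φ N).card : ℝ) := fun N => by exact_mod_cast Finset.card_pos.2 (hΦ.1 N)
  rw [hasDensityAlong_iff]
  have hupper : ∀ N, densR Φ (S ∪ T) N ≤ densR Φ S N + densR Φ T N := by
    intro N
    unfold densR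
    rw [← add_div]
    refine div_le_div_of_nonneg_right ?_ (hc N).le
    have hsub : densF Φ (S ∪ T) N ⊆ densF Φ S N ∪ densF Φ T N := by
      intro x hx
      rw [mem_densF] at hx
      rcases hx.2 with h | h
      · exact Finset.mem_union_left _ (mem_densF.2 ⟨hx.1, h⟩)
      · exact Finset.mem_union_right _ (mem_densF.2 ⟨hx.1, h⟩)
    calc ((densF Φ (S ∪ T) N).card : ℝ) ≤ ((densF Φ S N ∪ densF Φ T N).card : ℝ) := by
          exact_mod_cast Finset.card_le_card hsub
      _ ≤ _ := by exact_mod_cast Finset.card_union_le _ _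
  have hlim := hS.add hT
  rw [add_zero] at hlim
  exact tendsto_of_tendsto_of_tendsto_of_le_of_le tendsto_const_nhds hlim
    (fun N => densR_nonneg Φ _ N) (fun N => hupper N)

/-- If `d_Φ(W) = 0`, there is a set `A` with `d_Φ(A) = 1` such that whenever
`B + C ⊆ A` with `C ⊆ W` (and `B` nonempty), the set `C` must be finite. -/
theorem sparse_summand_obstruction (W : Set ℕ) (Φ : ℕ → Finset ℕ) (hΦ : IsFolner Φ)
    (hW : HasDensityAlong Φ W 0) :
    ∃ A : Set ℕ, HasDensityAlong Φ A 1 ∧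
      ∀ B C : Set ℕ, B.Nonempty → C ⊆ W →
        {x : ℕ | ∃ b ∈ B, ∃ c ∈ C, x = b + c} ⊆ A → C.Finite := by
  classical
  have hc : ∀ N, (0:ℝ) < ((Φ N).card : ℝ) := fun N => by exact_mod_cast Finset.card_pos.2 (hΦ.1 N)
  -- the "thickened" level sets
  set U : ℕ → Set ℕ := fun r => {x | ∃ t, t ≤ r ∧ t ≤ x ∧ x - t ∈ W} with hUdef
  have hU : ∀ r, HasDensityAlong Φ (U r) 0 := by
    intro r
    induction r with
    | zero =>
      have heq : U 0 = {x | 0 ≤ x ∧ x - 0 ∈ W} := by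
        ext x; simp [hUdef]
      rw [heq]
      exact shift_density_zero W Φ hΦ hW 0
    | succ r ih =>
      have heq : U (r + 1) = U r ∪ {x | r + 1 ≤ x ∧ x - (r + 1) ∈ W} := by
        ext x
        simp only [hUdef, Set.mem_setOf_eq, Set.mem_union]
        constructor
        · rintro ⟨t, ht, htx, hw⟩
          rcases Nat.lt_or_ge t (r + 1) with h | h
          · exact Or.inl ⟨t, by omega, htx, hw⟩
          · have : t = r + 1 := by omega
            subst this; exact Or.inr ⟨htx, hw⟩
        · rintro (⟨t, ht, htx, hw⟩ | ⟨htx, hw⟩)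
          · exact ⟨t, by omega, htx, hw⟩
          · exact ⟨r + 1, le_refl _, htx, hw⟩
      rw [heq]
      exact density_zero_union Φ hΦ ih (shift_density_zero W Φ hΦ hW (r + 1))
  -- choose thresholds Ns b beyond which U b has ratio ≤ (1/2)^b
  have hNs : ∀ b : ℕ, ∃ n0 : ℕ, ∀ N ≥ n0, densR Φ (U b) N ≤ (1/2 : ℝ)^b := by
    intro b
    have hpos : (0:ℝ) < (1/2:ℝ)^b := by positivity
    have hev : ∀ᶠ N in atTop, densR Φ (U b) N ≤ (1/2:ℝ)^b :=
      ((hasDensityAlong_iff Φ (U b) 0).1 (hU b)).eventually (eventually_le_nhds hpos)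
    exact eventually_atTop.1 hev
  choose Ns hNs' using hNs
  -- thresholds in ℕ beyond which elements of Φ N for N ≤ Ns b cannot reach
  have hM : ∃ M : ℕ → ℕ, (∀ b, b < M b) ∧ (∀ b N x, x ∈ Φ N → M b ≤ x → Ns b < N) := by
    refine ⟨fun b => b + 1 + (Finset.range (Ns b + 1)).sup (fun N => (Φ N).sup id),
      fun b => by show b < b + 1 + _; omega, ?_⟩
    intro b N x hx hMx
    by_contra h
    push_neg at h
    have hMx' : b + 1 + (Finset.range (Ns b + 1)).sup (fun N => (Φ N).sup id) ≤ x := hMx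
    have h1 : x ≤ (Φ N).sup id := Finset.le_sup (f := id) hx
    have h2 : (Φ N).sup id ≤ (Finset.range (Ns b + 1)).sup (fun N => (Φ N).sup id) :=
      Finset.le_sup (f := fun N => (Φ N).sup id) (Finset.mem_range.2 (by omega))
    omega
  obtain ⟨M, hMb, hP1⟩ := hM
  -- the good set A
  set A : Set ℕ := {x | ∀ b c : ℕ, x = b + c → c ∈ W → c < M b} with hAdef
  have hcompl : ∀ x, x ∉ A → ∃ b c : ℕ, x = b + c ∧ c ∈ W ∧ M b ≤ c := by
    intro x hx
    simp only [hAdef, Set.mem_setOf_eq, not_forall] at hx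
    obtain ⟨b, c, h1, h2, h3⟩ := hx
    exact ⟨b, c, h1, h2, by omega⟩
  -- key ratio bound
  have hkey : ∀ r N, densR Φ Aᶜ N ≤ densR Φ (U r) N + (1/2:ℝ)^r := by
    intro r N
    set K := (Φ N).max' (hΦ.1 N) with hKdef
    have hKmem : K ∈ Φ N := (Φ N).max'_mem (hΦ.1 N)
    by_cases hcase : ∃ b, r < b ∧ M b ≤ K
    · obtain ⟨b0, hb0r, hb0M⟩ := hcase
      set B := Nat.findGreatest (fun b => M b ≤ K) K with hBdef
      have hb0K : b0 ≤ K := le_trans (le_of_lt (hMb b0)) hb0M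
      have hB1 : b0 ≤ B := Nat.le_findGreatest hb0K hb0M
      have hBspec : M B ≤ K := Nat.findGreatest_spec (P := fun b => M b ≤ K) (n := K) hb0K hb0M
      have hrB : r < B := lt_of_lt_of_le hb0r hB1
      have hNB : Ns B < N := hP1 B N K hKmem hBspec
      have hsub : ∀ x ∈ Φ N, x ∈ Aᶜ → x ∈ U B := by
        intro x hxΦ hxA
        obtain ⟨b, c, rfl, hcW, hMc⟩ := hcompl x hxA
        have hxK : b + c ≤ K := (Φ N).le_max' _ hxΦ
        have hbK : b ≤ K := by have := hMb b; omega
        have hMbK : M b ≤ K := by omega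
        have hbB : b ≤ B := Nat.le_findGreatest hbK hMbK
        exact ⟨b, hbB, by omega, by simpa using hcW⟩
      calc densR Φ Aᶜ N ≤ densR Φ (U B) N := densR_le_densR hsub
        _ ≤ (1/2:ℝ)^B := hNs' B N (le_of_lt hNB)
        _ ≤ (1/2:ℝ)^r := pow_le_pow_of_le_one (by norm_num) (by norm_num) (le_of_lt hrB)
        _ ≤ densR Φ (U r) N + (1/2:ℝ)^r := le_add_of_nonneg_left (densR_nonneg Φ _ N)
    · push_neg at hcase
      have hsub : ∀ x ∈ Φ N, x ∈ Aᶜ → x ∈ U r := by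
        intro x hxΦ hxA
        obtain ⟨b, c, rfl, hcW, hMc⟩ := hcompl x hxA
        have hxK : b + c ≤ K := (Φ N).le_max' _ hxΦ
        have hMbK : M b ≤ K := by omega
        have hbr : b ≤ r := by
          by_contra hcon
          push_neg at hcon
          have := hcase b hcon
          omega
        exact ⟨b, hbr, by omega, by simpa using hcW⟩
      calc densR Φ Aᶜ N ≤ densR Φ (U r) N := densR_le_densR hsub
        _ ≤ _ := le_add_of_nonneg_right (by positivity)
  -- densR of the complement tends to 0
  have hAc : Tendsto (densR Φ Aᶜ) atTop (nhds 0) := by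
    rw [Metric.tendsto_atTop]
    intro ε hε
    obtain ⟨r, hr⟩ := exists_pow_lt_of_lt_one (half_pos hε) (by norm_num : (1/2:ℝ) < 1)
    obtain ⟨n0, hn0⟩ := eventually_atTop.1
      (((hasDensityAlong_iff Φ (U r) 0).1 (hU r)).eventually (eventually_le_nhds (half_pos hε)))
    refine ⟨n0, fun N hN => ?_⟩
    have h1 := hkey r N
    have h2 := hn0 N hN
    have h3 := densR_nonneg Φ Aᶜ N
    rw [Real.dist_eq]
    rw [abs_of_nonneg (by simpa using h3)]
    calc densR Φ Aᶜ N - 0 = densR Φ Aᶜ N := by ring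
      _ ≤ densR Φ (U r) N + (1/2:ℝ)^r := h1
      _ < ε/2 + ε/2 := by
          apply add_lt_add_of_le_of_lt h2 hr
      _ = ε := by ring
  -- density of A is 1
  have hA1 : HasDensityAlong Φ A 1 := by
    rw [hasDensityAlong_iff]
    have heq : ∀ N, densR Φ A N = 1 - densR Φ Aᶜ N := by
      intro N
      have hcards : (densF Φ A N).card + (densF Φ Aᶜ N).card = (Φ N).card := by
        classical
        have : densF Φ Aᶜ N = Φ N \ densF Φ A N := by
          ext x
          simp only [mem_densF, Finset.mem_sdiff, Set.mem_compl_iff]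
          tauto
        rw [this, Finset.card_sdiff_of_subset (fun x hx => (mem_densF.1 hx).1)]
        have : (densF Φ A N).card ≤ (Φ N).card := Finset.card_le_card (fun x hx => (mem_densF.1 hx).1)
        omega
      have hne : ((Φ N).card : ℝ) ≠ 0 := ne_of_gt (hc N)
      unfold densR
      field_simp
      have : ((densF Φ A N).card : ℝ) + ((densF Φ Aᶜ N).card : ℝ) = ((Φ N).card : ℝ) := by
        exact_mod_cast hcards
      linarith
    have : Tendsto (fun N => 1 - densR Φ Aᶜ N) atTop (nhds 1) := by
      have := (tendsto_const_nhds (x := (1:ℝ))).sub hAc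
      simpa using this
    exact this.congr (fun N => (heq N).symm)
  refine ⟨A, hA1, ?_⟩
  intro B C hB hCW hsum
  obtain ⟨b, hb⟩ := hB
  apply Set.Finite.subset (Set.finite_Iio (M b))
  intro c hc'
  have hx : b + c ∈ A := hsum ⟨b, hb, c, hc', rfl⟩
  exact hx b c rfl (hCW hc')
end

section
/- Let W ⊂ ℕ be a set that is not syndetic. Then there exists a thick set A ⊂ ℕ such that there do not exist an infinite set B ⊂ ℕ and an infinite set C ⊆ W with B + C ⊆ A. -/
/-- A set `A ⊆ ℕ` is thick if it contains arbitrarily long blocks of consecutive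
integers. -/
def Thick (A : Set ℕ) : Prop :=
  ∀ k : ℕ, ∃ n : ℕ, ∀ i < k, n + i ∈ A

/-- If `W` is not syndetic, then there is a thick set `A` containing no sumset
`B + C` with `B ⊆ ℕ` infinite and `C ⊆ W` infinite. -/
theorem nonsyndetic_obstruction (W : Set ℕ) (hW : ¬ Syndetic W) :
    ∃ A : Set ℕ, Thick A ∧
      ¬ ∃ B C : Set ℕ, B.Infinite ∧ C.Infinite ∧ C ⊆ W ∧
          {x : ℕ | ∃ b ∈ B, ∃ c ∈ C, x = b + c} ⊆ A := by
  simp only [Syndetic, not_exists, not_forall] at hW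
  push_neg at hW
  choose a ha using hW
  refine ⟨{x : ℕ | ∃ n : ℕ, ∃ i < n, x = a (2 * n) + n + i}, ?_, ?_⟩
  · intro k
    refine ⟨a (2 * k) + k, fun i hi => ⟨k, i, hi, by ring⟩⟩
  · rintro ⟨B, C, hB, hC, hCW, hsub⟩
    obtain ⟨b, hb⟩ := hB.nonempty
    set M := (Finset.range (b + 1)).sup (fun n => a (2 * n) + 2 * n) with hM
    have hCsub : C ⊆ Set.Iic M := by
      intro c hc
      obtain ⟨n, i, hi, hx⟩ := hsub ⟨b, hb, c, hc, rfl⟩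
      by_cases hbn : b < n
      · exfalso
        have hj : c = a (2 * n) + (n + i - b) := by omega
        exact ha (2 * n) (n + i - b) (by omega) (by omega) (hj ▸ hCW hc)
      · have : n < b + 1 := by omega
        have h2 : a (2 * n) + 2 * n ≤ M :=
          Finset.le_sup (f := fun n => a (2 * n) + 2 * n) (Finset.mem_range.mpr this)
        simp only [Set.mem_Iic]
        omega
    exact hC ((Set.finite_Iic M).subset hCsub)
end

section
/- Let W ⊂ ℕ be infinite and let A ⊂ ℕ be syndetic. Then there exist infinite sets B ⊂ ℕ and C ⊆ W such that B + C ⊆ A. -/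
/-- Pigeonhole: if an infinite set is colored with colors `≤ h`, some color class
is infinite. -/
lemma pigeon_infinite {S : Set ℕ} (hS : S.Infinite) (f : ℕ → ℕ) (h : ℕ)
    (hf : ∀ s ∈ S, f s ≤ h) : ∃ i ≤ h, {s ∈ S | f s = i}.Infinite := by
  by_contra hc
  push_neg at hc
  have hsub : S ⊆ ⋃ i ∈ Finset.range (h + 1), {s ∈ S | f s = i} := by
    intro s hs
    simp only [Set.mem_iUnion, Finset.mem_range]
    exact ⟨f s, Nat.lt_succ_of_le (hf s hs), hs, rfl⟩
  have hfin : (⋃ i ∈ Finset.range (h + 1), {s ∈ S | f s = i}).Finite := by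
    apply Set.Finite.biUnion (Finset.range (h + 1)).finite_toSet
    intro i hi
    have hih : i ≤ h := Nat.lt_succ_iff.mp (Finset.mem_range.mp hi)
    exact hc i hih
  exact hS (hfin.subset hsub)

/-- If `W` is infinite and `A` is syndetic, then there are infinite sets `B ⊆ ℕ`
and `C ⊆ W` with `B + C ⊆ A`. -/
theorem syndetic_contains_sumset (W A : Set ℕ) (hW : W.Infinite) (hA : Syndetic A) :
    ∃ B C : Set ℕ, B.Infinite ∧ C.Infinite ∧ C ⊆ W ∧
      {x : ℕ | ∃ b ∈ B, ∃ c ∈ C, x = b + c} ⊆ A := by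
  obtain ⟨h, hh⟩ := hA
  choose col hcol1 hcol2 hcol3 using hh
  -- one step of the Ramsey construction
  have step : ∀ S : Set ℕ, S.Infinite → ∃ x ∈ S, ∃ i ≤ h, ∃ T : Set ℕ,
      T.Infinite ∧ T ⊆ S ∧ ∀ w ∈ T, x < w ∧ col (x + w) = i := by
    intro S hS
    obtain ⟨x, hx⟩ := hS.nonempty
    have hinf : (S \ Set.Iic x).Infinite := hS.diff (Set.finite_Iic x)
    obtain ⟨i, hih, hI⟩ := pigeon_infinite hinf (fun w => col (x + w)) h
      (fun s _ => hcol2 _)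
    refine ⟨x, hx, i, hih, {s ∈ S \ Set.Iic x | col (x + s) = i}, hI,
      fun w hw => hw.1.1, fun w hw => ⟨?_, hw.2⟩⟩
    exact lt_of_not_ge fun hle => hw.1.2 hle
  choose xf hxf gf hgf Tf hTinf hTsub hTprop using step
  -- the nested sequence of infinite sets
  let F : ℕ → {S : Set ℕ // S.Infinite ∧ S ⊆ W} := fun n =>
    Nat.rec ⟨W, hW, subset_rfl⟩
      (fun _ p => ⟨Tf p.1 p.2.1, hTinf p.1 p.2.1, (hTsub p.1 p.2.1).trans p.2.2⟩) n
  let x : ℕ → ℕ := fun n => xf (F n).1 (F n).2.1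
  let g : ℕ → ℕ := fun n => gf (F n).1 (F n).2.1
  have hFsucc : ∀ n, (F (n + 1)).1 = Tf (F n).1 (F n).2.1 := fun n => rfl
  have hFmono : ∀ m n, m ≤ n → (F n).1 ⊆ (F m).1 := by
    intro m n hmn
    induction n with
    | zero => simp_all
    | succ k ih =>
      rcases Nat.lt_succ_iff_lt_or_eq.mp (Nat.lt_succ_of_le hmn) with hlt | heq
      · exact ((hFsucc k ▸ hTsub (F k).1 (F k).2.1)).trans (ih (Nat.lt_succ_iff.mp hlt))
      · subst heq; exact subset_rfl
  have hxmem : ∀ n, x n ∈ (F n).1 := fun n => hxf (F n).1 (F n).2.1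
  have key : ∀ m n, m < n → x m < x n ∧ col (x m + x n) = g m := by
    intro m n hmn
    have h1 : x n ∈ (F (m + 1)).1 := hFmono (m + 1) n hmn (hxmem n)
    rw [hFsucc m] at h1
    exact hTprop (F m).1 (F m).2.1 (x n) h1
  have hxsm : StrictMono x := fun m n hmn => (key m n hmn).1
  -- pigeonhole on the colors g
  obtain ⟨i, hih, hI⟩ := pigeon_infinite Set.infinite_univ g h
    (fun n _ => hgf (F n).1 (F n).2.1)
  set I : Set ℕ := {s ∈ Set.univ | g s = i} with hIdef
  -- split I into two infinite pieces
  let e : ℕ ↪ I := hI.natEmbedding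
  have hecoe : Function.Injective (fun k : ℕ => ((e k : I) : ℕ)) :=
    fun a b hab => e.injective (Subtype.coe_injective hab)
  let I1 : Set ℕ := Set.range (fun k => ((e (2 * k) : I) : ℕ))
  let I2 : Set ℕ := Set.range (fun k => ((e (2 * k + 1) : I) : ℕ))
  have hI1 : I1.Infinite := Set.infinite_range_of_injective
    (fun a b hab => by have := hecoe hab; omega)
  have hI2 : I2.Infinite := Set.infinite_range_of_injective
    (fun a b hab => by have := hecoe hab; omega)
  have hI1I : I1 ⊆ I := by rintro _ ⟨k, rfl⟩; exact (e (2 * k)).2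
  have hI2I : I2 ⊆ I := by rintro _ ⟨k, rfl⟩; exact (e (2 * k + 1)).2
  have hdisj : ∀ a ∈ I1, a ∉ I2 := by
    rintro _ ⟨k, rfl⟩ ⟨j, hj⟩
    have := hecoe hj.symm
    omega
  refine ⟨(fun m => x m + i) '' I1, x '' I2, ?_, ?_, ?_, ?_⟩
  · exact hI1.image (fun a _ b _ hab => hxsm.injective (by omega))
  · exact hI2.image (fun a _ b _ hab => hxsm.injective hab)
  · rintro _ ⟨n, _, rfl⟩
    exact (F n).2.2 (hxmem n)
  · rintro y ⟨b, ⟨m, hm, rfl⟩, c, ⟨n, hn, rfl⟩, rfl⟩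
    have hgm : g m = i := (hI1I hm).2
    have hgn : g n = i := (hI2I hn).2
    have hmn : m ≠ n := fun hmn => hdisj _ hm (hmn ▸ hn)
    rcases hmn.lt_or_gt with hlt | hlt
    · have hc := (key m n hlt).2
      have := hcol3 (x m + x n)
      rw [hc, hgm] at this
      have heq : x m + i + x n = x m + x n + i := by omega
      rwa [heq]
    · have hc := (key n m hlt).2
      have := hcol3 (x n + x m)
      rw [hc, hgn] at this
      have heq : x m + i + x n = x n + x m + i := by omega
      rwa [heq]
end

section
/- Let α be irrational and ε > 0 sufficiently small, and let A = { n ∈ ℕ : {n²α} ∈ [1/2, 1/2 + ε] }, where {x} denotes the fractional part. Then there is no infinite set B ⊂ ℕ such that B ∪ (B ⊕ B) ∪ B^{⊕3} ⊆ A, where B ⊕ B = { b₁ + b₂ : b₁ ≠ b₂ ∈ B } and B^{⊕3} = { b₁ + b₂ + b₃ : b₁, b₂, b₃ ∈ B distinct }. -/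
/-- For irrational `α` and sufficiently small `ε > 0`, the set
`A = {n : {n²α} ∈ [1/2, 1/2 + ε]}` contains no `B ∪ (B ⊕ B) ∪ B^{⊕3}` with `B`
infinite. -/
theorem no_three_fold_sumset_in_quadratic_level_set (α : ℝ) (hα : Irrational α) :
    ∃ ε₀ : ℝ, 0 < ε₀ ∧ ∀ ε : ℝ, 0 < ε → ε ≤ ε₀ →
      ¬ ∃ B : Set ℕ, B.Infinite ∧
          (∀ b ∈ B, Int.fract ((b : ℝ) ^ 2 * α) ∈ Set.Icc (1 / 2) (1 / 2 + ε)) ∧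
          (∀ b₁ ∈ B, ∀ b₂ ∈ B, b₁ ≠ b₂ →
            Int.fract (((b₁ + b₂ : ℕ) : ℝ) ^ 2 * α) ∈ Set.Icc (1 / 2) (1 / 2 + ε)) ∧
          (∀ b₁ ∈ B, ∀ b₂ ∈ B, ∀ b₃ ∈ B, b₁ ≠ b₂ → b₁ ≠ b₃ → b₂ ≠ b₃ →
            Int.fract (((b₁ + b₂ + b₃ : ℕ) : ℝ) ^ 2 * α) ∈ Set.Icc (1 / 2) (1 / 2 + ε)) := by
  refine ⟨1/10, by norm_num, ?_⟩
  intro ε hε hε0 ⟨B, hB, h1, h2, h3⟩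
  -- pick three distinct elements of B
  obtain ⟨f⟩ : Nonempty (ℕ ↪ B) := ⟨hB.natEmbedding⟩
  set b₁ : ℕ := (f 0 : ℕ) with hb₁
  set b₂ : ℕ := (f 1 : ℕ) with hb₂
  set b₃ : ℕ := (f 2 : ℕ) with hb₃
  have hm₁ : b₁ ∈ B := (f 0).2
  have hm₂ : b₂ ∈ B := (f 1).2
  have hm₃ : b₃ ∈ B := (f 2).2
  have hne : ∀ i j : ℕ, i ≠ j → ((f i : ℕ) : ℕ) ≠ (f j : ℕ) := by
    intro i j hij h
    exact hij (f.injective (Subtype.ext h))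
  have h12 : b₁ ≠ b₂ := hne 0 1 (by norm_num)
  have h13 : b₁ ≠ b₃ := hne 0 2 (by norm_num)
  have h23 : b₂ ≠ b₃ := hne 1 2 (by norm_num)
  -- the six fractional part facts
  have hs₁ := h1 b₁ hm₁
  have hs₂ := h1 b₂ hm₂
  have hs₃ := h1 b₃ hm₃
  have hp₁ := h2 b₁ hm₁ b₂ hm₂ h12
  have hp₂ := h2 b₁ hm₁ b₃ hm₃ h13
  have hp₃ := h2 b₂ hm₂ b₃ hm₃ h23
  have hT := h3 b₁ hm₁ b₂ hm₂ b₃ hm₃ h12 h13 h23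
  simp only [Set.mem_Icc] at hs₁ hs₂ hs₃ hp₁ hp₂ hp₃ hT
  set S₁ : ℝ := (b₁ : ℝ) ^ 2 * α
  set S₂ : ℝ := (b₂ : ℝ) ^ 2 * α
  set S₃ : ℝ := (b₃ : ℝ) ^ 2 * α
  set P₁ : ℝ := ((b₁ + b₂ : ℕ) : ℝ) ^ 2 * α
  set P₂ : ℝ := ((b₁ + b₃ : ℕ) : ℝ) ^ 2 * α
  set P₃ : ℝ := ((b₂ + b₃ : ℕ) : ℝ) ^ 2 * α
  set X : ℝ := ((b₁ + b₂ + b₃ : ℕ) : ℝ) ^ 2 * α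
  set t : ℝ := Int.fract P₁ + Int.fract P₂ + Int.fract P₃
      - Int.fract S₁ - Int.fract S₂ - Int.fract S₃ with ht
  have hXt : Int.fract X = Int.fract t := by
    rw [Int.fract_eq_fract]
    refine ⟨⌊P₁⌋ + ⌊P₂⌋ + ⌊P₃⌋ - ⌊S₁⌋ - ⌊S₂⌋ - ⌊S₃⌋, ?_⟩
    have hX : X = P₁ + P₂ + P₃ - S₁ - S₂ - S₃ := by
      simp only [S₁, S₂, S₃, P₁, P₂, P₃, X]
      push_cast
      ring
    rw [hX, ht]
    simp only [Int.fract]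
    push_cast
    ring
  have htb : -(3 * ε) ≤ t ∧ t ≤ 3 * ε := by
    constructor <;> (rw [ht]; linarith [hs₁.1, hs₁.2, hs₂.1, hs₂.2, hs₃.1, hs₃.2,
      hp₁.1, hp₁.2, hp₂.1, hp₂.2, hp₃.1, hp₃.2])
  rcases le_or_gt 0 t with h0 | h0
  · have : Int.fract t = t := Int.fract_eq_self.2 ⟨h0, by linarith⟩
    rw [this] at hXt
    linarith [hT.1]
  · have : Int.fract t = t + 1 := by
      have := Int.fract_intCast_add 1 t
      rw [← this]
      have : Int.fract (t + 1) = t + 1 := Int.fract_eq_self.2 ⟨by linarith, by linarith⟩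
      rw [← this]
      ring_nf
    rw [this] at hXt
    linarith [hT.2]
end

section
/- Let R ⊂ ℕ be a set of strong recurrence. Then for every A ⊂ ℕ with d*(A) > 0 there exist infinite sets B ⊆ R and C ⊆ A such that { b + c : b ∈ B, c ∈ C, b < c } ⊆ A. -/
open MeasureTheory in
/-- A set `R ⊆ ℕ` is a set of strong recurrence: for every measure preserving
system and every `E` of positive measure, `limsup_{n ∈ R} μ(E ∩ T⁻ⁿE) > 0`. -/
def IsStrongRecurrenceSet (R : Set ℕ) : Prop :=
  ∀ (X : Type) (_ : MeasurableSpace X) (μ : Measure X),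
    IsProbabilityMeasure μ →
    ∀ T : X → X, MeasurePreserving T μ μ →
      ∀ E : Set X, MeasurableSet E → 0 < μ E →
        ∃ δ : ENNReal, 0 < δ ∧ {n : ℕ | n ∈ R ∧ δ ≤ μ (E ∩ T^[n] ⁻¹' E)}.Infinite

namespace SRAux
open MeasureTheory Filter Set Topology Function ENNReal

noncomputable section

/-- The left shift on `ℕ → Bool`. -/
def shiftF : (ℕ → Bool) → (ℕ → Bool) := fun x n => x (n + 1)

lemma continuous_shiftF : Continuous shiftF :=
  continuous_pi fun n => continuous_apply (n + 1)

lemma shiftF_iterate (k : ℕ) (x : ℕ → Bool) (m : ℕ) : (shiftF^[k] x) m = x (m + k) := by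
  induction k generalizing x with
  | zero => rfl
  | succ k ih =>
    rw [Function.iterate_succ_apply, ih (shiftF x)]
    rfl

/-- The basic cylinder `{x | x 0 = true}`. -/
def cylE : Set (ℕ → Bool) := {x | x 0 = true}

lemma isClopen_cylE : IsClopen cylE :=
  (isClopen_discrete ({true} : Set Bool)).preimage (continuous_apply 0)

/-- `ℝ≥0∞`-valued indicator. -/
def ind (S : Set (ℕ → Bool)) (x : ℕ → Bool) : ℝ≥0∞ := S.indicator 1 x

lemma ind_le_one (S : Set (ℕ → Bool)) (x : ℕ → Bool) : ind S x ≤ 1 := by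
  rw [ind, Set.indicator]
  split <;> simp

lemma ind_mono {S S' : Set (ℕ → Bool)} (h : S ⊆ S') (x : ℕ → Bool) : ind S x ≤ ind S' x :=
  Set.indicator_le_indicator_of_subset h (fun _ => zero_le) x

lemma ind_eq_zero {S : Set (ℕ → Bool)} {x : ℕ → Bool} (h : x ∉ S) : ind S x = 0 := by
  simp [ind, Set.indicator, h]

lemma ind_union_disjoint {S S' : Set (ℕ → Bool)} (h : Disjoint S S') (x : ℕ → Bool) :
    ind (S ∪ S') x = ind S x + ind S' x := by
  rw [ind, Set.indicator_union_of_disjoint h]; rfl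

lemma ind_union_le (S S' : Set (ℕ → Bool)) (x : ℕ → Bool) :
    ind (S ∪ S') x ≤ ind S x + ind S' x := by
  by_cases hx : x ∈ S
  · have h1 : ind S x = 1 := by simp [ind, Set.indicator, hx]
    calc ind (S ∪ S') x ≤ 1 := ind_le_one _ _
    _ ≤ ind S x + ind S' x := by rw [h1]; exact le_self_add
  · by_cases hx' : x ∈ S'
    · have h1 : ind S' x = 1 := by simp [ind, Set.indicator, hx']
      calc ind (S ∪ S') x ≤ 1 := ind_le_one _ _
      _ ≤ ind S x + ind S' x := by rw [h1]; exact le_add_self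
    · have : x ∉ S ∪ S' := by simp [hx, hx']
      simp [ind_eq_zero this]

variable (ω : ℕ → Bool) (M N : ℕ → ℕ)

/-- Empirical density of visits of the orbit of `ω` to `S` along the window `(M k, N k]`. -/
def dens (S : Set (ℕ → Bool)) (k : ℕ) : ℝ≥0∞ :=
  (∑ n ∈ Finset.Ioc (M k) (N k), ind S (shiftF^[n] ω)) / ((N k - M k : ℕ) : ℝ≥0∞)

variable (U : Ultrafilter ℕ)

lemma exists_nu (S : Set (ℕ → Bool)) : ∃ a, Tendsto (dens ω M N S) U (𝓝 a) := by
  obtain ⟨a, -, ha⟩ := isCompact_univ.ultrafilter_le_nhds (U.map (dens ω M N S))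
    (by simp [le_principal_iff])
  exact ⟨a, by rwa [Tendsto, ← Ultrafilter.coe_map]⟩

/-- The limiting density along the ultrafilter `U`. -/
def nu (S : Set (ℕ → Bool)) : ℝ≥0∞ := Classical.choose (exists_nu ω M N U S)

lemma tendsto_nu (S : Set (ℕ → Bool)) :
    Tendsto (dens ω M N S) U (𝓝 (nu ω M N U S)) := Classical.choose_spec (exists_nu ω M N U S)

attribute [irreducible] nu

lemma w_pos (hw : ∀ k, k + 1 ≤ N k - M k) (k : ℕ) : ((N k - M k : ℕ) : ℝ≥0∞) ≠ 0 := by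
  have : 0 < N k - M k := lt_of_lt_of_le (Nat.succ_pos k) (hw k)
  exact_mod_cast this.ne'

lemma sum_ind_le_card (S : Set (ℕ → Bool)) (s : Finset ℕ) :
    ∑ n ∈ s, ind S (shiftF^[n] ω) ≤ (s.card : ℝ≥0∞) := by
  calc ∑ n ∈ s, ind S (shiftF^[n] ω) ≤ ∑ _n ∈ s, (1 : ℝ≥0∞) :=
        Finset.sum_le_sum fun n _ => ind_le_one S _
  _ = (s.card : ℝ≥0∞) := by simp

lemma dens_le_one (hw : ∀ k, k + 1 ≤ N k - M k) (S : Set (ℕ → Bool)) (k : ℕ) :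
    dens ω M N S k ≤ 1 := by
  rw [dens, ENNReal.div_le_iff (w_pos M N hw k) (by simp), one_mul]
  exact (sum_ind_le_card ω S _).trans (by rw [Nat.card_Ioc])

lemma nu_le_one (hw : ∀ k, k + 1 ≤ N k - M k) (S : Set (ℕ → Bool)) : nu ω M N U S ≤ 1 :=
  le_of_tendsto (tendsto_nu ω M N U S) (Eventually.of_forall (dens_le_one ω M N hw S))

lemma nu_ne_top (hw : ∀ k, k + 1 ≤ N k - M k) (S : Set (ℕ → Bool)) : nu ω M N U S ≠ ∞ :=
  (lt_of_le_of_lt (nu_le_one ω M N U hw S) (by simp)).ne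

lemma nu_mono {S S' : Set (ℕ → Bool)} (h : S ⊆ S') : nu ω M N U S ≤ nu ω M N U S' := by
  refine le_of_tendsto_of_tendsto' (tendsto_nu ω M N U S) (tendsto_nu ω M N U S') fun k => ?_
  exact ENNReal.div_le_div_right (Finset.sum_le_sum fun n _ => ind_mono h _) _

lemma nu_union_le (S S' : Set (ℕ → Bool)) :
    nu ω M N U (S ∪ S') ≤ nu ω M N U S + nu ω M N U S' := by
  refine le_of_tendsto_of_tendsto' (tendsto_nu ω M N U (S ∪ S'))
    ((tendsto_nu ω M N U S).add (tendsto_nu ω M N U S')) fun k => ?_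
  rw [dens, dens, dens, ← ENNReal.add_div, ← Finset.sum_add_distrib]
  exact ENNReal.div_le_div_right (Finset.sum_le_sum fun n _ => ind_union_le S S' _) _

lemma nu_union_disjoint {S S' : Set (ℕ → Bool)} (h : Disjoint S S') :
    nu ω M N U (S ∪ S') = nu ω M N U S + nu ω M N U S' := by
  refine tendsto_nhds_unique (tendsto_nu ω M N U (S ∪ S')) ?_
  have h2 := (tendsto_nu ω M N U S).add (tendsto_nu ω M N U S')
  refine h2.congr fun k => ?_
  rw [dens, dens, dens, ← ENNReal.add_div, ← Finset.sum_add_distrib]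
  congr 1
  exact Finset.sum_congr rfl fun n _ => (ind_union_disjoint h _).symm

lemma nu_univ (hw : ∀ k, k + 1 ≤ N k - M k) : nu ω M N U univ = 1 := by
  refine tendsto_nhds_unique (tendsto_nu ω M N U univ) ?_
  have : ∀ k, dens ω M N univ k = 1 := by
    intro k
    rw [dens]
    have h1 : ∀ n ∈ Finset.Ioc (M k) (N k), ind univ (shiftF^[n] ω) = 1 := by
      intro n _; simp [ind]
    rw [Finset.sum_congr rfl h1, Finset.sum_const, Nat.card_Ioc, nsmul_eq_mul, mul_one]
    exact ENNReal.div_self (w_pos M N hw k) (by simp)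
  rw [show dens ω M N univ = fun _ => 1 from funext this]
  exact tendsto_const_nhds

lemma tendsto_inv_w (hw : ∀ k, k + 1 ≤ N k - M k) (hU : (U : Filter ℕ) ≤ atTop) :
    Tendsto (fun k => 1 / ((N k - M k : ℕ) : ℝ≥0∞)) U (𝓝 0) := by
  refine Tendsto.mono_left ?_ hU
  rw [ENNReal.tendsto_nhds_zero]
  intro ε hε
  obtain ⟨n, hn⟩ := ENNReal.exists_inv_nat_lt (hε.ne')
  filter_upwards [eventually_ge_atTop n] with k hk
  rw [one_div]
  refine le_trans (ENNReal.inv_le_inv.2 ?_) hn.le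
  calc ((n : ℝ≥0∞)) ≤ ((k + 1 : ℕ) : ℝ≥0∞) := by exact_mod_cast hk.trans (Nat.le_succ k)
  _ ≤ ((N k - M k : ℕ) : ℝ≥0∞) := by exact_mod_cast hw k

lemma nu_pos_infinite (hw : ∀ k, k + 1 ≤ N k - M k) (hU : (U : Filter ℕ) ≤ atTop)
    {S : Set (ℕ → Bool)} (h : 0 < nu ω M N U S) : {m : ℕ | shiftF^[m] ω ∈ S}.Infinite := by
  by_contra hfin'
  rw [Set.not_infinite] at hfin'
  have hle : ∀ k, dens ω M N S k ≤ (hfin'.toFinset.card : ℝ≥0∞) *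
      (1 / ((N k - M k : ℕ) : ℝ≥0∞)) := by
    intro k
    rw [mul_one_div, dens]
    apply ENNReal.div_le_div_right
    calc ∑ n ∈ Finset.Ioc (M k) (N k), ind S (shiftF^[n] ω)
        ≤ ∑ n ∈ hfin'.toFinset, ind S (shiftF^[n] ω) := by
          apply Finset.sum_le_sum_of_ne_zero
          intro n _ hne
          rw [Set.Finite.mem_toFinset]
          by_contra hmem
          exact hne (ind_eq_zero hmem)
      _ ≤ (hfin'.toFinset.card : ℝ≥0∞) := sum_ind_le_card ω S _
  have h0 : Tendsto (fun k => (hfin'.toFinset.card : ℝ≥0∞) *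
      (1 / ((N k - M k : ℕ) : ℝ≥0∞))) U (𝓝 0) := by
    have := ENNReal.Tendsto.const_mul (tendsto_inv_w M N U hw hU)
      (Or.inr (by simp : (hfin'.toFinset.card : ℝ≥0∞) ≠ ∞))
    simpa using this
  have := le_of_tendsto_of_tendsto' (tendsto_nu ω M N U S) h0 hle
  simp only [le_zero_iff] at this
  exact h.ne' this

lemma ind_preimage (f : (ℕ → Bool) → (ℕ → Bool)) (S : Set (ℕ → Bool)) (x : ℕ → Bool) :
    ind (f ⁻¹' S) x = ind S (f x) := by
  by_cases h : f x ∈ S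
  · simp [ind, Set.indicator, h]
  · simp [ind, Set.indicator, h]

lemma sum_Ioc_succ_le (g : ℕ → ℝ≥0∞) (hg : ∀ n, g n ≤ 1) (a b : ℕ) :
    ∑ n ∈ Finset.Ioc (a + 1) (b + 1), g n ≤ (∑ n ∈ Finset.Ioc a b, g n) + 1 := by
  have hsub : Finset.Ioc (a + 1) (b + 1) ⊆ insert (b + 1) (Finset.Ioc a b) := by
    intro n hn
    rw [Finset.mem_Ioc] at hn
    rcases eq_or_lt_of_le hn.2 with h | h
    · exact Finset.mem_insert.2 (Or.inl h)
    · exact Finset.mem_insert.2 (Or.inr (Finset.mem_Ioc.2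
        ⟨lt_of_le_of_lt (Nat.le_succ a) hn.1, Nat.lt_succ_iff.1 h⟩))
  refine (Finset.sum_le_sum_of_subset hsub).trans ?_
  by_cases hb : (b + 1) ∈ Finset.Ioc a b
  · rw [Finset.insert_eq_self.2 hb]
    exact le_add_right le_rfl
  · rw [Finset.sum_insert hb, add_comm]
    exact add_le_add le_rfl (hg _)

lemma sum_Ioc_le_succ (g : ℕ → ℝ≥0∞) (hg : ∀ n, g n ≤ 1) (a b : ℕ) :
    ∑ n ∈ Finset.Ioc a b, g n ≤ (∑ n ∈ Finset.Ioc (a + 1) (b + 1), g n) + 1 := by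
  have hsub : Finset.Ioc a b ⊆ insert (a + 1) (Finset.Ioc (a + 1) (b + 1)) := by
    intro n hn
    rw [Finset.mem_Ioc] at hn
    rcases eq_or_lt_of_le (Nat.succ_le_of_lt hn.1) with h | h
    · exact Finset.mem_insert.2 (Or.inl h.symm)
    · exact Finset.mem_insert.2 (Or.inr (Finset.mem_Ioc.2
        ⟨h, hn.2.trans (Nat.le_succ b)⟩))
  refine (Finset.sum_le_sum_of_subset hsub).trans ?_
  by_cases hb : (a + 1) ∈ Finset.Ioc (a + 1) (b + 1)
  · rw [Finset.insert_eq_self.2 hb]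
    exact le_add_right le_rfl
  · rw [Finset.sum_insert hb, add_comm]
    exact add_le_add le_rfl (hg _)

lemma sum_ind_preimage (S : Set (ℕ → Bool)) (k : ℕ) :
    ∑ n ∈ Finset.Ioc (M k) (N k), ind (shiftF ⁻¹' S) (shiftF^[n] ω) =
      ∑ n ∈ Finset.Ioc (M k + 1) (N k + 1), ind S (shiftF^[n] ω) := by
  rw [← Finset.map_add_right_Ioc]
  rw [Finset.sum_map]
  refine Finset.sum_congr rfl fun n _ => ?_
  rw [ind_preimage]
  congr 1
  show shiftF (shiftF^[n] ω) = shiftF^[n + 1] ω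
  rw [Function.iterate_succ_apply']

lemma nu_shift_eq (hw : ∀ k, k + 1 ≤ N k - M k) (hU : (U : Filter ℕ) ≤ atTop)
    (S : Set (ℕ → Bool)) : nu ω M N U (shiftF ⁻¹' S) = nu ω M N U S := by
  have key : ∀ (S₁ S₂ : Set (ℕ → Bool)),
      (∀ k, dens ω M N S₁ k ≤ dens ω M N S₂ k + 1 / ((N k - M k : ℕ) : ℝ≥0∞)) →
      nu ω M N U S₁ ≤ nu ω M N U S₂ := by
    intro S₁ S₂ hd
    have h2 : Tendsto (fun k => dens ω M N S₂ k + 1 / ((N k - M k : ℕ) : ℝ≥0∞)) U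
        (𝓝 (nu ω M N U S₂ + 0)) := (tendsto_nu ω M N U S₂).add (tendsto_inv_w M N U hw hU)
    have := le_of_tendsto_of_tendsto' (tendsto_nu ω M N U S₁) h2 hd
    rwa [add_zero] at this
  refine le_antisymm (key _ _ fun k => ?_) (key _ _ fun k => ?_)
  · rw [dens, dens, sum_ind_preimage, ← ENNReal.add_div]
    apply ENNReal.div_le_div_right
    have := sum_Ioc_succ_le (fun n => ind S (shiftF^[n] ω)) (fun n => ind_le_one S _)
      (M k) (N k)
    simpa using this
  · rw [dens, dens, sum_ind_preimage, ← ENNReal.add_div]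
    apply ENNReal.div_le_div_right
    have := sum_Ioc_le_succ (fun n => ind S (shiftF^[n] ω)) (fun n => ind_le_one S _)
      (M k) (N k)
    simpa using this

/-- The pi-basis of `ℕ → Bool` consists of clopen sets. -/
lemma basis_clopen : ∀ S ∈ { S : Set (ℕ → Bool) | ∃ (V : ∀ _ : ℕ, Set Bool) (F : Finset ℕ),
    (∀ i, i ∈ F → V i ∈ {U : Set Bool | IsOpen U}) ∧ S = (F : Set ℕ).pi V }, IsClopen S := by
  rintro S ⟨V, F, -, rfl⟩
  rw [Set.pi_def]
  refine Set.Finite.isClopen_biInter F.finite_toSet fun i _ => ?_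
  exact (isClopen_discrete (V i)).preimage (continuous_apply i)

lemma exists_clopen_of_subset_open {K Uo : Set (ℕ → Bool)} (hK : IsCompact K)
    (hUo : IsOpen Uo) (hKU : K ⊆ Uo) : ∃ D, IsClopen D ∧ K ⊆ D ∧ D ⊆ Uo := by
  have hB := isTopologicalBasis_pi
    (fun _ : ℕ => TopologicalSpace.isTopologicalBasis_opens (α := Bool))
  have hv : ∀ x : K, ∃ v : Set (ℕ → Bool), IsClopen v ∧ v ⊆ Uo ∧ (x : ℕ → Bool) ∈ v := by
    rintro ⟨x, hx⟩
    obtain ⟨v, hvB, hxv, hvU⟩ := hB.exists_subset_of_mem_open (hKU hx) hUo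
    exact ⟨v, basis_clopen v hvB, hvU, hxv⟩
  choose v hv1 hv2 hv3 using hv
  obtain ⟨t, ht⟩ := hK.elim_finite_subcover v (fun x => (hv1 x).isOpen)
    (fun x hx => Set.mem_iUnion.2 ⟨⟨x, hx⟩, hv3 _⟩)
  refine ⟨⋃ x ∈ t, v x, ?_, ht, ?_⟩
  · exact t.finite_toSet.isClopen_biUnion fun x _ => hv1 x
  · exact Set.iUnion₂_subset fun x _ => hv2 x

lemma exists_clopen_sep {K L : Set (ℕ → Bool)} (hK : IsCompact K) (hL : IsCompact L)
    (hd : Disjoint K L) : ∃ D, IsClopen D ∧ K ⊆ D ∧ Disjoint D L := by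
  obtain ⟨Uo, V, hUo, hV, hKU, hLV, hUV⟩ := SeparatedNhds.of_isCompact_isCompact hK hL hd
  obtain ⟨D, hD, hKD, hDU⟩ := exists_clopen_of_subset_open hK hUo hKU
  exact ⟨D, hD, hKD, (hUV.mono_left hDU).mono_right hLV⟩

/-- Outer clopen regularization of `nu`. -/
def lamb (K : Set (ℕ → Bool)) : ℝ≥0∞ :=
  ⨅ C : { C : Set (ℕ → Bool) // IsClopen C ∧ K ⊆ C }, nu ω M N U C

instance lamb_nonempty (K : Set (ℕ → Bool)) :
    Nonempty { C : Set (ℕ → Bool) // IsClopen C ∧ K ⊆ C } :=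
  ⟨⟨univ, isClopen_univ, subset_univ K⟩⟩

lemma lamb_le {K C : Set (ℕ → Bool)} (hC : IsClopen C) (hKC : K ⊆ C) :
    lamb ω M N U K ≤ nu ω M N U C := by
  rw [lamb]
  exact iInf_le (fun C' : { C' : Set (ℕ → Bool) // IsClopen C' ∧ K ⊆ C' } => nu ω M N U C'.1)
    ⟨C, hC, hKC⟩

lemma lamb_le_one (hw : ∀ k, k + 1 ≤ N k - M k) (K : Set (ℕ → Bool)) :
    lamb ω M N U K ≤ 1 :=
  (lamb_le ω M N U isClopen_univ (subset_univ K)).trans (nu_le_one ω M N U hw univ)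

lemma lamb_ne_top (hw : ∀ k, k + 1 ≤ N k - M k) (K : Set (ℕ → Bool)) :
    lamb ω M N U K ≠ ∞ :=
  (lt_of_le_of_lt (lamb_le_one ω M N U hw K) (by simp)).ne

lemma lamb_clopen {K : Set (ℕ → Bool)} (hK : IsClopen K) :
    lamb ω M N U K = nu ω M N U K :=
  le_antisymm (lamb_le ω M N U hK subset_rfl) (le_iInf fun C => nu_mono ω M N U C.2.2)

lemma lamb_mono {K₁ K₂ : Set (ℕ → Bool)} (h : K₁ ⊆ K₂) :
    lamb ω M N U K₁ ≤ lamb ω M N U K₂ :=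
  le_iInf fun C => lamb_le ω M N U C.2.1 (h.trans C.2.2)

lemma lamb_union_le (hw : ∀ k, k + 1 ≤ N k - M k) (K₁ K₂ : Set (ℕ → Bool)) :
    lamb ω M N U (K₁ ∪ K₂) ≤ lamb ω M N U K₁ + lamb ω M N U K₂ := by
  refine ENNReal.le_of_forall_pos_le_add fun ε hε _ => ?_
  have hε2 : (0 : ℝ≥0∞) < (ε : ℝ≥0∞) / 2 :=
    ENNReal.div_pos (by exact_mod_cast hε.ne') (by simp)
  have h1 : lamb ω M N U K₁ < lamb ω M N U K₁ + (ε : ℝ≥0∞) / 2 :=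
    ENNReal.lt_add_right (lamb_ne_top ω M N U hw K₁) hε2.ne'
  have h2 : lamb ω M N U K₂ < lamb ω M N U K₂ + (ε : ℝ≥0∞) / 2 :=
    ENNReal.lt_add_right (lamb_ne_top ω M N U hw K₂) hε2.ne'
  rw [lamb, iInf_lt_iff] at h1 h2
  obtain ⟨⟨C₁, hC₁, hK₁⟩, h1⟩ := h1
  obtain ⟨⟨C₂, hC₂, hK₂⟩, h2⟩ := h2
  calc lamb ω M N U (K₁ ∪ K₂) ≤ nu ω M N U (C₁ ∪ C₂) :=
        lamb_le ω M N U (hC₁.union hC₂) (Set.union_subset_union hK₁ hK₂)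
  _ ≤ nu ω M N U C₁ + nu ω M N U C₂ := nu_union_le ω M N U C₁ C₂
  _ ≤ (lamb ω M N U K₁ + (ε : ℝ≥0∞) / 2) + (lamb ω M N U K₂ + (ε : ℝ≥0∞) / 2) :=
        add_le_add h1.le h2.le
  _ = lamb ω M N U K₁ + lamb ω M N U K₂ + ((ε : ℝ≥0∞) / 2 + (ε : ℝ≥0∞) / 2) := by ring
  _ = lamb ω M N U K₁ + lamb ω M N U K₂ + (ε : ℝ≥0∞) := by rw [ENNReal.add_halves]

lemma lamb_union_disjoint (hw : ∀ k, k + 1 ≤ N k - M k) {K₁ K₂ : Set (ℕ → Bool)}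
    (h1 : IsCompact K₁) (h2 : IsCompact K₂) (hd : Disjoint K₁ K₂) :
    lamb ω M N U (K₁ ∪ K₂) = lamb ω M N U K₁ + lamb ω M N U K₂ := by
  refine le_antisymm (lamb_union_le ω M N U hw K₁ K₂) ?_
  obtain ⟨D, hD, hKD, hDL⟩ := exists_clopen_sep h1 h2 hd
  refine le_iInf fun C => ?_
  obtain ⟨C, hC, hKC⟩ := C
  have hsplit : C = (C ∩ D) ∪ (C \ D) := (Set.inter_union_diff C D).symm
  have hdisj : Disjoint (C ∩ D) (C \ D) :=
    Set.disjoint_sdiff_right.mono_left Set.inter_subset_right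
  calc lamb ω M N U K₁ + lamb ω M N U K₂
      ≤ nu ω M N U (C ∩ D) + nu ω M N U (C \ D) := by
        refine add_le_add (lamb_le ω M N U (hC.inter hD) ?_) (lamb_le ω M N U (hC.diff hD) ?_)
        · exact Set.subset_inter (Set.subset_union_left.trans hKC) hKD
        · rw [Set.subset_diff]
          exact ⟨Set.subset_union_right.trans hKC, (hDL.mono_right le_rfl).symm.mono_left le_rfl⟩
  _ = nu ω M N U ((C ∩ D) ∪ (C \ D)) := (nu_union_disjoint ω M N U hdisj).symm
  _ = nu ω M N U C := by rw [← hsplit]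

/-- The content associated to `nu`. -/
def contF (hw : ∀ k, k + 1 ≤ N k - M k) : Content (ℕ → Bool) where
  toFun K := (lamb ω M N U K.1).toNNReal
  mono' K₁ K₂ h := ENNReal.toNNReal_mono (lamb_ne_top ω M N U hw _) (lamb_mono ω M N U h)
  sup_disjoint' K₁ K₂ hd _ _ := by
    show (lamb ω M N U (K₁.1 ∪ K₂.1)).toNNReal = _
    rw [lamb_union_disjoint ω M N U hw K₁.2 K₂.2 hd,
      ENNReal.toNNReal_add (lamb_ne_top ω M N U hw _) (lamb_ne_top ω M N U hw _)]
  sup_le' K₁ K₂ := by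
    show (lamb ω M N U (K₁.1 ∪ K₂.1)).toNNReal ≤ _
    rw [← ENNReal.toNNReal_add (lamb_ne_top ω M N U hw _) (lamb_ne_top ω M N U hw _)]
    exact ENNReal.toNNReal_mono
      (by exact ENNReal.add_ne_top.2 ⟨lamb_ne_top ω M N U hw _, lamb_ne_top ω M N U hw _⟩)
      (lamb_union_le ω M N U hw K₁.1 K₂.1)

lemma contF_coe (hw : ∀ k, k + 1 ≤ N k - M k) (K : TopologicalSpace.Compacts (ℕ → Bool)) :
    (contF ω M N U hw K : ℝ≥0∞) = lamb ω M N U K.1 :=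
  ENNReal.coe_toNNReal (lamb_ne_top ω M N U hw _)

/-- The correspondence measure. -/
def muF (hw : ∀ k, k + 1 ≤ N k - M k) : Measure (ℕ → Bool) := (contF ω M N U hw).measure

lemma muF_clopen (hw : ∀ k, k + 1 ≤ N k - M k) {S : Set (ℕ → Bool)} (hS : IsClopen S) :
    muF ω M N U hw S = nu ω M N U S := by
  rw [muF, Content.measure_apply _ hS.isOpen.measurableSet,
    (contF ω M N U hw).outerMeasure_of_isOpen S hS.isOpen]
  have h1 := (contF ω M N U hw).innerContent_le ⟨S, hS.isOpen⟩ ⟨S, hS.isClosed.isCompact⟩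
    subset_rfl
  have h2 := (contF ω M N U hw).le_innerContent ⟨S, hS.isClosed.isCompact⟩ ⟨S, hS.isOpen⟩
    subset_rfl
  rw [contF_coe, lamb_clopen ω M N U hS] at h1 h2
  exact le_antisymm h1 h2

lemma muF_prob (hw : ∀ k, k + 1 ≤ N k - M k) : IsProbabilityMeasure (muF ω M N U hw) :=
  ⟨by rw [muF_clopen ω M N U hw isClopen_univ]; exact nu_univ ω M N U hw⟩

lemma generateFrom_clopen :
    (inferInstance : MeasurableSpace (ℕ → Bool)) =
      MeasurableSpace.generateFrom {S : Set (ℕ → Bool) | IsClopen S} := by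
  apply le_antisymm
  · rw [BorelSpace.measurable_eq (α := ℕ → Bool),
      (isTopologicalBasis_pi
        (fun _ : ℕ => TopologicalSpace.isTopologicalBasis_opens (α := Bool))).borel_eq_generateFrom]
    exact MeasurableSpace.generateFrom_mono basis_clopen
  · exact MeasurableSpace.generateFrom_le fun S hS => hS.isOpen.measurableSet

lemma muF_shift (hw : ∀ k, k + 1 ≤ N k - M k) (hU : (U : Filter ℕ) ≤ atTop) :
    MeasurePreserving shiftF (muF ω M N U hw) (muF ω M N U hw) := by
  refine ⟨continuous_shiftF.measurable, ?_⟩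
  haveI : IsProbabilityMeasure (muF ω M N U hw) := muF_prob ω M N U hw
  haveI : IsProbabilityMeasure ((muF ω M N U hw).map shiftF) :=
    Measure.isProbabilityMeasure_map continuous_shiftF.measurable.aemeasurable
  refine MeasureTheory.ext_of_generate_finite _ generateFrom_clopen
    (fun S hS S' hS' _ => hS.inter hS') ?_ ?_
  · intro S hS
    rw [Measure.map_apply continuous_shiftF.measurable hS.isOpen.measurableSet,
      muF_clopen ω M N U hw (hS.preimage continuous_shiftF), muF_clopen ω M N U hw hS]
    exact nu_shift_eq ω M N U hw hU S
  · rw [Measure.map_apply continuous_shiftF.measurable MeasurableSet.univ, Set.preimage_univ]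

lemma le_nu (c : ℝ≥0∞) (S : Set (ℕ → Bool)) (h : ∀ k, c ≤ dens ω M N S k) :
    c ≤ nu ω M N U S :=
  ge_of_tendsto (tendsto_nu ω M N U S) (Eventually.of_forall h)

end

section Corr

open MeasureTheory Filter Set Topology Function ENNReal

/-- The Furstenberg correspondence system for `A`. -/
theorem exists_system (A : Set ℕ) (hA : 0 < upperBanachDensity A) :
    ∃ (μ : Measure (ℕ → Bool)) (ω : ℕ → Bool),
      IsProbabilityMeasure μ ∧
      MeasurePreserving shiftF μ μ ∧
      0 < μ cylE ∧
      (∀ S : Set (ℕ → Bool), IsClopen S → 0 < μ S → {m : ℕ | shiftF^[m] ω ∈ S}.Infinite) ∧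
      (∀ m : ℕ, shiftF^[m] ω ∈ cylE ↔ m ∈ A) := by
  classical
  set α := upperBanachDensity A with hα
  set ω : ℕ → Bool := fun n => decide (n ∈ A) with hωdef
  have hωA : ∀ n, ω n = true ↔ n ∈ A := fun n => by simp [hωdef]
  have hcyl : ∀ m : ℕ, shiftF^[m] ω ∈ cylE ↔ m ∈ A := by
    intro m
    rw [cylE, Set.mem_setOf_eq, shiftF_iterate, Nat.zero_add]
    exact hωA m
  -- extract a sequence of long intervals with density close to `α`
  have hNeBot : (Filter.atTop.comap (fun p : ℕ × ℕ => p.2 - p.1)).NeBot := by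
    refine Filter.comap_neBot fun t ht => ?_
    obtain ⟨n, hn⟩ := Filter.mem_atTop_sets.1 ht
    exact ⟨(0, n), hn n (by simp)⟩
  have hbdd : Filter.IsBoundedUnder (· ≥ ·) (Filter.atTop.comap (fun p : ℕ × ℕ => p.2 - p.1))
      (fun p : ℕ × ℕ =>
        (((Finset.Ioc p.1 p.2).filter (fun n => n ∈ A)).card : ℝ) / ((p.2 - p.1 : ℕ) : ℝ)) := by
    refine ⟨0, Filter.eventually_map.2 (Eventually.of_forall fun p => ?_)⟩
    positivity
  have hfreq : ∃ᶠ p in (Filter.atTop.comap (fun p : ℕ × ℕ => p.2 - p.1)),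
      α / 2 < (((Finset.Ioc p.1 p.2).filter (fun n => n ∈ A)).card : ℝ) /
        ((p.2 - p.1 : ℕ) : ℝ) := by
    refine Filter.frequently_lt_of_lt_limsup hbdd.isCoboundedUnder_le ?_
    rw [hα, upperBanachDensity] at *
    exact half_lt_self hA
  have hex : ∀ k : ℕ, ∃ p : ℕ × ℕ, k + 1 ≤ p.2 - p.1 ∧
      α / 2 < (((Finset.Ioc p.1 p.2).filter (fun n => n ∈ A)).card : ℝ) /
        ((p.2 - p.1 : ℕ) : ℝ) := by
    intro k
    have hev : ∀ᶠ p in (Filter.atTop.comap (fun p : ℕ × ℕ => p.2 - p.1)),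
        k + 1 ≤ p.2 - p.1 := Filter.preimage_mem_comap (Filter.mem_atTop (k + 1))
    obtain ⟨p, h1, h2⟩ := (hfreq.and_eventually hev).exists
    exact ⟨p, h2, h1⟩
  choose P hP1 hP2 using hex
  set M : ℕ → ℕ := fun k => (P k).1 with hM
  set N : ℕ → ℕ := fun k => (P k).2 with hN
  have hw : ∀ k, k + 1 ≤ N k - M k := hP1
  obtain ⟨U, hU⟩ := Filter.exists_ultrafilter_le (atTop : Filter ℕ)
  refine ⟨muF ω M N U hw, ω, muF_prob ω M N U hw, muF_shift ω M N U hw hU, ?_, ?_, hcyl⟩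
  · -- positivity of the measure of `cylE`
    rw [muF_clopen ω M N U hw isClopen_cylE]
    have hsum : ∀ k, ∑ n ∈ Finset.Ioc (M k) (N k), ind cylE (shiftF^[n] ω) =
        (((Finset.Ioc (M k) (N k)).filter (fun n => n ∈ A)).card : ℝ≥0∞) := by
      intro k
      rw [← Finset.sum_boole]
      refine Finset.sum_congr rfl fun n _ => ?_
      by_cases hn : n ∈ A
      · rw [if_pos hn]
        have : shiftF^[n] ω ∈ cylE := (hcyl n).2 hn
        simp [ind, Set.indicator, this]
      · rw [if_neg hn]
        have : shiftF^[n] ω ∉ cylE := fun hc => hn ((hcyl n).1 hc)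
        exact ind_eq_zero this
    have hpos : (0 : ℝ≥0∞) < ENNReal.ofReal (α / 2) := by
      rw [ENNReal.ofReal_pos]
      exact half_pos hA
    refine lt_of_lt_of_le hpos (le_nu ω M N U _ _ fun k => ?_)
    rw [dens, hsum k]
    have hwpos : (0 : ℝ) < ((N k - M k : ℕ) : ℝ) := by
      have : 0 < N k - M k := lt_of_lt_of_le (Nat.succ_pos k) (hw k)
      exact_mod_cast this
    calc ENNReal.ofReal (α / 2)
        ≤ ENNReal.ofReal ((((Finset.Ioc (M k) (N k)).filter (fun n => n ∈ A)).card : ℝ) /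
            ((N k - M k : ℕ) : ℝ)) := ENNReal.ofReal_le_ofReal (hP2 k).le
      _ = (((Finset.Ioc (M k) (N k)).filter (fun n => n ∈ A)).card : ℝ≥0∞) /
            ((N k - M k : ℕ) : ℝ≥0∞) := by
          rw [ENNReal.ofReal_div_of_pos hwpos, ENNReal.ofReal_natCast, ENNReal.ofReal_natCast]
  · intro S hS hpos
    rw [muF_clopen ω M N U hw hS] at hpos
    exact nu_pos_infinite ω M N U hw hU hpos

end Corr

section Chain

open MeasureTheory Filter Set Topology Function ENNReal

lemma chain {X : Type} [MeasurableSpace X] (μ : Measure X) [IsProbabilityMeasure μ]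
    (E : Set X) (hE : MeasurableSet E) (T : X → X) (hT : Measurable T)
    (L : Set ℕ) (hL : L.Infinite) (δ : ℝ≥0∞) (hδ : 0 < δ)
    (hLδ : ∀ n ∈ L, δ ≤ μ (E ∩ T^[n] ⁻¹' E))
    (A : Set ℕ)
    (corr : ∀ Bf : Finset ℕ, 0 < μ (E ∩ ⋂ b ∈ Bf, T^[b] ⁻¹' E) →
      {m : ℕ | m ∈ A ∧ ∀ b ∈ Bf, m + b ∈ A}.Infinite) :
    ∃ B C : Set ℕ, B ⊆ L ∧ C ⊆ A ∧ B.Infinite ∧ C.Infinite ∧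
      ∀ b ∈ B, ∀ c ∈ C, b < c → b + c ∈ A := by
  classical
  set W : ℕ → Set X := fun n => E ∩ T^[n] ⁻¹' E with hW
  have hWm : ∀ n, MeasurableSet (W n) := fun n => hE.inter ((hT.iterate n) hE)
  set Uset : ℕ → Set X := fun K => ⋃ n ∈ {l | l ∈ L ∧ K ≤ l}, W n with hUdef
  have hUm : ∀ K, MeasurableSet (Uset K) := fun K =>
    MeasurableSet.biUnion (Set.to_countable _) fun n _ => hWm n
  have hUδ : ∀ K, δ ≤ μ (Uset K) := by
    intro K
    obtain ⟨n, hnL, hKn⟩ := hL.exists_gt K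
    refine (hLδ n hnL).trans (measure_mono ?_)
    show W n ⊆ ⋃ n ∈ {l | l ∈ L ∧ K ≤ l}, W n
    exact Set.subset_biUnion_of_mem (show n ∈ {l | l ∈ L ∧ K ≤ l} from ⟨hnL, hKn.le⟩)
  set F : Set X := ⋂ K, Uset K with hFdef
  have hFm : MeasurableSet F := MeasurableSet.iInter fun K => hUm K
  have hFδ : δ ≤ μ F := by
    have hanti : Antitone Uset := fun i j hij =>
      Set.biUnion_subset_biUnion_left fun l hl => ⟨hl.1, hij.trans hl.2⟩
    have htd := tendsto_measure_iInter_atTop (fun K => (hUm K).nullMeasurableSet) hanti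
      ⟨0, measure_ne_top μ _⟩
    exact ge_of_tendsto htd (Eventually.of_forall fun K => hUδ K)
  have hFE : F ⊆ E := (Set.iInter_subset Uset 0).trans
    (Set.iUnion₂_subset fun n _ => Set.inter_subset_left)
  have hstep : ∀ G : Set X, MeasurableSet G → G ⊆ F → 0 < μ G → ∀ K : ℕ,
      ∃ n, n ∈ L ∧ K ≤ n ∧ 0 < μ (G ∩ T^[n] ⁻¹' E) := by
    intro G hGm hGF hGpos K
    by_contra hcon
    push_neg at hcon
    have hzero : ∀ n ∈ {l | l ∈ L ∧ K ≤ l}, μ (G ∩ W n) = 0 := by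
      intro n hn
      have h1 : μ (G ∩ W n) ≤ μ (G ∩ T^[n] ⁻¹' E) :=
        measure_mono (Set.inter_subset_inter_right G Set.inter_subset_right)
      exact le_antisymm (h1.trans (hcon n hn.1 hn.2)) zero_le
    have hGU : G ⊆ ⋃ n ∈ {l | l ∈ L ∧ K ≤ l}, (G ∩ W n) := by
      intro x hx
      have hxU : x ∈ Uset K := Set.mem_iInter.1 (hGF hx) K
      obtain ⟨n, hn, hxW⟩ := Set.mem_iUnion₂.1 hxU
      exact Set.mem_iUnion₂.2 ⟨n, hn, hx, hxW⟩
    have : μ G = 0 := measure_mono_null hGU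
      ((measure_biUnion_null_iff (Set.to_countable _)).2 hzero)
    exact hGpos.ne' this
  -- the invariant of the inductive construction
  set Inv : Finset ℕ → Finset ℕ → ℕ → Set X → Prop := fun Bf Cf nn G =>
    MeasurableSet G ∧ G ⊆ F ∧ 0 < μ G ∧ ↑Bf ⊆ L ∧ ↑Cf ⊆ A ∧
    (∀ b ∈ Bf, ∀ c ∈ Cf, b < c → b + c ∈ A) ∧
    (∀ b ∈ Bf, G ⊆ T^[b] ⁻¹' E) ∧ (∀ x ∈ Bf, x < nn) ∧ (∀ x ∈ Cf, x < nn) with hInvDef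
  have key : ∀ Bf Cf nn G, Inv Bf Cf nn G → ∃ b c : ℕ,
      b ∈ L ∧ nn ≤ b ∧ b < c ∧
      Inv (insert b Bf) (insert c Cf) (c + 1) (G ∩ T^[b] ⁻¹' E) := by
    rintro Bf Cf nn G ⟨hGm, hGF, hGpos, hBL, hCA, hBC, hBsub, hBn, hCn⟩
    obtain ⟨b, hbL, hnb, hbpos⟩ := hstep G hGm hGF hGpos nn
    have hG'm : MeasurableSet (G ∩ T^[b] ⁻¹' E) := hGm.inter ((hT.iterate b) hE)
    have hG'sub : (G ∩ T^[b] ⁻¹' E) ⊆ E ∩ ⋂ i ∈ insert b Bf, T^[i] ⁻¹' E := by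
      intro x hx
      refine ⟨hFE (hGF hx.1), ?_⟩
      rw [Set.mem_iInter₂]
      intro i hi
      rcases Finset.mem_insert.1 hi with rfl | hi
      · exact hx.2
      · exact hBsub i hi hx.1
    have hSinf := corr (insert b Bf) (lt_of_lt_of_le hbpos (measure_mono hG'sub))
    obtain ⟨c, hcS, hbc⟩ := hSinf.exists_gt b
    obtain ⟨hcA, hcsum⟩ := hcS
    refine ⟨b, c, hbL, hnb, hbc, hG'm, (Set.inter_subset_left).trans hGF, hbpos, ?_, ?_, ?_, ?_,
      ?_, ?_⟩
    · rw [Finset.coe_insert]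
      exact Set.insert_subset hbL hBL
    · rw [Finset.coe_insert]
      exact Set.insert_subset hcA hCA
    · intro b' hb' c' hc' hlt
      rcases Finset.mem_insert.1 hc' with rfl | hc'
      · have := hcsum b' hb'
        rwa [add_comm] at this
      · rcases Finset.mem_insert.1 hb' with rfl | hb'
        · exact absurd hlt (not_lt.2 ((hCn c' hc').le.trans hnb))
        · exact hBC b' hb' c' hc' hlt
    · intro i hi
      intro x hx
      have := (hG'sub hx).2
      rw [Set.mem_iInter₂] at this
      exact this i hi
    · intro x hx
      rcases Finset.mem_insert.1 hx with rfl | hx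
      · exact Nat.lt_succ_of_lt hbc
      · exact Nat.lt_succ_of_lt (lt_of_lt_of_le (hBn x hx) (hnb.trans hbc.le))
    · intro x hx
      rcases Finset.mem_insert.1 hx with rfl | hx
      · exact Nat.lt_succ_self _
      · exact Nat.lt_succ_of_lt (lt_of_lt_of_le (hCn x hx) (hnb.trans hbc.le))
  have inv0 : Inv ∅ ∅ 0 F := by
    refine ⟨hFm, subset_rfl, lt_of_lt_of_le hδ hFδ, by simp, by simp, by simp, by simp,
      by simp, by simp⟩
  choose bf cf hbfL hbfge hbflt hInvStep using key
  -- the inductive state machine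
  let St := {q : Finset ℕ × Finset ℕ × ℕ × Set X // Inv q.1 q.2.1 q.2.2.1 q.2.2.2}
  let stepf : St → St := fun s =>
    ⟨(insert (bf _ _ _ _ s.2) s.1.1, insert (cf _ _ _ _ s.2) s.1.2.1,
      cf _ _ _ _ s.2 + 1, s.1.2.2.2 ∩ T^[bf _ _ _ _ s.2] ⁻¹' E), hInvStep _ _ _ _ s.2⟩
  let st : ℕ → St := fun j => Nat.rec ⟨(∅, ∅, 0, F), inv0⟩ (fun _ s => stepf s) j
  have hst_succ : ∀ j, st (j + 1) = stepf (st j) := fun j => rfl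
  have hBmono : Monotone fun j => (st j).1.1 := by
    refine monotone_nat_of_le_succ fun j => ?_
    rw [hst_succ]
    exact Finset.subset_insert _ _
  have hCmono : Monotone fun j => (st j).1.2.1 := by
    refine monotone_nat_of_le_succ fun j => ?_
    rw [hst_succ]
    exact Finset.subset_insert _ _
  have hnn : ∀ j, j ≤ (st j).1.2.2.1 := by
    intro j
    induction j with
    | zero => exact Nat.zero_le _
    | succ j ih =>
      rw [hst_succ]
      have h1 : (st j).1.2.2.1 ≤ bf _ _ _ _ (st j).2 := hbfge _ _ _ _ _
      have h2 : bf _ _ _ _ (st j).2 < cf _ _ _ _ (st j).2 := hbflt _ _ _ _ _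
      exact Nat.succ_le_succ (ih.trans (h1.trans h2.le))
  set B : Set ℕ := ⋃ j, ((st j).1.1 : Set ℕ) with hBdef
  set C : Set ℕ := ⋃ j, ((st j).1.2.1 : Set ℕ) with hCdef
  have hBL : B ⊆ L := Set.iUnion_subset fun j => (st j).2.2.2.2.1
  have hCA : C ⊆ A := Set.iUnion_subset fun j => (st j).2.2.2.2.2.1
  have hBinf : B.Infinite := by
    intro hfin
    obtain ⟨K, hK⟩ := hfin.bddAbove
    have hmem : bf _ _ _ _ (st (K + 1)).2 ∈ B := by
      refine Set.mem_iUnion.2 ⟨K + 2, ?_⟩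
      rw [hst_succ]
      exact_mod_cast Finset.mem_insert_self _ _
    have hge : K + 1 ≤ bf _ _ _ _ (st (K + 1)).2 := (hnn (K + 1)).trans (hbfge _ _ _ _ _)
    exact absurd (hK hmem) (by omega)
  have hCinf : C.Infinite := by
    intro hfin
    obtain ⟨K, hK⟩ := hfin.bddAbove
    have hmem : cf _ _ _ _ (st (K + 1)).2 ∈ C := by
      refine Set.mem_iUnion.2 ⟨K + 2, ?_⟩
      rw [hst_succ]
      exact_mod_cast Finset.mem_insert_self _ _
    have hge : K + 1 ≤ cf _ _ _ _ (st (K + 1)).2 :=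
      (hnn (K + 1)).trans ((hbfge _ _ _ _ _).trans (hbflt _ _ _ _ _).le)
    exact absurd (hK hmem) (by omega)
  refine ⟨B, C, hBL, hCA, hBinf, hCinf, ?_⟩
  intro b hb c hc hlt
  obtain ⟨j, hj⟩ := Set.mem_iUnion.1 hb
  obtain ⟨k, hk⟩ := Set.mem_iUnion.1 hc
  have hj' : b ∈ (st (max j k)).1.1 := hBmono (le_max_left j k) (by exact_mod_cast hj)
  have hk' : c ∈ (st (max j k)).1.2.1 := hCmono (le_max_right j k) (by exact_mod_cast hk)
  exact (st (max j k)).2.2.2.2.2.2.1 b hj' c hk' hlt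

end Chain
end SRAux

/-- If `R` is a set of strong recurrence, every `A` with `d*(A) > 0` contains an
ordered sumset `{b + c : b ∈ B, c ∈ C, b < c}` with `B ⊆ R`, `C ⊆ A` infinite. -/
theorem strong_recurrence_gives_ordered_sumset (R : Set ℕ)
    (hR : IsStrongRecurrenceSet R)
    (A : Set ℕ) (hA : 0 < upperBanachDensity A) :
    ∃ B C : Set ℕ, B ⊆ R ∧ C ⊆ A ∧ B.Infinite ∧ C.Infinite ∧
      ∀ b ∈ B, ∀ c ∈ C, b < c → b + c ∈ A := by
  obtain ⟨μ, ω, hprob, hmp, hEpos, hcorr, hcyl⟩ := SRAux.exists_system A hA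
  haveI := hprob
  obtain ⟨δ, hδ, hLinf⟩ := hR (ℕ → Bool) inferInstance μ hprob SRAux.shiftF hmp SRAux.cylE
    SRAux.isClopen_cylE.isOpen.measurableSet hEpos
  set L := {n : ℕ | n ∈ R ∧ δ ≤ μ (SRAux.cylE ∩ SRAux.shiftF^[n] ⁻¹' SRAux.cylE)} with hLdef
  have hcorr' : ∀ Bf : Finset ℕ,
      0 < μ (SRAux.cylE ∩ ⋂ b ∈ Bf, SRAux.shiftF^[b] ⁻¹' SRAux.cylE) →
      {m : ℕ | m ∈ A ∧ ∀ b ∈ Bf, m + b ∈ A}.Infinite := by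
    intro Bf hpos
    have hclopen : IsClopen (SRAux.cylE ∩ ⋂ b ∈ Bf, SRAux.shiftF^[b] ⁻¹' SRAux.cylE) :=
      SRAux.isClopen_cylE.inter (isClopen_biInter_finset fun b _ =>
        SRAux.isClopen_cylE.preimage (SRAux.continuous_shiftF.iterate b))
    have hinf := hcorr _ hclopen hpos
    have hsetEq : {m : ℕ | SRAux.shiftF^[m] ω ∈
        SRAux.cylE ∩ ⋂ b ∈ Bf, SRAux.shiftF^[b] ⁻¹' SRAux.cylE} =
        {m : ℕ | m ∈ A ∧ ∀ b ∈ Bf, m + b ∈ A} := by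
      ext m
      simp only [Set.mem_setOf_eq, Set.mem_inter_iff, Set.mem_iInter, Set.mem_preimage]
      constructor
      · rintro ⟨h1, h2⟩
        refine ⟨(hcyl m).1 h1, fun b hb => ?_⟩
        have h3 := h2 b hb
        rw [← Function.iterate_add_apply] at h3
        have h4 := (hcyl (b + m)).1 h3
        rwa [add_comm] at h4
      · rintro ⟨h1, h2⟩
        refine ⟨(hcyl m).2 h1, fun b hb => ?_⟩
        rw [← Function.iterate_add_apply]
        refine (hcyl (b + m)).2 ?_
        rw [add_comm]
        exact h2 b hb
    rwa [hsetEq] at hinf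
  obtain ⟨B, C, hBL, hCA, hBinf, hCinf, hsum⟩ :=
    SRAux.chain μ SRAux.cylE SRAux.isClopen_cylE.isOpen.measurableSet SRAux.shiftF
      SRAux.continuous_shiftF.measurable L hLinf δ hδ (fun n hn => hn.2) A hcorr'
  exact ⟨B, C, hBL.trans (fun n hn => hn.1), hCA, hBinf, hCinf, hsum⟩
end

section
/- Assume the Dickson–Hardy–Littlewood conjecture: for every finite admissible set H ⊂ ℕ there exist infinitely many n with n + H ⊆ P. Let H ⊂ ℕ be a finite admissible set, q a squarefree natural number, and a ∈ ℕ with gcd(a + h, q) = 1 for all h ∈ H. Then there exist infinitely many n ∈ ℕ with n + H ⊆ P and n ≡ a (mod q). -/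
/-- A finite set `H ⊆ ℕ` is admissible if for every prime `p` some residue class
mod `p` contains no element of `H`. -/
def AdmissibleSet (H : Finset ℕ) : Prop :=
  ∀ p : ℕ, p.Prime → ∃ i : ZMod p, ∀ h ∈ H, (h : ZMod p) ≠ i

/-- Assuming the Dickson–Hardy–Littlewood conjecture, for any finite admissible
`H`, squarefree `q` and `a` with `gcd(a + h, q) = 1` for all `h ∈ H`, there are
infinitely many `n ≡ a (mod q)` with `n + H ⊆ P`. -/
theorem DHL_in_progressions
    (hDHL : ∀ H : Finset ℕ, AdmissibleSet H →
      ∀ N : ℕ, ∃ n : ℕ, N ≤ n ∧ ∀ h ∈ H, (n + h).Prime)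
    (H : Finset ℕ) (hH : AdmissibleSet H)
    (q : ℕ) (hq : Squarefree q)
    (a : ℕ) (ha : ∀ h ∈ H, Nat.gcd (a + h) q = 1) :
    ∀ N : ℕ, ∃ n : ℕ, N ≤ n ∧ (∀ h ∈ H, (n + h).Prime) ∧ n % q = a % q := by
  classical
  intro N
  have hq0 : 0 < q := Nat.pos_of_ne_zero fun h => by subst h; exact not_squarefree_zero hq
  set B := H.card + q with hB
  set S := (Finset.range (B + 1)).filter (fun p => p.Prime ∧ ¬ p ∣ q) with hS
  set M := ∏ p ∈ S, p with hM
  have hSmem : ∀ p ∈ S, p.Prime ∧ ¬ p ∣ q := fun p hp => (Finset.mem_filter.1 hp).2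
  have hcop : Nat.Coprime q M := by
    apply Nat.Coprime.prod_right
    intro p hp
    exact (((hSmem p hp).1.coprime_iff_not_dvd).2 (hSmem p hp).2).symm
  set c := if hne : H.Nonempty then hne.choose else 0 with hc
  have hcH : H.Nonempty → c ∈ H := by
    intro hne; rw [hc, dif_pos hne]; exact hne.choose_spec
  set f : ℕ → ℕ := fun r => (Nat.chineseRemainder hcop r c : ℕ) with hf
  have hfq : ∀ r, f r ≡ r [MOD q] := fun r => (Nat.chineseRemainder hcop r c).2.1
  have hfM : ∀ r, f r ≡ c [MOD M] := fun r => (Nat.chineseRemainder hcop r c).2.2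
  set R := (Finset.range q).filter (fun r => Nat.gcd (r + a) q = 1) with hR
  set E := R.image f with hE
  -- cardinality bound
  have hcard : (H ∪ E).card ≤ B := by
    have h1 : (H ∪ E).card ≤ H.card + E.card := Finset.card_union_le _ _
    have h2 : E.card ≤ R.card := Finset.card_image_le
    have h3 : R.card ≤ q := le_trans (Finset.card_filter_le _ _) (by simp)
    omega
  -- admissibility of the enlarged set
  have hadm : AdmissibleSet (H ∪ E) := by
    intro p hp
    haveI : Fact p.Prime := ⟨hp⟩
    by_cases hpq : p ∣ q
    · refine ⟨-(a : ZMod p), ?_⟩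
      intro h hh hcontra
      rcases Finset.mem_union.1 hh with hh' | hh'
      · have h1 : ((a + h : ℕ) : ZMod p) = 0 := by push_cast [hcontra]; ring
        have h2 : p ∣ a + h := (ZMod.natCast_eq_zero_iff _ _).1 h1
        have h3 : p ∣ 1 := ha h hh' ▸ Nat.dvd_gcd h2 hpq
        exact hp.ne_one (Nat.dvd_one.1 h3)
      · obtain ⟨r, hrR, hfr⟩ := Finset.mem_image.1 hh'
        have hrg : Nat.gcd (r + a) q = 1 := (Finset.mem_filter.1 hrR).2
        have h0 : (h : ZMod p) = (r : ZMod p) := by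
          rw [← hfr]
          exact (ZMod.natCast_eq_natCast_iff _ _ _).2 ((hfq r).of_dvd hpq)
        have hra : (r : ZMod p) = -(a : ZMod p) := by rw [← h0]; exact hcontra
        have h1 : ((r + a : ℕ) : ZMod p) = 0 := by push_cast [hra]; ring
        have h2 : p ∣ r + a := (ZMod.natCast_eq_zero_iff _ _).1 h1
        have h3 : p ∣ 1 := hrg ▸ Nat.dvd_gcd h2 hpq
        exact hp.ne_one (Nat.dvd_one.1 h3)
    · by_cases hpB : p ≤ B
      · have hpS : p ∈ S := Finset.mem_filter.2 ⟨Finset.mem_range.2 (by omega), hp, hpq⟩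
        have hpM : p ∣ M := Finset.dvd_prod_of_mem _ hpS
        have hEc : ∀ h ∈ E, (h : ZMod p) = (c : ZMod p) := by
          intro h hh
          obtain ⟨r, hrR, hfr⟩ := Finset.mem_image.1 hh
          rw [← hfr]
          exact (ZMod.natCast_eq_natCast_iff _ _ _).2 ((hfM r).of_dvd hpM)
        by_cases hne : H.Nonempty
        · obtain ⟨i, hi⟩ := hH p hp
          refine ⟨i, ?_⟩
          intro h hh
          rcases Finset.mem_union.1 hh with hh' | hh'
          · exact hi h hh'
          · rw [hEc h hh']; exact hi c (hcH hne)
        · refine ⟨(c : ZMod p) + 1, ?_⟩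
          intro h hh
          rcases Finset.mem_union.1 hh with hh' | hh'
          · exact absurd ⟨h, hh'⟩ hne
          · rw [hEc h hh']
            intro hcon
            exact one_ne_zero (left_eq_add.mp hcon)
      · push_neg at hpB
        by_contra hcon
        push_neg at hcon
        have hsub : (Finset.univ : Finset (ZMod p)) ⊆
            (H ∪ E).image (fun h : ℕ => (h : ZMod p)) := by
          intro i _
          obtain ⟨h, hh, hhe⟩ := hcon i
          exact Finset.mem_image.2 ⟨h, hh, hhe⟩
        have h1 := Finset.card_le_card hsub
        rw [Finset.card_univ, ZMod.card] at h1
        have h2 := Finset.card_image_le (s := H ∪ E) (f := fun h : ℕ => (h : ZMod p))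
        omega
  -- apply DHL to the enlarged set
  obtain ⟨n, hnN, hnp⟩ := hDHL (H ∪ E) hadm (max N (q + 1))
  have hnq : q + 1 ≤ n := le_trans (le_max_right _ _) hnN
  refine ⟨n, le_trans (le_max_left _ _) hnN,
    fun h hh => hnp h (Finset.mem_union_left _ hh), ?_⟩
  -- the congruence condition modulo each prime factor of q
  have key : ∀ p ∈ q.primeFactors, (n : ZMod p) = (a : ZMod p) := by
    intro p hpf
    have hpp : p.Prime := Nat.prime_of_mem_primeFactors hpf
    haveI : Fact p.Prime := ⟨hpp⟩
    have hpq : p ∣ q := Nat.dvd_of_mem_primeFactors hpf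
    by_contra hne
    have hqp : q = p * (q / p) := (Nat.mul_div_cancel' hpq).symm
    have hqp0 : 0 < q / p := Nat.div_pos (Nat.le_of_dvd hq0 hpq) hpp.pos
    haveI : NeZero (q / p) := ⟨hqp0.ne'⟩
    have hcop2 : Nat.Coprime p (q / p) := by
      rw [hpp.coprime_iff_not_dvd]
      intro hdvd
      have hsq : p * p ∣ q := by rw [hqp]; exact mul_dvd_mul_left p hdvd
      have := hq p hsq
      rw [Nat.isUnit_iff] at this
      exact hpp.ne_one this
    set x := (-(n : ZMod p)).val with hx
    set y := ((1 : ZMod (q / p)) - (a : ZMod (q / p))).val with hy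
    obtain ⟨r0, hr0p, hr0q⟩ := Nat.chineseRemainder hcop2 x y
    set r := r0 % q with hr
    have hrlt : r < q := Nat.mod_lt _ hq0
    have hrr0 : r ≡ r0 [MOD q] := Nat.mod_modEq r0 q
    have hrp : (r : ZMod p) = -(n : ZMod p) := by
      have h1 : (r : ZMod p) = (r0 : ZMod p) :=
        (ZMod.natCast_eq_natCast_iff _ _ _).2 (hrr0.of_dvd hpq)
      have h2 : (r0 : ZMod p) = (x : ZMod p) :=
        (ZMod.natCast_eq_natCast_iff _ _ _).2 hr0p
      rw [h1, h2, hx, ZMod.natCast_zmod_val]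
    have hrqp : ((r + a : ℕ) : ZMod (q / p)) = 1 := by
      have hqpdvd : q / p ∣ q := Nat.div_dvd_of_dvd hpq
      have h1 : (r : ZMod (q / p)) = (r0 : ZMod (q / p)) :=
        (ZMod.natCast_eq_natCast_iff _ _ _).2 (hrr0.of_dvd hqpdvd)
      have h2 : (r0 : ZMod (q / p)) = (y : ZMod (q / p)) :=
        (ZMod.natCast_eq_natCast_iff _ _ _).2 hr0q
      push_cast
      rw [h1, h2, hy, ZMod.natCast_zmod_val]
      ring
    have hgcd : Nat.gcd (r + a) q = 1 := by
      by_contra hg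
      obtain ⟨p', hp', hp'dvd⟩ := Nat.exists_prime_and_dvd hg
      haveI : Fact p'.Prime := ⟨hp'⟩
      have hp'ra : p' ∣ r + a := hp'dvd.trans (Nat.gcd_dvd_left _ _)
      have hp'q : p' ∣ p * (q / p) := hqp ▸ hp'dvd.trans (Nat.gcd_dvd_right _ _)
      rcases (Nat.Prime.dvd_mul hp').1 hp'q with hcase | hcase
      · have hpp' : p' = p := (Nat.prime_dvd_prime_iff_eq hp' hpp).1 hcase
        subst hpp'
        have h0 : ((r + a : ℕ) : ZMod p') = 0 :=
          (ZMod.natCast_eq_zero_iff _ _).2 hp'ra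
        push_cast at h0
        rw [hrp] at h0
        exact hne (by linear_combination -h0)
      · have h0 : ((r + a : ℕ) : ZMod p') = 0 :=
          (ZMod.natCast_eq_zero_iff _ _).2 hp'ra
        have h1 : ((r + a : ℕ) : ZMod p') = 1 := by
          have h5 := congrArg (ZMod.castHom hcase (ZMod p')) hrqp
          rwa [map_natCast, map_one] at h5
        rw [h0] at h1
        exact zero_ne_one h1
    have hrR : r ∈ R := Finset.mem_filter.2 ⟨Finset.mem_range.2 hrlt, hgcd⟩
    have hfE : f r ∈ E := Finset.mem_image_of_mem f hrR
    have hprime := hnp (f r) (Finset.mem_union_right _ hfE)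
    have hdvd : p ∣ n + f r := by
      rw [← ZMod.natCast_eq_zero_iff]
      push_cast
      have h1 : ((f r : ℕ) : ZMod p) = (r : ZMod p) :=
        (ZMod.natCast_eq_natCast_iff _ _ _).2 ((hfq r).of_dvd hpq)
      rw [h1, hrp]
      ring
    have hple : p ≤ q := Nat.le_of_dvd hq0 hpq
    have hpn : p = n + f r :=
      ((Nat.Prime.eq_one_or_self_of_dvd hprime p hdvd).resolve_left hpp.ne_one)
    omega
  -- combine the prime factors
  have hdvdz : (q : ℤ) ∣ (a : ℤ) - (n : ℤ) := by
    have h1 : ∀ p ∈ q.primeFactors, p ∣ ((a : ℤ) - n).natAbs := by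
      intro p hpf
      have h2 : (((a : ℤ) - n : ℤ) : ZMod p) = 0 := by
        push_cast
        rw [key p hpf]
        ring
      have h3 : (p : ℤ) ∣ (a : ℤ) - n := (ZMod.intCast_zmod_eq_zero_iff_dvd _ _).1 h2
      simpa using Int.natAbs_dvd_natAbs.2 h3
    have h4 : (∏ p ∈ q.primeFactors, p) ∣ ((a : ℤ) - n).natAbs :=
      Finset.prod_primes_dvd _ (fun p hp => (Nat.prime_of_mem_primeFactors hp).prime) h1
    rw [Nat.prod_primeFactors_of_squarefree hq] at h4
    exact Int.natAbs_dvd_natAbs.1 (by simpa using h4)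
  have hmod : n ≡ a [MOD q] := (Nat.modEq_iff_dvd).2 hdvdz
  exact hmod
end

section
/- Let Φ = (Φ_N) be a Følner sequence in ℕ² (for the additive action). Then there exists a set A ⊂ ℕ² with d_Φ(A) = 1 such that every vertical fiber A_n = { m ∈ ℕ : (n, m) ∈ A } is finite. In particular, A does not contain { (b₁, b₂) : b₁, b₂ ∈ B, b₁ < b₂ } − t for any infinite set B ⊂ ℕ and shift t ∈ ℕ². -/
/-- A Følner sequence in `(ℕ², +)`. -/
def IsFolner2 (Φ : ℕ → Finset (ℕ × ℕ)) : Prop :=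
  (∀ N, (Φ N).Nonempty) ∧
  ∀ v : ℕ × ℕ, Filter.Tendsto
    (fun N => (((Φ N).filter (fun x => x + v ∈ Φ N)).card : ℝ) / ((Φ N).card : ℝ))
    Filter.atTop (nhds 1)

open Classical in
/-- `A ⊆ ℕ²` has density `d` along the Følner sequence `Φ` in `ℕ²`. -/
noncomputable def HasDensityAlong2 (Φ : ℕ → Finset (ℕ × ℕ)) (A : Set (ℕ × ℕ))
    (d : ℝ) : Prop :=
  Filter.Tendsto
    (fun N => (((Φ N).filter (fun x => x ∈ A)).card : ℝ) / ((Φ N).card : ℝ))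
    Filter.atTop (nhds d)

private lemma col_card (Φ : ℕ → Finset (ℕ × ℕ)) (j N : ℕ) :
    ((Φ N).filter (fun x => x.1 < j)).card
      + ((Φ N).filter (fun x => x + (j, 0) ∈ Φ N)).card ≤ (Φ N).card := by
  classical
  set C := (Φ N).filter (fun x : ℕ × ℕ => x.1 < j) with hC
  set S := (Φ N).filter (fun x : ℕ × ℕ => x + (j, 0) ∈ Φ N) with hS
  have hinj : Function.Injective (fun x : ℕ × ℕ => x + (j, 0)) := add_left_injective (j, 0)
  have hcard : (S.image (fun x => x + (j, 0))).card = S.card :=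
    Finset.card_image_of_injective _ hinj
  have hsub : C ∪ S.image (fun x => x + (j, 0)) ⊆ Φ N := by
    intro x hx
    rcases Finset.mem_union.mp hx with h | h
    · exact (Finset.mem_filter.mp h).1
    · obtain ⟨y, hy, rfl⟩ := Finset.mem_image.mp h
      exact (Finset.mem_filter.mp hy).2
  have hdisj : Disjoint C (S.image (fun x => x + (j, 0))) := by
    rw [Finset.disjoint_left]
    intro x hx hx'
    obtain ⟨y, hy, rfl⟩ := Finset.mem_image.mp hx'
    have h1 := (Finset.mem_filter.mp hx).2
    simp only [Prod.fst_add] at h1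
    omega
  calc C.card + S.card = (C ∪ S.image (fun x => x + (j, 0))).card := by
        rw [Finset.card_union_of_disjoint hdisj, hcard]
    _ ≤ (Φ N).card := Finset.card_le_card hsub

private lemma col_ratio (Φ : ℕ → Finset (ℕ × ℕ)) (hΦ : IsFolner2 Φ) (j : ℕ) :
    Filter.Tendsto
      (fun N => (((Φ N).filter (fun x : ℕ × ℕ => x.1 < j)).card : ℝ) / ((Φ N).card : ℝ))
      Filter.atTop (nhds 0) := by
  classical
  have h := hΦ.2 (j, 0)
  have hlim : Filter.Tendsto
      (fun N => 1 - (((Φ N).filter (fun x => x + (j, 0) ∈ Φ N)).card : ℝ) / ((Φ N).card : ℝ))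
      Filter.atTop (nhds 0) := by
    have := Filter.Tendsto.sub (tendsto_const_nhds (x := (1 : ℝ))) h
    simpa using this
  refine tendsto_of_tendsto_of_tendsto_of_le_of_le tendsto_const_nhds hlim
    (fun N => by positivity) (fun N => ?_)
  have hpos : (0 : ℝ) < ((Φ N).card : ℝ) := by exact_mod_cast (hΦ.1 N).card_pos
  rw [le_sub_iff_add_le, ← add_div, div_le_one hpos]
  rw [← Nat.cast_add, Nat.cast_le]
  convert col_card Φ j N

/-- For any Følner sequence `Φ` in `ℕ²`, there is a full-density set `A` all of
whose vertical fibers are finite; in particular `A` contains no shifted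
`{(b₁, b₂) : b₁ < b₂ ∈ B}` with `B` infinite. -/
theorem full_density_finite_fibers (Φ : ℕ → Finset (ℕ × ℕ)) (hΦ : IsFolner2 Φ) :
    ∃ A : Set (ℕ × ℕ), HasDensityAlong2 Φ A 1 ∧
      (∀ n : ℕ, {m : ℕ | (n, m) ∈ A}.Finite) ∧
      ∀ B : Set ℕ, B.Infinite → ∀ t : ℕ × ℕ,
        ¬ ∀ b₁ ∈ B, ∀ b₂ ∈ B, b₁ < b₂ → (b₁ + t.1, b₂ + t.2) ∈ A := by
  classical
  have hpos : ∀ N, (0 : ℝ) < ((Φ N).card : ℝ) := fun N => by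
    exact_mod_cast (hΦ.1 N).card_pos
  have hf : ∀ j : ℕ, ∃ N₀ : ℕ, ∀ N ≥ N₀,
      (((Φ N).filter (fun x : ℕ × ℕ => x.1 < j)).card : ℝ) / ((Φ N).card : ℝ)
        ≤ 1 / (j + 1) := by
    intro j
    have h1 : (0 : ℝ) < 1 / (j + 1) := by positivity
    have h2 : ∀ᶠ N in Filter.atTop,
        (((Φ N).filter (fun x : ℕ × ℕ => x.1 < j)).card : ℝ) / ((Φ N).card : ℝ)
          ≤ 1 / (j + 1) :=
      Filter.Tendsto.eventually_le_const h1 (col_ratio Φ hΦ j)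
    exact Filter.eventually_atTop.mp h2
  choose f hfspec using hf
  set g : ℕ → ℕ := fun j => j + (Finset.range (j + 1)).sup f with hg
  have hgmono : StrictMono g := by
    apply strictMono_nat_of_lt_succ
    intro n
    have hle : (Finset.range (n + 1)).sup f ≤ (Finset.range (n + 1 + 1)).sup f :=
      Finset.sup_mono (by intro x hx; simp only [Finset.mem_range] at *; omega)
    simp only [hg]
    omega
  have hgf : ∀ j, f j ≤ g j := fun j =>
    le_trans (Finset.le_sup (Finset.mem_range.mpr (Nat.lt_succ_self j))) (Nat.le_add_left _ _)
  set M : ℕ → ℕ := fun n => (Finset.range (g (n + 1) + 1)).sup (fun N => (Φ N).sup Prod.snd)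
    with hM
  set A : Set (ℕ × ℕ) := {p | p.2 ≤ M p.1} with hA
  have hkey : ∀ N, ∀ x ∈ Φ N, x ∉ A → g (x.1 + 1) < N := by
    intro N x hx hxA
    by_contra hle
    push_neg at hle
    apply hxA
    have h1 : (Φ N).sup Prod.snd ≤ M x.1 :=
      Finset.le_sup (f := fun N => (Φ N).sup Prod.snd) (Finset.mem_range.mpr (by omega))
    exact le_trans (Finset.le_sup (f := Prod.snd) hx) h1
  have hsub : ∀ j N, N ≤ g (j + 1) →
      (Φ N).filter (fun x => x ∉ A) ⊆ (Φ N).filter (fun x : ℕ × ℕ => x.1 < j) := by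
    intro j N hN x hx
    rw [Finset.mem_filter] at hx ⊢
    refine ⟨hx.1, ?_⟩
    have h1 := hkey N x hx.1 hx.2
    have h2 : g (x.1 + 1) < g (j + 1) := lt_of_lt_of_le h1 hN
    have h3 := hgmono.lt_iff_lt.mp h2
    omega
  have hbad : Filter.Tendsto
      (fun N => (((Φ N).filter (fun x => x ∉ A)).card : ℝ) / ((Φ N).card : ℝ))
      Filter.atTop (nhds 0) := by
    rw [Metric.tendsto_atTop]
    intro ε hε
    obtain ⟨j₀, hj₀⟩ := exists_nat_one_div_lt hε
    refine ⟨g j₀, fun N hN => ?_⟩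
    set s := (Finset.range (N + 1)).filter (fun k => g k ≤ N) with hs
    have hj₀s : j₀ ∈ s := Finset.mem_filter.mpr
      ⟨Finset.mem_range.mpr (by
        have hle : j₀ ≤ g j₀ := by simp only [hg]; omega
        omega), hN⟩
    set j := s.max' ⟨j₀, hj₀s⟩ with hj
    have hjs : j ∈ s := s.max'_mem _
    have hgjN : g j ≤ N := (Finset.mem_filter.mp hjs).2
    have hjj₀ : j₀ ≤ j := Finset.le_max' s j₀ hj₀s
    have hNgj1 : N ≤ g (j + 1) := by
      by_contra hcon
      push_neg at hcon
      have hmem : j + 1 ∈ s := Finset.mem_filter.mpr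
        ⟨Finset.mem_range.mpr (by
          have hle : j + 1 ≤ g (j + 1) := by simp only [hg]; omega
          omega), le_of_lt hcon⟩
      have := Finset.le_max' s (j + 1) hmem
      omega
    have hb1 : (((Φ N).filter (fun x => x ∉ A)).card : ℝ) / ((Φ N).card : ℝ)
        ≤ (((Φ N).filter (fun x : ℕ × ℕ => x.1 < j)).card : ℝ) / ((Φ N).card : ℝ) := by
      have hcc : (((Φ N).filter (fun x => x ∉ A)).card : ℝ)
          ≤ (((Φ N).filter (fun x : ℕ × ℕ => x.1 < j)).card : ℝ) := by
        exact_mod_cast Finset.card_le_card (hsub j N hNgj1)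
      gcongr
    have hb2 := hfspec j N (le_trans (hgf j) hgjN)
    have hb3 : (1 : ℝ) / (j + 1) ≤ 1 / (j₀ + 1) := by
      have hcast : (j₀ : ℝ) ≤ (j : ℝ) := by exact_mod_cast hjj₀
      gcongr
    rw [Real.dist_eq, sub_zero, abs_of_nonneg (by positivity)]
    calc (((Φ N).filter (fun x => x ∉ A)).card : ℝ) / ((Φ N).card : ℝ)
        ≤ (((Φ N).filter (fun x : ℕ × ℕ => x.1 < j)).card : ℝ) / ((Φ N).card : ℝ) := hb1
      _ ≤ 1 / (j + 1) := hb2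
      _ ≤ 1 / (j₀ + 1) := hb3
      _ < ε := hj₀
  have heq : ∀ N, (((Φ N).filter (fun x => x ∈ A)).card : ℝ) / ((Φ N).card : ℝ)
      = 1 - (((Φ N).filter (fun x => x ∉ A)).card : ℝ) / ((Φ N).card : ℝ) := by
    intro N
    have h := Finset.card_filter_add_card_filter_not (s := Φ N) (p := fun x => x ∈ A)
    rw [eq_sub_iff_add_eq, ← add_div, div_eq_one_iff_eq (ne_of_gt (hpos N))]
    exact_mod_cast h
  have hgood : HasDensityAlong2 Φ A 1 := by
    unfold HasDensityAlong2
    have h1 : Filter.Tendsto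
        (fun N => 1 - (((Φ N).filter (fun x => x ∉ A)).card : ℝ) / ((Φ N).card : ℝ))
        Filter.atTop (nhds 1) := by
      have := Filter.Tendsto.sub (tendsto_const_nhds (x := (1 : ℝ))) hbad
      simpa using this
    refine h1.congr (fun N => ?_)
    have := (heq N).symm
    convert this using 5
  refine ⟨A, hgood, ?_, ?_⟩
  · intro n
    refine (Set.finite_Iic (M n)).subset ?_
    intro m hm
    exact hm
  · intro B hB t h
    obtain ⟨b₁, hb₁⟩ := hB.nonempty
    have hfin : {m : ℕ | (b₁ + t.1, m) ∈ A}.Finite :=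
      (Set.finite_Iic (M (b₁ + t.1))).subset (fun m hm => hm)
    have hss : B \ Set.Iic b₁ ⊆ (fun b => b + t.2) ⁻¹' {m : ℕ | (b₁ + t.1, m) ∈ A} := by
      rintro b₂ ⟨hb₂B, hb₂gt⟩
      simp only [Set.mem_Iic, not_le] at hb₂gt
      exact h b₁ hb₁ b₂ hb₂B hb₂gt
    have hpre : ((fun b => b + t.2) ⁻¹' {m : ℕ | (b₁ + t.1, m) ∈ A}).Finite :=
      hfin.preimage (fun a _ b _ hab => by omega)
    exact (hB.diff (Set.finite_Iic b₁)) (hpre.subset hss)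
end

section
/- Let Φ be a Følner sequence in ℕ and A ⊂ ℕ² a set such that limsup_{n→∞} d_Φ(A_n) > 0, where A_n = { m : (n, m) ∈ A } (assuming those densities exist). Then there exist infinite sets B, C ⊂ ℕ such that { (b, c) : b ∈ B, c ∈ C, b < c } ⊆ A. -/
open Filter Set MeasureTheory Topology TopologicalSpace ENNReal NNReal

section DensBasics

variable (Φ : ℕ → Finset ℕ)

open Classical in
noncomputable def dens (S : Set ℕ) (N : ℕ) : ℝ :=
  (((Φ N).filter (fun n => n ∈ S)).card : ℝ) / ((Φ N).card : ℝ)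

lemma hasDensityAlong_iff_s16 (S : Set ℕ) (d : ℝ) :
    HasDensityAlong Φ S d ↔ Tendsto (dens Φ S) atTop (𝓝 d) := Iff.rfl

variable {Φ}

lemma dens_nonneg (S : Set ℕ) (N : ℕ) : 0 ≤ dens Φ S N :=
  div_nonneg (by positivity) (by positivity)

lemma dens_le_one (S : Set ℕ) (N : ℕ) : dens Φ S N ≤ 1 := by
  classical
  unfold dens
  rcases Nat.eq_zero_or_pos (Φ N).card with h | h
  · simp [h]
  · rw [_root_.div_le_one (by exact_mod_cast h)]
    exact_mod_cast Finset.card_filter_le _ _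

lemma dens_mono {S T : Set ℕ} (h : S ⊆ T) (N : ℕ) : dens Φ S N ≤ dens Φ T N := by
  classical
  unfold dens
  rcases Nat.eq_zero_or_pos (Φ N).card with h0 | h0
  · simp [h0]
  · apply div_le_div_of_nonneg_right ?_ (by positivity) |>.trans le_rfl
    exact_mod_cast Finset.card_le_card (Finset.monotone_filter_right _ (fun n _ hn => h hn))

lemma dens_univ (hne : ∀ N, (Φ N).Nonempty) (N : ℕ) : dens Φ Set.univ N = 1 := by
  have hc : ((Φ N).card : ℝ) ≠ 0 := by
    have := (hne N).card_pos
    positivity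
  simp [dens, div_self hc]

lemma dens_union_of_disjoint {S T : Set ℕ} (h : Disjoint S T) (N : ℕ) :
    dens Φ (S ∪ T) N = dens Φ S N + dens Φ T N := by
  classical
  unfold dens
  rw [← add_div]
  congr 1
  rw [← Nat.cast_add]
  congr 1
  rw [← Finset.card_union_of_disjoint]
  · congr 1
    ext n
    simp [Finset.mem_filter, Finset.mem_union, Set.mem_union]
    tauto
  · rw [Finset.disjoint_filter]
    intro n _ hnS hnT
    exact h.ne_of_mem hnS hnT rfl

lemma dens_union_le (S T : Set ℕ) (N : ℕ) :
    dens Φ (S ∪ T) N ≤ dens Φ S N + dens Φ T N := by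
  rw [← Set.union_diff_self, dens_union_of_disjoint Set.disjoint_sdiff_right]
  have := dens_mono (Φ := Φ) (Set.diff_subset : T \ S ⊆ T) N
  linarith

lemma dens_finite_le (S : Set ℕ) (hS : S.Finite) (N : ℕ) :
    dens Φ S N ≤ (hS.toFinset.card : ℝ) / ((Φ N).card : ℝ) := by
  classical
  unfold dens
  rcases Nat.eq_zero_or_pos (Φ N).card with h | h
  · simp [h]
  · apply div_le_div_of_nonneg_right ?_ (by positivity) |>.trans le_rfl
    exact_mod_cast Finset.card_le_card (fun n hn => by
      simp only [Finset.mem_filter] at hn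
      simpa using hn.2)

lemma folner_card_tendsto {Φ : ℕ → Finset ℕ} (hΦ : IsFolner Φ) :
    Tendsto (fun N => (Φ N).card) atTop atTop := by
  rw [tendsto_atTop]
  intro K
  have hev : ∀ᶠ N in atTop, ∀ t ∈ Finset.Icc 1 K,
      1 - 1/(K+1 : ℝ) < (((Φ N).filter (fun n => n + t ∈ Φ N)).card : ℝ) / ((Φ N).card : ℝ) := by
    rw [Filter.eventually_all_finset]
    intro t _
    apply (hΦ.2 t).eventually (eventually_gt_nhds ?_)
    have : (0:ℝ) < 1/(K+1:ℝ) := by positivity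
    linarith
  filter_upwards [hev] with N hN
  set c : ℕ := (Φ N).card with hc
  have hc0 : 0 < c := (hΦ.1 N).card_pos
  have hc0' : (0:ℝ) < c := by exact_mod_cast hc0
  classical
  set G : Finset ℕ := (Φ N).filter (fun n => ∀ t ∈ Finset.Icc 1 K, n + t ∈ Φ N) with hG
  have hGsub : G ⊆ Φ N := Finset.filter_subset _ _
  have hbnd : ∀ t ∈ Finset.Icc 1 K,
      ((Φ N \ (Φ N).filter (fun n => n + t ∈ Φ N)).card : ℝ) ≤ c / (K+1:ℝ) := by
    intro t ht
    have h1 := hN t ht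
    set B := (Φ N).filter (fun n => n + t ∈ Φ N) with hB
    have hBsub : B ⊆ Φ N := Finset.filter_subset _ _
    have hcard : ((Φ N \ B).card : ℝ) = (c:ℝ) - (B.card : ℝ) := by
      rw [Finset.card_sdiff_of_subset hBsub]
      have := Finset.card_le_card hBsub
      push_cast [Nat.cast_sub this]
      ring
    rw [hcard]
    rw [lt_div_iff₀ hc0'] at h1
    have hK : (0:ℝ) < (K:ℝ)+1 := by positivity
    rw [sub_le_iff_le_add]
    rw [div_add' _ _ _ hK.ne']
    rw [le_div_iff₀ hK]
    have hu : (1/((K:ℝ)+1)) * ((K:ℝ)+1) = 1 := by field_simp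
    nlinarith [h1, hu, hc0']
  have hbad : ((Φ N \ G).card : ℝ) ≤ (K : ℝ) * ((c:ℝ) / (K+1:ℝ)) := by
    have hsub : Φ N \ G ⊆ (Finset.Icc 1 K).biUnion
        (fun t => Φ N \ (Φ N).filter (fun n => n + t ∈ Φ N)) := by
      intro n hn
      simp only [Finset.mem_sdiff, hG, Finset.mem_filter, not_and, not_forall] at hn
      obtain ⟨hnΦ, hn2⟩ := hn
      obtain ⟨t, ht, hnt⟩ := hn2 hnΦ
      simp only [Finset.mem_biUnion, Finset.mem_sdiff, Finset.mem_filter]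
      exact ⟨t, ht, hnΦ, fun h => hnt h.2⟩
    calc ((Φ N \ G).card : ℝ) ≤ ((Finset.Icc 1 K).biUnion
          (fun t => Φ N \ (Φ N).filter (fun n => n + t ∈ Φ N))).card := by
          exact_mod_cast Finset.card_le_card hsub
      _ ≤ ∑ t ∈ Finset.Icc 1 K, ((Φ N \ (Φ N).filter (fun n => n + t ∈ Φ N)).card : ℝ) := by
          exact_mod_cast Finset.card_biUnion_le
      _ ≤ ∑ t ∈ Finset.Icc 1 K, (c:ℝ) / (K+1:ℝ) := Finset.sum_le_sum hbnd
      _ ≤ (K:ℝ) * ((c:ℝ)/(K+1:ℝ)) := by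
          rw [Finset.sum_const, nsmul_eq_mul]
          have h3 : (Finset.Icc 1 K).card ≤ K := by simp [Nat.card_Icc]
          have h2 : (0:ℝ) ≤ (c:ℝ)/(K+1:ℝ) := by positivity
          apply mul_le_mul_of_nonneg_right _ h2
          exact_mod_cast h3
  have hlt : ((Φ N \ G).card : ℝ) < c := by
    apply hbad.trans_lt
    rw [mul_div_assoc']
    rw [div_lt_iff₀ (by positivity)]
    nlinarith [hc0']
  have hGne : G.Nonempty := by
    rw [Finset.nonempty_iff_ne_empty]
    intro h
    rw [h, Finset.sdiff_empty] at hlt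
    exact lt_irrefl _ hlt
  obtain ⟨n, hn⟩ := hGne
  simp only [hG, Finset.mem_filter] at hn
  have himg : (Finset.range (K+1)).image (fun t => n + t) ⊆ Φ N := by
    intro m hm
    simp only [Finset.mem_image, Finset.mem_range] at hm
    obtain ⟨t, ht, rfl⟩ := hm
    rcases Nat.eq_zero_or_pos t with rfl | ht1
    · simpa using hn.1
    · exact hn.2 t (Finset.mem_Icc.mpr ⟨ht1, Nat.lt_succ_iff.mp ht⟩)
  have := Finset.card_le_card himg
  rw [Finset.card_image_of_injective _ (add_right_injective n), Finset.card_range] at this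
  omega

lemma infinite_of_dens_limit {Φ : ℕ → Finset ℕ} {U : Filter ℕ} [U.NeBot] (hU : U ≤ atTop)
    (hΦ : IsFolner Φ) {S : Set ℕ} {d : ℝ} (hd : Tendsto (dens Φ S) U (𝓝 d)) (hd0 : 0 < d) :
    S.Infinite := by
  by_contra hinf
  rw [Set.not_infinite] at hinf
  have hS := hinf
  have hub : ∀ N, dens Φ S N ≤ (hS.toFinset.card : ℝ) / ((Φ N).card : ℝ) :=
    dens_finite_le S hS
  have hcard : Tendsto (fun N => ((Φ N).card : ℝ)) atTop atTop :=
    tendsto_natCast_atTop_atTop.comp (folner_card_tendsto hΦ)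
  have h0 : Tendsto (fun N => (hS.toFinset.card : ℝ) / ((Φ N).card : ℝ)) atTop (𝓝 0) :=
    Tendsto.div_atTop tendsto_const_nhds hcard
  have h0' : Tendsto (fun N => (hS.toFinset.card : ℝ) / ((Φ N).card : ℝ)) U (𝓝 0) :=
    h0.mono_left hU
  have hzero : Tendsto (dens Φ S) U (𝓝 0) :=
    tendsto_of_tendsto_of_tendsto_of_le_of_le tendsto_const_nhds h0'
      (fun N => dens_nonneg S N) hub
  exact absurd (tendsto_nhds_unique hd hzero) hd0.ne'

end DensBasics

/-- If the fiber densities `d_Φ(Aₙ)` exist and have positive limsup, then `A`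
contains `{(b, c) : b ∈ B, c ∈ C, b < c}` for infinite sets `B, C`. -/
theorem fiber_density_gives_ordered_product (Φ : ℕ → Finset ℕ) (hΦ : IsFolner Φ)
    (A : Set (ℕ × ℕ)) (g : ℕ → ℝ)
    (hg : ∀ n : ℕ, HasDensityAlong Φ {m : ℕ | (n, m) ∈ A} (g n))
    (hpos : ∃ a : ℝ, 0 < a ∧ {n : ℕ | a ≤ g n}.Infinite) :
    ∃ B C : Set ℕ, B.Infinite ∧ C.Infinite ∧
      ∀ b ∈ B, ∀ c ∈ C, b < c → (b, c) ∈ A := by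
  classical
  obtain ⟨a, ha, haI⟩ := hpos
  set I : Set ℕ := {n : ℕ | a ≤ g n} with hIdef
  obtain ⟨U, hU⟩ := Filter.exists_ultrafilter_le (atTop : Filter ℕ)
  -- the point map into Cantor space
  set x : ℕ → (ℕ → Bool) := fun m n => decide ((n, m) ∈ A) with hxdef
  -- ultrafilter limits of densities
  have hDex : ∀ S : Set (ℕ → Bool), ∃ d, d ∈ Icc (0:ℝ) 1 ∧
      Tendsto (dens Φ (x ⁻¹' S)) (U : Filter ℕ) (𝓝 d) := by
    intro S
    have hle : (↑(U.map (dens Φ (x ⁻¹' S))) : Filter ℝ) ≤ 𝓟 (Icc 0 1) := by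
      simp only [Ultrafilter.coe_map, le_principal_iff, Filter.mem_map]
      have : (dens Φ (x ⁻¹' S)) ⁻¹' (Icc 0 1) = Set.univ := by
        ext N
        simp [dens_nonneg, dens_le_one]
      rw [this]
      exact Filter.univ_mem
    obtain ⟨d, hd, hd2⟩ := isCompact_Icc.ultrafilter_le_nhds (U.map (dens Φ (x ⁻¹' S))) hle
    exact ⟨d, hd, hd2⟩
  choose D hD1 hD2 using hDex
  have hD_nonneg : ∀ S, 0 ≤ D S := fun S => (hD1 S).1
  have hD_mono : ∀ {S T : Set (ℕ → Bool)}, S ⊆ T → D S ≤ D T := fun {S T} h =>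
    le_of_tendsto_of_tendsto' (hD2 S) (hD2 T) (fun N => dens_mono (preimage_mono h) N)
  have hD_add : ∀ {S T : Set (ℕ → Bool)}, Disjoint S T → D (S ∪ T) = D S + D T := by
    intro S T h
    refine tendsto_nhds_unique (hD2 _) ?_
    have heq : ∀ N, dens Φ (x ⁻¹' (S ∪ T)) N = dens Φ (x ⁻¹' S) N + dens Φ (x ⁻¹' T) N := by
      intro N
      rw [preimage_union, dens_union_of_disjoint (h.preimage x)]
    have := (hD2 S).add (hD2 T)
    refine this.congr (fun N => (heq N).symm)
  have hD_subadd : ∀ S T : Set (ℕ → Bool), D (S ∪ T) ≤ D S + D T := by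
    intro S T
    refine le_of_tendsto_of_tendsto' (hD2 _) ((hD2 S).add (hD2 T)) (fun N => ?_)
    rw [preimage_union]
    exact dens_union_le _ _ N
  have hD_univ : D Set.univ = 1 := by
    refine tendsto_nhds_unique (hD2 _) ?_
    have : ∀ N, dens Φ (x ⁻¹' (Set.univ : Set (ℕ → Bool))) N = 1 := by
      intro N
      rw [preimage_univ]
      exact dens_univ hΦ.1 N
    exact tendsto_const_nhds.congr (fun N => (this N).symm)
  -- the content and its measure
  set κ : Content (ℕ → Bool) :=
    { toFun := fun K => (D (K : Set (ℕ → Bool))).toNNReal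
      mono' := fun K₁ K₂ h => Real.toNNReal_mono (hD_mono h)
      sup_disjoint' := fun K₁ K₂ h _ _ => by
        simp only [Compacts.coe_sup]
        rw [hD_add h, Real.toNNReal_add (hD_nonneg _) (hD_nonneg _)]
      sup_le' := fun K₁ K₂ => by
        simp only [Compacts.coe_sup]
        exact le_trans (Real.toNNReal_mono (hD_subadd _ _)) Real.toNNReal_add_le } with hκ
  set μ : Measure (ℕ → Bool) := κ.measure with hμdef
  have hclopen : ∀ {W : Set (ℕ → Bool)}, IsClopen W → μ W = ENNReal.ofReal (D W) := by
    intro W hW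
    have hcpt : IsCompact W := hW.isClosed.isCompact
    have h1 : κ.outerMeasure W ≤ (κ (⟨W, hcpt⟩ : Compacts (ℕ → Bool)) : ℝ≥0∞) := by
      rw [κ.outerMeasure_of_isOpen W hW.isOpen]
      exact κ.innerContent_le (⟨W, hW.isOpen⟩ : Opens (ℕ → Bool)) (⟨W, hcpt⟩ : Compacts (ℕ → Bool)) subset_rfl
    have h2 := κ.le_outerMeasure_compacts (⟨W, hcpt⟩ : Compacts (ℕ → Bool))
    rw [hμdef, Content.measure_apply _ hW.isOpen.measurableSet, le_antisymm h1 h2]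
    rfl
  have hprob : IsProbabilityMeasure μ := by
    constructor
    rw [hclopen isClopen_univ, hD_univ, ENNReal.ofReal_one]
  -- basic cylinder sets
  set E : ℕ → Set (ℕ → Bool) := fun n => (fun y : ℕ → Bool => y n) ⁻¹' {true} with hEdef
  have hE_clopen : ∀ n, IsClopen (E n) := fun n =>
    (isClopen_discrete {true}).preimage (continuous_apply n)
  have hE_meas : ∀ n, MeasurableSet (E n) := fun n => (hE_clopen n).isOpen.measurableSet
  have hx_pre : ∀ n : ℕ, x ⁻¹' (E n) = {m : ℕ | (n, m) ∈ A} := by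
    intro n
    ext m
    simp [hEdef, hxdef]
  have hμE : ∀ n, μ (E n) = ENNReal.ofReal (g n) := by
    intro n
    rw [hclopen (hE_clopen n)]
    congr 1
    refine tendsto_nhds_unique (hD2 (E n)) ?_
    have := (hasDensityAlong_iff_s16 Φ {m : ℕ | (n, m) ∈ A} (g n)).mp (hg n)
    have h2 : Tendsto (dens Φ {m : ℕ | (n, m) ∈ A}) (U : Filter ℕ) (𝓝 (g n)) :=
      this.mono_left hU
    exact h2.congr (fun N => by rw [hx_pre n])
  have hg_le_one : ∀ n, g n ≤ 1 := by
    intro n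
    have := (hasDensityAlong_iff_s16 Φ {m : ℕ | (n, m) ∈ A} (g n)).mp (hg n)
    exact le_of_tendsto this (Filter.Eventually.of_forall (fun N => dens_le_one _ N))
  have ha1 : a ≤ 1 := by
    obtain ⟨n₀, hn₀⟩ := haI.nonempty
    exact le_trans hn₀ (hg_le_one n₀)
  -- the limsup set L
  set L : Set (ℕ → Bool) := ⋂ k : ℕ, ⋃ n : ℕ, ⋃ (_ : n ∈ I ∧ k ≤ n), E n with hLdef
  have hL_meas : MeasurableSet L :=
    MeasurableSet.iInter fun k => MeasurableSet.iUnion fun n =>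
      MeasurableSet.iUnion fun _ => hE_meas n
  have hL_mem : ∀ y ∈ L, ∀ k : ℕ, ∃ n, n ∈ I ∧ k ≤ n ∧ y ∈ E n := by
    intro y hy k
    have := mem_iInter.mp hy k
    simp only [mem_iUnion] at this
    obtain ⟨n, ⟨hnI, hkn⟩, hyn⟩ := this
    exact ⟨n, hnI, hkn, hyn⟩
  have hμL : ENNReal.ofReal a ≤ μ L := by
    have hcompl : μ Lᶜ ≤ 1 - ENNReal.ofReal a := by
      have hLc : Lᶜ = ⋃ k : ℕ, (⋃ n : ℕ, ⋃ (_ : n ∈ I ∧ k ≤ n), E n)ᶜ := by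
        rw [hLdef, compl_iInter]
      rw [hLc]
      have hmono : Monotone (fun k : ℕ => (⋃ n : ℕ, ⋃ (_ : n ∈ I ∧ k ≤ n), E n)ᶜ) := by
        intro k l hkl
        apply compl_subset_compl.mpr
        refine iUnion_mono fun n => ?_
        refine iUnion_subset fun hn => ?_
        exact subset_iUnion_of_subset ⟨hn.1, hkl.trans hn.2⟩ subset_rfl
      rw [hmono.measure_iUnion]
      refine iSup_le fun k => ?_
      obtain ⟨n, hnI, hkn⟩ := haI.exists_gt k
      have hsub : (⋃ n : ℕ, ⋃ (_ : n ∈ I ∧ k ≤ n), E n)ᶜ ⊆ (E n)ᶜ :=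
        compl_subset_compl.mpr (subset_iUnion_of_subset n
          (subset_iUnion_of_subset ⟨hnI, hkn.le⟩ subset_rfl))
      calc μ (⋃ n : ℕ, ⋃ (_ : n ∈ I ∧ k ≤ n), E n)ᶜ ≤ μ (E n)ᶜ := measure_mono hsub
        _ = 1 - μ (E n) := by
            rw [measure_compl (hE_meas n) (measure_ne_top μ _), measure_univ]
        _ ≤ 1 - ENNReal.ofReal a := by
            apply tsub_le_tsub_left
            rw [hμE n]
            exact ENNReal.ofReal_le_ofReal hnI
    have h1 : μ Lᶜ = 1 - μ L := by
      rw [measure_compl hL_meas (measure_ne_top μ _), measure_univ]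
    rw [h1] at hcompl
    have hL1 : μ L ≤ 1 := prob_le_one
    have ha1' : ENNReal.ofReal a ≤ 1 := by
      rw [← ENNReal.ofReal_one]
      exact ENNReal.ofReal_le_ofReal ha1
    calc ENNReal.ofReal a = 1 - (1 - ENNReal.ofReal a) :=
          (ENNReal.sub_sub_cancel ENNReal.one_ne_top ha1').symm
      _ ≤ 1 - (1 - μ L) := tsub_le_tsub_left hcompl 1
      _ = μ L := ENNReal.sub_sub_cancel ENNReal.one_ne_top hL1
  have hLpos : 0 < μ L := lt_of_lt_of_le (ENNReal.ofReal_pos.mpr ha) hμL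
  -- the selection step
  have step : ∀ (P : Set (ℕ → Bool)) (k : ℕ), P ⊆ L → 0 < μ P →
      ∃ n, n ∈ I ∧ k < n ∧ 0 < μ (P ∩ E n) := by
    intro P k hPL hP
    by_contra hcon
    push_neg at hcon
    have hnull : ∀ n, n ∈ I → k < n → μ (P ∩ E n) = 0 := by
      intro n h1 h2
      exact le_antisymm (hcon n h1 h2) zero_le
    have hcover : P ⊆ ⋃ n : ℕ, ⋃ (_ : n ∈ I ∧ k < n), P ∩ E n := by
      intro y hy
      obtain ⟨n, hnI, hkn, hyE⟩ := hL_mem y (hPL hy) (k+1)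
      exact mem_iUnion.mpr ⟨n, mem_iUnion.mpr ⟨⟨hnI, hkn⟩, ⟨hy, hyE⟩⟩⟩
    have : μ P = 0 := by
      refine measure_mono_null hcover ?_
      refine measure_iUnion_null fun n => measure_iUnion_null fun hn => ?_
      exact hnull n hn.1 hn.2
    exact hP.ne' this
  choose! nx hnxI hnxlt hnxpos using step
  -- the recursive sequence
  set F : ℕ → ℕ × Set (ℕ → Bool) := fun k => Nat.rec
      (nx L 0, L ∩ E (nx L 0))
      (fun _ p => (nx p.2 p.1, p.2 ∩ E (nx p.2 p.1))) k with hFdef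
  set r : ℕ → ℕ := fun k => (F k).1 with hrdef
  set P : ℕ → Set (ℕ → Bool) := fun k => (F k).2 with hPdef
  have hF0 : F 0 = (nx L 0, L ∩ E (nx L 0)) := rfl
  have hFsucc : ∀ k, F (k+1) = (nx (P k) (r k), P k ∩ E (nx (P k) (r k))) := fun k => rfl
  have hmain : ∀ k, P k ⊆ L ∧ 0 < μ (P k) ∧ r k ∈ I ∧ P k ⊆ E (r k) := by
    intro k
    induction k with
    | zero =>
      have h := hnxpos L 0 subset_rfl hLpos
      have hI0 := hnxI L 0 subset_rfl hLpos
      refine ⟨inter_subset_left, h, hI0, inter_subset_right⟩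
    | succ k ih =>
      obtain ⟨h1, h2, h3, h4⟩ := ih
      have h := hnxpos (P k) (r k) h1 h2
      have hI' := hnxI (P k) (r k) h1 h2
      refine ⟨?_, h, hI', ?_⟩
      · rw [hPdef]
        simp only [hFsucc k]
        exact inter_subset_left.trans h1
      · rw [hPdef]
        simp only [hFsucc k]
        exact inter_subset_right
  have hPsucc : ∀ k, P (k+1) ⊆ P k := by
    intro k
    rw [hPdef]
    simp only [hFsucc k]
    exact inter_subset_left
  have hrsucc : ∀ k, r (k+1) = nx (P k) (r k) := fun k => rfl
  have hrmono : StrictMono r := by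
    apply strictMono_nat_of_lt_succ
    intro k
    rw [hrsucc k]
    exact hnxlt (P k) (r k) (hmain k).1 (hmain k).2.1
  have hPE : ∀ k j, j ≤ k → P k ⊆ E (r j) := by
    intro k
    induction k with
    | zero =>
      intro j hj
      rw [Nat.le_zero.mp hj]
      exact (hmain 0).2.2.2
    | succ k ih =>
      intro j hj
      rcases eq_or_lt_of_le hj with rfl | h
      · exact (hmain (k+1)).2.2.2
      · exact (hPsucc k).trans (ih j (Nat.lt_succ_iff.mp h))
  -- the finite intersections are infinite
  have hTinf : ∀ k : ℕ, {m : ℕ | ∀ j ≤ k, (r j, m) ∈ A}.Infinite := by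
    intro k
    set W : Set (ℕ → Bool) := ⋂ j ∈ Finset.range (k+1), E (r j) with hWdef
    have hWclopen : IsClopen W := isClopen_biInter_finset (fun j _ => hE_clopen (r j))
    have hPW : P k ⊆ W := by
      refine subset_iInter₂ fun j hj => ?_
      exact hPE k j (Nat.lt_succ_iff.mp (Finset.mem_range.mp hj))
    have hWpos : 0 < μ W := lt_of_lt_of_le (hmain k).2.1 (measure_mono hPW)
    rw [hclopen hWclopen] at hWpos
    have hDpos : 0 < D W := ENNReal.ofReal_pos.mp hWpos
    have hpre : x ⁻¹' W = {m : ℕ | ∀ j ≤ k, (r j, m) ∈ A} := by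
      rw [hWdef]
      ext m
      simp only [preimage_iInter, mem_iInter, mem_preimage, Finset.mem_range, mem_setOf_eq,
        Nat.lt_succ_iff]
      constructor
      · intro h j hj
        have := h j hj
        rw [← mem_preimage, hx_pre (r j)] at this
        exact this
      · intro h j hj
        rw [← mem_preimage, hx_pre (r j)]
        exact h j hj
    have := infinite_of_dens_limit hU hΦ (hD2 W) hDpos
    rwa [hpre] at this
  -- final combinatorial construction
  have hpick : ∀ t : ℕ, ∃ m, m ∈ {m : ℕ | ∀ j ≤ t, (r j, m) ∈ A} ∧ r t < m := fun t =>
    (hTinf t).exists_gt (r t)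
  choose pick hpick1 hpick2 using hpick
  set kseq : ℕ → ℕ := fun i => Nat.rec 0 (fun _ ki => pick ki + 1) i with hkseq
  set cseq : ℕ → ℕ := fun i => pick (kseq i) with hcseq
  have hkrec : ∀ i, kseq (i+1) = cseq i + 1 := fun i => rfl
  have hbc : ∀ i, r (kseq i) < cseq i := fun i => hpick2 (kseq i)
  have hcb : ∀ i, cseq i < r (kseq (i+1)) := by
    intro i
    rw [hkrec i]
    calc cseq i < cseq i + 1 := Nat.lt_succ_self _
      _ ≤ r (cseq i + 1) := hrmono.le_apply
  have hbmono : StrictMono (fun i => r (kseq i)) :=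
    strictMono_nat_of_lt_succ (fun i => (hbc i).trans (hcb i))
  have hcmono : StrictMono cseq :=
    strictMono_nat_of_lt_succ (fun i => (hcb i).trans (hbc (i+1)))
  have hkmono : StrictMono kseq := by
    apply strictMono_nat_of_lt_succ
    intro i
    rw [hkrec i]
    calc kseq i ≤ r (kseq i) := hrmono.le_apply
      _ < cseq i := hbc i
      _ < cseq i + 1 := Nat.lt_succ_self _
  refine ⟨Set.range (fun i => r (kseq i)), Set.range cseq,
    Set.infinite_range_of_injective hbmono.injective,
    Set.infinite_range_of_injective hcmono.injective, ?_⟩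
  rintro b ⟨i, rfl⟩ c ⟨l, rfl⟩ hlt
  rcases le_or_gt i l with h | h
  · exact hpick1 (kseq l) (kseq i) (hkmono.monotone h)
  · exfalso
    have h1 : r (kseq (l+1)) ≤ r (kseq i) := hrmono.monotone (hkmono.monotone h)
    have h2 : cseq l < r (kseq i) := lt_of_lt_of_le (hcb l) h1
    exact absurd hlt (not_lt.mpr h2.le)
end

section
/- Let R ⊂ ℕ be infinite. Then for every A ⊂ ℕ with d*(A) > 0 there exist infinite sets B ⊆ R and C ⊂ ℕ such that { b + c : b ∈ B, c ∈ C, b < c } ⊆ A. -/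
namespace SumsetAux

open Filter MeasureTheory Topology Set
open scoped ENNReal NNReal Classical

/-- filter with a pinned (classical) decidability instance, to avoid instance mismatch -/
noncomputable abbrev cfilter (p : ℕ → Prop) (s : Finset ℕ) : Finset ℕ :=
  @Finset.filter ℕ p (fun j => Classical.propDecidable _) s

lemma cfilter_subset (p : ℕ → Prop) (s : Finset ℕ) : cfilter p s ⊆ s :=
  @Finset.filter_subset ℕ p (fun j => Classical.propDecidable _) s

lemma mem_cfilter {p : ℕ → Prop} {s : Finset ℕ} {j : ℕ} :
    j ∈ cfilter p s ↔ j ∈ s ∧ p j :=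
  @Finset.mem_filter ℕ p (fun j => Classical.propDecidable _) s j

noncomputable section

abbrev X : Type := ℕ → Bool

def Ecyl (b : ℕ) : Set X := (fun x : X => x b) ⁻¹' {true}

lemma isClopen_Ecyl (b : ℕ) : IsClopen (Ecyl b) :=
  ⟨(isClosed_discrete _).preimage (continuous_apply b),
   (isOpen_discrete _).preimage (continuous_apply b)⟩

lemma measurableSet_Ecyl (b : ℕ) : MeasurableSet (Ecyl b) :=
  (isClopen_Ecyl b).2.measurableSet

variable (A : Set ℕ)

/-- orbit points -/
def pt (j : ℕ) : X := fun n => decide (n + j ∈ A)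

lemma pt_mem_Ecyl {j b : ℕ} : pt A j ∈ Ecyl b ↔ b + j ∈ A := by
  simp [pt, Ecyl]

/-- window data witnessing positive upper Banach density -/
structure Windows where
  M : ℕ → ℕ
  N : ℕ → ℕ
  δ : ℝ
  hδ : 0 < δ
  hlen : ∀ m, m + 1 ≤ N m - M m
  hcard : ∀ m, δ * ((N m - M m : ℕ) : ℝ) ≤
    (((Finset.Ioc (M m) (N m)).filter (fun n => n ∈ A)).card : ℝ)

lemma exists_windows (hA : 0 < upperBanachDensity A) : Nonempty (Windows A) := by
  set g : ℕ × ℕ → ℝ := fun p =>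
    (((Finset.Ioc p.1 p.2).filter (fun n => n ∈ A)).card : ℝ) / ((p.2 - p.1 : ℕ) : ℝ) with hg
  set F : Filter (ℕ × ℕ) := Filter.atTop.comap (fun p : ℕ × ℕ => p.2 - p.1) with hF
  have hFne : F.NeBot := by
    refine Filter.comap_neBot (fun t ht => ?_)
    rcases Filter.mem_atTop_sets.1 ht with ⟨a, ha⟩
    exact ⟨(0, a), ha _ (by simp)⟩
  have hgnn : ∀ p, 0 ≤ g p := by
    intro p
    apply div_nonneg <;> positivity
  have hb : Filter.IsBoundedUnder (· ≥ ·) F g :=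
    Filter.isBoundedUnder_of ⟨0, fun p => hgnn p⟩
  have hcob : Filter.IsCoboundedUnder (· ≤ ·) F g := hb.isCoboundedUnder_le
  have hlt : upperBanachDensity A / 2 < Filter.limsup g F := by
    rw [upperBanachDensity] at hA ⊢
    exact half_lt_self hA
  have hfreq : ∃ᶠ p in F, upperBanachDensity A / 2 < g p :=
    Filter.frequently_lt_of_lt_limsup hcob hlt
  have key : ∀ m : ℕ, ∃ p : ℕ × ℕ, m + 1 ≤ p.2 - p.1 ∧ upperBanachDensity A / 2 < g p := by
    intro m
    have hmem : (fun p : ℕ × ℕ => p.2 - p.1) ⁻¹' (Set.Ici (m+1)) ∈ F :=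
      Filter.preimage_mem_comap (Filter.Ici_mem_atTop _)
    rcases (hfreq.and_eventually (Filter.eventually_of_mem hmem (fun p hp => hp))).exists with
      ⟨p, hp1, hp2⟩
    exact ⟨p, hp2, hp1⟩
  choose p hp1 hp2 using key
  refine ⟨⟨fun m => (p m).1, fun m => (p m).2, upperBanachDensity A / 2, half_pos hA, hp1, ?_⟩⟩
  intro m
  have hlenpos : (0:ℝ) < (((p m).2 - (p m).1 : ℕ) : ℝ) :=
    Nat.cast_pos.2 (lt_of_lt_of_le (Nat.succ_pos m) (hp1 m))
  have := hp2 m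
  rw [hg, lt_div_iff₀ hlenpos] at this
  exact this.le

variable {A}
variable (W : Windows A)

def Windows.len (m : ℕ) : ℕ := W.N m - W.M m

lemma Windows.len_pos (m : ℕ) : 0 < W.len m := lt_of_lt_of_le (Nat.succ_pos m) (W.hlen m)

/-- normalized orbit counting on window m -/
def Windows.nu (m : ℕ) (S : Set X) : ℝ :=
  ((cfilter (fun j => pt A j ∈ S) (Finset.Ioc (W.M m) (W.N m))).card : ℝ) / (W.len m : ℝ)

lemma Windows.nu_nonneg (m : ℕ) (S : Set X) : 0 ≤ W.nu m S := by
  unfold Windows.nu; positivity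

lemma Windows.nu_mono (m : ℕ) {S T : Set X} (h : S ⊆ T) : W.nu m S ≤ W.nu m T := by
  unfold Windows.nu
  have hl : (0:ℝ) < (W.len m : ℝ) := by exact_mod_cast W.len_pos m
  have hcard : (cfilter (fun j => pt A j ∈ S) (Finset.Ioc (W.M m) (W.N m))).card
      ≤ (cfilter (fun j => pt A j ∈ T) (Finset.Ioc (W.M m) (W.N m))).card :=
    Finset.card_le_card (Finset.monotone_filter_right _ (fun j _ hj => h hj))
  exact div_le_div_of_nonneg_right (by exact_mod_cast hcard) hl.le

lemma Windows.nu_le_one (m : ℕ) (S : Set X) : W.nu m S ≤ 1 := by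
  unfold Windows.nu
  have hl : (0:ℝ) < (W.len m : ℝ) := by exact_mod_cast W.len_pos m
  rw [div_le_one hl]
  have : (cfilter (fun j => pt A j ∈ S) (Finset.Ioc (W.M m) (W.N m))).card
      ≤ (Finset.Ioc (W.M m) (W.N m)).card := Finset.card_filter_le _ _
  calc ((cfilter (fun j => pt A j ∈ S) (Finset.Ioc (W.M m) (W.N m))).card : ℝ)
      ≤ ((Finset.Ioc (W.M m) (W.N m)).card : ℝ) := by exact_mod_cast this
    _ = (W.len m : ℝ) := by rw [Nat.card_Ioc]; rfl

lemma Windows.nu_univ (m : ℕ) : W.nu m Set.univ = 1 := by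
  unfold Windows.nu
  have hl : (0:ℝ) < (W.len m : ℝ) := by exact_mod_cast W.len_pos m
  have hfe : (cfilter (fun j => pt A j ∈ (Set.univ : Set X)) (Finset.Ioc (W.M m) (W.N m))).card
      = (Finset.Ioc (W.M m) (W.N m)).card := by
    refine le_antisymm (Finset.card_le_card (cfilter_subset _ _)) (Finset.card_le_card ?_)
    intro j hj
    exact mem_cfilter.2 ⟨hj, trivial⟩
  rw [hfe, Nat.card_Ioc]
  exact div_self hl.ne'

lemma Windows.nu_union (m : ℕ) {S T : Set X} (h : Disjoint S T) :
    W.nu m (S ∪ T) = W.nu m S + W.nu m T := by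
  unfold Windows.nu
  rw [← add_div]
  congr 1
  rw [← Nat.cast_add]
  congr 1
  have hdis : Disjoint (cfilter (fun j => pt A j ∈ S) (Finset.Ioc (W.M m) (W.N m)))
      (cfilter (fun j => pt A j ∈ T) (Finset.Ioc (W.M m) (W.N m))) := by
    rw [Finset.disjoint_left]
    intro j hjS hjT
    exact Set.disjoint_left.1 h (Finset.mem_filter.1 hjS).2 (Finset.mem_filter.1 hjT).2
  have hfe : cfilter (fun j => pt A j ∈ S ∪ T) (Finset.Ioc (W.M m) (W.N m))
      = cfilter (fun j => pt A j ∈ S) (Finset.Ioc (W.M m) (W.N m))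
        ∪ cfilter (fun j => pt A j ∈ T) (Finset.Ioc (W.M m) (W.N m)) := by
    ext j
    simp only [Finset.mem_filter, Finset.mem_union, Set.mem_union]
    tauto
  rw [hfe, Finset.card_union_of_disjoint hdis]

/-- a fixed ultrafilter extending `atTop` -/
def UF : Ultrafilter ℕ := Ultrafilter.of Filter.atTop

lemma UF_le : (UF : Filter ℕ) ≤ Filter.atTop := Ultrafilter.of_le _

lemma Windows.exists_lim (S : Set X) : ∃ c, Filter.Tendsto (fun m => W.nu m S) UF (𝓝 c) := by
  obtain ⟨c, -, hc⟩ := (isCompact_Icc (a := (0:ℝ)) (b := 1)).ultrafilter_le_nhds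
    ((UF : Ultrafilter ℕ).map (fun m => W.nu m S))
    (by
      rw [Ultrafilter.coe_map]
      refine le_principal_iff.2 (Filter.mem_map.2 ?_)
      filter_upwards with m
      exact ⟨W.nu_nonneg m S, W.nu_le_one m S⟩)
  exact ⟨c, hc⟩

/-- the limit density along the ultrafilter -/
def Windows.Lam (S : Set X) : ℝ := Classical.choose (W.exists_lim S)

lemma Windows.tendsto_Lam (S : Set X) :
    Filter.Tendsto (fun m => W.nu m S) UF (𝓝 (W.Lam S)) :=
  Classical.choose_spec (W.exists_lim S)

lemma Windows.Lam_nonneg (S : Set X) : 0 ≤ W.Lam S :=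
  le_of_tendsto_of_tendsto' tendsto_const_nhds (W.tendsto_Lam S) (fun m => W.nu_nonneg m S)

lemma Windows.Lam_le_one (S : Set X) : W.Lam S ≤ 1 :=
  le_of_tendsto_of_tendsto' (W.tendsto_Lam S) tendsto_const_nhds (fun m => W.nu_le_one m S)

lemma Windows.Lam_mono {S T : Set X} (h : S ⊆ T) : W.Lam S ≤ W.Lam T :=
  le_of_tendsto_of_tendsto' (W.tendsto_Lam S) (W.tendsto_Lam T) (fun m => W.nu_mono m h)

lemma Windows.Lam_univ : W.Lam (Set.univ) = 1 := by
  refine tendsto_nhds_unique (W.tendsto_Lam Set.univ) ?_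
  have heq : (fun m => W.nu m (Set.univ : Set X)) = fun _ => (1:ℝ) :=
    funext (fun m => W.nu_univ m)
  rw [heq]
  exact tendsto_const_nhds

lemma Windows.Lam_union {S T : Set X} (h : Disjoint S T) :
    W.Lam (S ∪ T) = W.Lam S + W.Lam T :=
  tendsto_nhds_unique (W.tendsto_Lam (S ∪ T))
    (by
      have heq : (fun m => W.nu m (S ∪ T)) = fun m => W.nu m S + W.nu m T :=
        funext (fun m => W.nu_union m h)
      rw [heq]
      exact (W.tendsto_Lam S).add (W.tendsto_Lam T))

lemma Windows.Lam_union_le (S T : Set X) : W.Lam (S ∪ T) ≤ W.Lam S + W.Lam T := by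
  refine le_of_tendsto_of_tendsto' (W.tendsto_Lam (S ∪ T))
    ((W.tendsto_Lam S).add (W.tendsto_Lam T)) (fun m => ?_)
  unfold Windows.nu
  rw [← add_div]
  have hl : (0:ℝ) < (W.len m : ℝ) := by exact_mod_cast W.len_pos m
  refine div_le_div_of_nonneg_right ?_ hl.le
  have hsub : cfilter (fun j => pt A j ∈ S ∪ T) (Finset.Ioc (W.M m) (W.N m))
      ⊆ cfilter (fun j => pt A j ∈ S) (Finset.Ioc (W.M m) (W.N m))
        ∪ cfilter (fun j => pt A j ∈ T) (Finset.Ioc (W.M m) (W.N m)) := by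
    intro j hj
    rcases mem_cfilter.1 hj with ⟨hj1, hj2 | hj2⟩
    · exact Finset.mem_union_left _ (mem_cfilter.2 ⟨hj1, hj2⟩)
    · exact Finset.mem_union_right _ (mem_cfilter.2 ⟨hj1, hj2⟩)
  calc ((cfilter (fun j => pt A j ∈ S ∪ T) (Finset.Ioc (W.M m) (W.N m))).card : ℝ)
      ≤ ((cfilter (fun j => pt A j ∈ S) (Finset.Ioc (W.M m) (W.N m))
          ∪ cfilter (fun j => pt A j ∈ T) (Finset.Ioc (W.M m) (W.N m))).card : ℝ) := by
        exact_mod_cast Finset.card_le_card hsub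
    _ ≤ _ := by exact_mod_cast Finset.card_union_le _ _

/-- counting shift bound: the count of `j ∈ (M,N]` with `b + j ∈ A` is at least the count
of `A` in the window minus `b`. -/
lemma count_shift (b M N : ℕ) :
    ((Finset.Ioc M N).filter (fun n => n ∈ A)).card ≤
      ((Finset.Ioc M N).filter (fun j => b + j ∈ A)).card + b := by
  classical
  -- first: A-count on (M+b, N] ≤ shifted count
  have h1 : ((Finset.Ioc (M + b) N).filter (fun n => n ∈ A)).card ≤
      ((Finset.Ioc M N).filter (fun j => b + j ∈ A)).card := by
    apply Finset.card_le_card_of_injOn (fun j => j - b)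
    · intro j hj
      rcases Finset.mem_filter.1 hj with ⟨hj1, hj2⟩
      rcases Finset.mem_Ioc.1 hj1 with ⟨hj3, hj4⟩
      have hbj : b ≤ j := le_trans (Nat.le_add_left b M) hj3.le
      have hMj : M < j - b := by omega
      have hbj2 : b + (j - b) = j := by omega
      refine Finset.mem_filter.2 ⟨Finset.mem_Ioc.2 ⟨hMj, le_trans (Nat.sub_le _ _) hj4⟩, ?_⟩
      rw [hbj2]; exact hj2
    · intro x hx y hy hxy
      rcases Finset.mem_Ioc.1 (Finset.mem_filter.1 hx).1 with ⟨hx1, -⟩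
      rcases Finset.mem_Ioc.1 (Finset.mem_filter.1 hy).1 with ⟨hy1, -⟩
      simp only at hxy
      omega
  -- second: A-count on (M, N] ≤ A-count on (M+b, N] + b
  have h2 : ((Finset.Ioc M N).filter (fun n => n ∈ A)).card ≤
      ((Finset.Ioc (M + b) N).filter (fun n => n ∈ A)).card + b := by
    have hsub : (Finset.Ioc M N).filter (fun n => n ∈ A) ⊆
        ((Finset.Ioc (M + b) N).filter (fun n => n ∈ A)) ∪ Finset.Ioc M (M + b) := by
      intro j hj
      rcases Finset.mem_filter.1 hj with ⟨hj1, hj2⟩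
      rcases Finset.mem_Ioc.1 hj1 with ⟨hj3, hj4⟩
      by_cases hc : M + b < j
      · exact Finset.mem_union_left _ (Finset.mem_filter.2 ⟨Finset.mem_Ioc.2 ⟨hc, hj4⟩, hj2⟩)
      · exact Finset.mem_union_right _ (Finset.mem_Ioc.2 ⟨hj3, by omega⟩)
    calc ((Finset.Ioc M N).filter (fun n => n ∈ A)).card
        ≤ (((Finset.Ioc (M + b) N).filter (fun n => n ∈ A)) ∪ Finset.Ioc M (M + b)).card :=
          Finset.card_le_card hsub
      _ ≤ ((Finset.Ioc (M + b) N).filter (fun n => n ∈ A)).card + (Finset.Ioc M (M+b)).card :=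
          Finset.card_union_le _ _
      _ = _ := by rw [Nat.card_Ioc]; omega
  omega

lemma Windows.nu_Ecyl_ge (b m : ℕ) :
    W.δ - (b : ℝ) / ((m:ℝ) + 1) ≤ W.nu m (Ecyl b) := by
  have hl : (0:ℝ) < (W.len m : ℝ) := by exact_mod_cast W.len_pos m
  have hcount := count_shift (A := A) b (W.M m) (W.N m)
  -- nu m (Ecyl b) = count(b + j ∈ A)/len
  have hfe : cfilter (fun j => pt A j ∈ Ecyl b) (Finset.Ioc (W.M m) (W.N m))
      = cfilter (fun j => b + j ∈ A) (Finset.Ioc (W.M m) (W.N m)) := by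
    apply Finset.filter_congr
    intro j _
    simp [pt_mem_Ecyl]
  have key : W.δ * (W.len m : ℝ) - b ≤
      ((cfilter (fun j => pt A j ∈ Ecyl b) (Finset.Ioc (W.M m) (W.N m))).card : ℝ) := by
    rw [hfe]
    have h1 := W.hcard m
    have h2 : (((Finset.Ioc (W.M m) (W.N m)).filter (fun n => n ∈ A)).card : ℝ) ≤
        ((cfilter (fun j => b + j ∈ A) (Finset.Ioc (W.M m) (W.N m))).card : ℝ) + b := by
      exact_mod_cast hcount
    have : ((W.N m - W.M m : ℕ) : ℝ) = (W.len m : ℝ) := rfl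
    rw [this] at h1
    linarith
  unfold Windows.nu
  rw [le_div_iff₀ hl]
  calc (W.δ - (b:ℝ)/((m:ℝ)+1)) * (W.len m : ℝ)
        = W.δ * (W.len m:ℝ) - (b:ℝ)/((m:ℝ)+1) * (W.len m:ℝ) := by ring
      _ ≤ W.δ * (W.len m:ℝ) - (b:ℝ) := by
          have hmlen : (m:ℝ) + 1 ≤ (W.len m : ℝ) := by exact_mod_cast W.hlen m
          have hm1 : (0:ℝ) < (m:ℝ) + 1 := by positivity
          have : (b:ℝ) ≤ (b:ℝ)/((m:ℝ)+1) * (W.len m:ℝ) := by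
            rw [div_mul_eq_mul_div, le_div_iff₀ hm1]
            have : (b:ℝ) * ((m:ℝ)+1) ≤ (b:ℝ) * (W.len m:ℝ) := by
              apply mul_le_mul_of_nonneg_left hmlen (Nat.cast_nonneg b)
            linarith
          linarith
      _ ≤ _ := key

lemma Windows.Lam_Ecyl_ge (b : ℕ) : W.δ ≤ W.Lam (Ecyl b) := by
  have h1 : Filter.Tendsto (fun m : ℕ => W.δ - (b : ℝ) / ((m:ℝ) + 1)) atTop (𝓝 W.δ) := by
    have : Filter.Tendsto (fun m : ℕ => (b : ℝ) / ((m:ℝ) + 1)) atTop (𝓝 0) :=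
      tendsto_const_nhds.div_atTop (tendsto_natCast_atTop_atTop.atTop_add tendsto_const_nhds)
    simpa using tendsto_const_nhds.sub this
  exact le_of_tendsto_of_tendsto' (h1.mono_left UF_le) (W.tendsto_Lam (Ecyl b))
    (fun m => W.nu_Ecyl_ge b m)

/-- if the orbit hits `S` only finitely often, `Lam S = 0`; contrapositive used below. -/
lemma Windows.infinite_orbit_of_Lam_pos {S : Set X} (h : 0 < W.Lam S) :
    {j : ℕ | pt A j ∈ S}.Infinite := by
  by_contra hni
  have hfin : {j : ℕ | pt A j ∈ S}.Finite := Set.not_infinite.1 hni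
  have hb : ∀ m, W.nu m S ≤ (hfin.toFinset.card : ℝ) / ((m:ℝ) + 1) := by
    intro m
    have hl : (0:ℝ) < (W.len m : ℝ) := by exact_mod_cast W.len_pos m
    have hm1 : (0:ℝ) < (m:ℝ) + 1 := by positivity
    have hcard : (cfilter (fun j => pt A j ∈ S) (Finset.Ioc (W.M m) (W.N m))).card
        ≤ hfin.toFinset.card := by
      apply Finset.card_le_card
      intro j hj
      exact hfin.mem_toFinset.2 (Finset.mem_filter.1 hj).2
    unfold Windows.nu
    apply div_le_div₀
    · positivity
    · exact_mod_cast hcard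
    · exact hm1
    · exact_mod_cast W.hlen m
  have h0 : Filter.Tendsto (fun m => W.nu m S) UF (𝓝 0) := by
    have hz : Filter.Tendsto (fun m : ℕ => (hfin.toFinset.card : ℝ) / ((m:ℝ) + 1)) atTop (𝓝 0) :=
      tendsto_const_nhds.div_atTop (tendsto_natCast_atTop_atTop.atTop_add tendsto_const_nhds)
    exact tendsto_of_tendsto_of_tendsto_of_le_of_le tendsto_const_nhds
      (hz.mono_left UF_le) (fun m => W.nu_nonneg m S) hb
  have := tendsto_nhds_unique (W.tendsto_Lam S) h0
  rw [this] at h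
  exact lt_irrefl _ h

/-- separate a compact set from a disjoint closed set by a clopen set -/
lemma exists_clopen_sep {K₁ K₂ : Set X} (h₁ : IsCompact K₁) (h₂ : IsClosed K₂)
    (hd : Disjoint K₁ K₂) : ∃ C : Set X, IsClopen C ∧ K₁ ⊆ C ∧ Disjoint C K₂ := by
  have hsub : ∀ x ∈ K₁, x ∈ K₂ᶜ := fun x hx => (Set.disjoint_left.1 hd hx : x ∉ K₂)
  have hV : ∀ x (_ : x ∈ K₁), ∃ V : Set X, IsClopen V ∧ x ∈ V ∧ V ⊆ K₂ᶜ := fun x hx =>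
    compact_exists_isClopen_in_isOpen h₂.isOpen_compl (hsub x hx)
  choose V hV1 hV2 hV3 using hV
  obtain ⟨t, ht⟩ := h₁.elim_nhds_subcover' V
    (fun x hx => (hV1 x hx).2.mem_nhds (hV2 x hx))
  refine ⟨⋃ x ∈ t, V x x.2, ?_, ht, ?_⟩
  · exact isClopen_biUnion_finset (fun x _ => hV1 x x.2)
  · rw [Set.disjoint_left]
    intro a ha haK
    rcases Set.mem_iUnion₂.1 ha with ⟨x, hx, hV⟩
    exact hV3 x x.2 hV haK

/-- the value set for the content infimum -/
def Windows.contSet (K : Set X) : Set ℝ≥0 :=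
  {r : ℝ≥0 | ∃ C : Set X, IsClopen C ∧ K ⊆ C ∧ r = (W.Lam C).toNNReal}

lemma Windows.contSet_nonempty (K : Set X) : (W.contSet K).Nonempty :=
  ⟨(W.Lam Set.univ).toNNReal, Set.univ, isClopen_univ, Set.subset_univ K, rfl⟩

lemma Windows.le_contSet {K : Set X} {C : Set X} (hC : IsClopen C) (hKC : K ⊆ C) :
    sInf (W.contSet K) ≤ (W.Lam C).toNNReal :=
  csInf_le (OrderBot.bddBelow _) ⟨C, hC, hKC, rfl⟩

lemma Windows.lamNN_union_le (C D : Set X) :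
    (W.Lam (C ∪ D)).toNNReal ≤ (W.Lam C).toNNReal + (W.Lam D).toNNReal := by
  rw [← Real.toNNReal_add (W.Lam_nonneg C) (W.Lam_nonneg D)]
  exact Real.toNNReal_mono (W.Lam_union_le C D)

lemma Windows.lamNN_mono {C D : Set X} (h : C ⊆ D) :
    (W.Lam C).toNNReal ≤ (W.Lam D).toNNReal :=
  Real.toNNReal_mono (W.Lam_mono h)

lemma Windows.con_le_add (K₁ K₂ K : Set X) (hK : K ⊆ K₁ ∪ K₂) :
    sInf (W.contSet K) ≤ sInf (W.contSet K₁) + sInf (W.contSet K₂) := by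
  refine le_of_forall_pos_le_add (fun ε hε => ?_)
  obtain ⟨r₁, ⟨C₁, hC₁, hKC₁, rfl⟩, hr₁⟩ :=
    exists_lt_of_csInf_lt (W.contSet_nonempty K₁)
      (lt_add_of_pos_right (sInf (W.contSet K₁)) (half_pos hε))
  obtain ⟨r₂, ⟨C₂, hC₂, hKC₂, rfl⟩, hr₂⟩ :=
    exists_lt_of_csInf_lt (W.contSet_nonempty K₂)
      (lt_add_of_pos_right (sInf (W.contSet K₂)) (half_pos hε))
  have hsub : sInf (W.contSet K) ≤ (W.Lam (C₁ ∪ C₂)).toNNReal :=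
    W.le_contSet (hC₁.union hC₂) (hK.trans (Set.union_subset_union hKC₁ hKC₂))
  calc sInf (W.contSet K) ≤ (W.Lam C₁).toNNReal + (W.Lam C₂).toNNReal :=
        hsub.trans (W.lamNN_union_le C₁ C₂)
    _ ≤ (sInf (W.contSet K₁) + ε/2) + (sInf (W.contSet K₂) + ε/2) :=
        add_le_add hr₁.le hr₂.le
    _ = sInf (W.contSet K₁) + sInf (W.contSet K₂) + (ε/2 + ε/2) := by ring
    _ = sInf (W.contSet K₁) + sInf (W.contSet K₂) + ε := by rw [add_halves]

/-- the content induced by `Lam` -/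
def Windows.con : MeasureTheory.Content X where
  toFun K := sInf (W.contSet K)
  mono' K₁ K₂ h := by
    apply le_csInf (W.contSet_nonempty _)
    rintro r ⟨C, hC, hKC, rfl⟩
    exact W.le_contSet hC (h.trans hKC)
  sup_le' K₁ K₂ := W.con_le_add K₁ K₂ _ (by rw [TopologicalSpace.Compacts.coe_sup])
  sup_disjoint' K₁ K₂ hd h₁ h₂ := by
    refine le_antisymm
      (W.con_le_add K₁ K₂ _ (by rw [TopologicalSpace.Compacts.coe_sup])) ?_
    obtain ⟨C₁, hC₁, hKC₁, hdis⟩ := exists_clopen_sep K₁.2 h₂ hd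
    apply le_csInf (W.contSet_nonempty _)
    rintro r ⟨C, hC, hKC, rfl⟩
    rw [TopologicalSpace.Compacts.coe_sup] at hKC
    have hK1 : (K₁ : Set X) ⊆ C ∩ C₁ :=
      Set.subset_inter ((Set.subset_union_left).trans hKC) hKC₁
    have hK2 : (K₂ : Set X) ⊆ C ∩ C₁ᶜ :=
      Set.subset_inter ((Set.subset_union_right).trans hKC)
        (fun a ha => Set.disjoint_right.1 hdis ha)
    have h1 : sInf (W.contSet K₁) ≤ (W.Lam (C ∩ C₁)).toNNReal :=
      W.le_contSet (hC.inter hC₁) hK1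
    have h2 : sInf (W.contSet K₂) ≤ (W.Lam (C ∩ C₁ᶜ)).toNNReal :=
      W.le_contSet (hC.inter hC₁.compl) hK2
    have hunion : (C ∩ C₁) ∪ (C ∩ C₁ᶜ) = C := by
      rw [← Set.inter_union_distrib_left, Set.union_compl_self, Set.inter_univ]
    have hdisj : Disjoint (C ∩ C₁) (C ∩ C₁ᶜ) :=
      (disjoint_compl_right : Disjoint C₁ C₁ᶜ).mono Set.inter_subset_right
        Set.inter_subset_right
    have hadd : W.Lam (C ∩ C₁) + W.Lam (C ∩ C₁ᶜ) = W.Lam C := by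
      rw [← W.Lam_union hdisj, hunion]
    calc sInf (W.contSet K₁) + sInf (W.contSet K₂)
        ≤ (W.Lam (C ∩ C₁)).toNNReal + (W.Lam (C ∩ C₁ᶜ)).toNNReal := add_le_add h1 h2
      _ = (W.Lam C).toNNReal := by
          rw [← Real.toNNReal_add (W.Lam_nonneg _) (W.Lam_nonneg _), hadd]

/-- the limit measure on Cantor space -/
def Windows.mu : MeasureTheory.Measure X := W.con.measure

lemma Windows.con_apply_le {C : Set X} (hC : IsClopen C) (K : TopologicalSpace.Compacts X)
    (hK : (K : Set X) ⊆ C) : W.con K ≤ ((W.Lam C).toNNReal : ℝ≥0∞) := by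
  change ((sInf (W.contSet K) : ℝ≥0) : ℝ≥0∞) ≤ _
  exact_mod_cast W.le_contSet hC hK

lemma Windows.le_con_apply {C : Set X} (hC : IsClopen C) (K : TopologicalSpace.Compacts X)
    (hK : C ⊆ (K : Set X)) : ((W.Lam C).toNNReal : ℝ≥0∞) ≤ W.con K := by
  change _ ≤ ((sInf (W.contSet K) : ℝ≥0) : ℝ≥0∞)
  have : (W.Lam C).toNNReal ≤ sInf (W.contSet K) := by
    apply le_csInf (W.contSet_nonempty _)
    rintro r ⟨C', hC', hKC', rfl⟩
    exact W.lamNN_mono (hK.trans hKC')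
  exact_mod_cast this

lemma Windows.mu_clopen {C : Set X} (hC : IsClopen C) :
    W.mu C = ((W.Lam C).toNNReal : ℝ≥0∞) := by
  have hmeas : MeasurableSet C := hC.2.measurableSet
  have hKc : IsCompact C := hC.1.isCompact
  rw [Windows.mu, MeasureTheory.Content.measure_apply _ hmeas,
    MeasureTheory.Content.outerMeasure_of_isOpen _ C hC.2]
  apply le_antisymm
  · exact (MeasureTheory.Content.innerContent_le _ ⟨C, hC.2⟩ ⟨C, hKc⟩ subset_rfl).trans
      (W.con_apply_le hC ⟨C, hKc⟩ subset_rfl)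
  · exact (W.le_con_apply hC ⟨C, hKc⟩ subset_rfl).trans
      (W.con.le_innerContent ⟨C, hKc⟩ ⟨C, hC.2⟩ subset_rfl)

instance Windows.mu_prob : MeasureTheory.IsProbabilityMeasure W.mu := by
  constructor
  rw [W.mu_clopen isClopen_univ, W.Lam_univ]
  simp

lemma Windows.mu_Ecyl_ge (b : ℕ) : ENNReal.ofReal W.δ ≤ W.mu (Ecyl b) := by
  rw [W.mu_clopen (isClopen_Ecyl b)]
  rw [show ((W.Lam (Ecyl b)).toNNReal : ℝ≥0∞) = ENNReal.ofReal (W.Lam (Ecyl b)) from rfl]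
  exact ENNReal.ofReal_le_ofReal (W.Lam_Ecyl_ge b)

lemma Windows.infinite_orbit_of_mu_pos {C : Set X} (hC : IsClopen C) (h : 0 < W.mu C) :
    {j : ℕ | pt A j ∈ C}.Infinite := by
  apply W.infinite_orbit_of_Lam_pos
  rw [W.mu_clopen hC] at h
  by_contra hle
  push_neg at hle
  have : W.Lam C = 0 := le_antisymm hle (W.Lam_nonneg C)
  rw [this] at h
  simp at h

section Bergelson

variable (bb : ℕ → ℕ)

/-- ergodic averages along the sequence `bb` -/
def gav (n : ℕ) (x : X) : ℝ≥0∞ :=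
  (n : ℝ≥0∞)⁻¹ * ∑ i ∈ Finset.range n, (Ecyl (bb i)).indicator 1 x

def hav (n : ℕ) (x : X) : ℝ≥0∞ := ⨆ k, gav bb (n + k) x

def fav (x : X) : ℝ≥0∞ := ⨅ n, hav bb n x

lemma measurable_gav (n : ℕ) : Measurable (gav bb n) := by
  apply Measurable.const_mul
  apply Finset.measurable_sum
  intro i _
  exact (measurable_const.indicator (measurableSet_Ecyl (bb i)))

lemma measurable_hav (n : ℕ) : Measurable (hav bb n) :=
  Measurable.iSup (fun k => measurable_gav bb (n + k))

lemma measurable_fav : Measurable (fav bb) :=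
  Measurable.iInf (fun n => measurable_hav bb n)

lemma gav_le_one (n : ℕ) (x : X) : gav bb n x ≤ 1 := by
  unfold gav
  rcases Nat.eq_zero_or_pos n with rfl | hn
  · simp
  have hsum : ∑ i ∈ Finset.range n, (Ecyl (bb i)).indicator (1 : X → ℝ≥0∞) x ≤ n := by
    calc ∑ i ∈ Finset.range n, (Ecyl (bb i)).indicator (1 : X → ℝ≥0∞) x
        ≤ ∑ _i ∈ Finset.range n, 1 :=
          Finset.sum_le_sum (fun i _ => Set.indicator_le_self' (by simp) x)
      _ = n := by simp
  calc (n : ℝ≥0∞)⁻¹ * ∑ i ∈ Finset.range n, (Ecyl (bb i)).indicator 1 x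
      ≤ (n : ℝ≥0∞)⁻¹ * n := by exact mul_le_mul_right hsum _
    _ = 1 := ENNReal.inv_mul_cancel (by exact_mod_cast hn.ne') (by simp)

lemma hav_le_one (n : ℕ) (x : X) : hav bb n x ≤ 1 :=
  iSup_le (fun k => gav_le_one bb (n + k) x)

lemma fav_le_one (x : X) : fav bb x ≤ 1 :=
  (iInf_le _ 0).trans (hav_le_one bb 0 x)

lemma antitone_hav : Antitone (hav bb) := by
  apply antitone_nat_of_succ_le
  intro n x
  refine iSup_le (fun k => ?_)
  have : n + 1 + k = n + (k + 1) := by omega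
  rw [this]
  exact le_iSup (fun k => gav bb (n + k) x) (k + 1)

variable {A : Set ℕ} (W : Windows A)

lemma lintegral_gav_ge (n : ℕ) (hn : 1 ≤ n) :
    ENNReal.ofReal W.δ ≤ ∫⁻ x, gav bb n x ∂W.mu := by
  have hmeas : ∀ i ∈ Finset.range n, Measurable ((Ecyl (bb i)).indicator (1 : X → ℝ≥0∞)) :=
    fun i _ => measurable_const.indicator (measurableSet_Ecyl (bb i))
  have hint : ∫⁻ x, gav bb n x ∂W.mu
      = (n : ℝ≥0∞)⁻¹ * ∑ i ∈ Finset.range n, W.mu (Ecyl (bb i)) := by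
    unfold gav
    rw [MeasureTheory.lintegral_const_mul _ (Finset.measurable_sum _ hmeas),
      MeasureTheory.lintegral_finset_sum _ hmeas]
    congr 1
    refine Finset.sum_congr rfl (fun i _ => ?_)
    exact MeasureTheory.lintegral_indicator_one (measurableSet_Ecyl (bb i))
  rw [hint]
  have hsum : (n : ℝ≥0∞) * ENNReal.ofReal W.δ ≤ ∑ i ∈ Finset.range n, W.mu (Ecyl (bb i)) := by
    calc (n : ℝ≥0∞) * ENNReal.ofReal W.δ
        = ∑ _i ∈ Finset.range n, ENNReal.ofReal W.δ := by
          rw [Finset.sum_const, Finset.card_range, nsmul_eq_mul]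
      _ ≤ _ := Finset.sum_le_sum (fun i _ => W.mu_Ecyl_ge (bb i))
  calc ENNReal.ofReal W.δ
      = (n : ℝ≥0∞)⁻¹ * ((n : ℝ≥0∞) * ENNReal.ofReal W.δ) := by
        rw [← mul_assoc, ENNReal.inv_mul_cancel (Nat.cast_ne_zero.2 (Nat.one_le_iff_ne_zero.1 hn)) (by simp), one_mul]
    _ ≤ _ := mul_le_mul_right hsum _

lemma lintegral_fav_ge : ENNReal.ofReal W.δ ≤ ∫⁻ x, fav bb x ∂W.mu := by
  have hiInf : ∫⁻ x, fav bb x ∂W.mu = ⨅ n, ∫⁻ x, hav bb n x ∂W.mu := by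
    apply MeasureTheory.lintegral_iInf (measurable_hav bb) (antitone_hav bb)
    have : ∫⁻ x, hav bb 0 x ∂W.mu ≤ 1 := by
      calc ∫⁻ x, hav bb 0 x ∂W.mu ≤ ∫⁻ _x, 1 ∂W.mu :=
            MeasureTheory.lintegral_mono (fun x => hav_le_one bb 0 x)
        _ = 1 := by simp
    exact (this.trans_lt (by simp)).ne
  rw [hiInf]
  refine le_iInf (fun n => ?_)
  calc ENNReal.ofReal W.δ ≤ ∫⁻ x, gav bb (n + 1) x ∂W.mu :=
        lintegral_gav_ge bb W (n + 1) (Nat.succ_le_succ (Nat.zero_le n))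
    _ ≤ ∫⁻ x, hav bb n x ∂W.mu := by
        refine MeasureTheory.lintegral_mono (fun x => ?_)
        exact le_iSup (fun k => gav bb (n + k) x) 1

/-- the "large limsup" set -/
def Dset : Set X := {x : X | ENNReal.ofReal W.δ / 2 ≤ fav bb x}

lemma measurableSet_Dset : MeasurableSet (Dset bb W) :=
  measurableSet_le measurable_const (measurable_fav bb)

lemma delta0_pos : (0 : ℝ≥0∞) < ENNReal.ofReal W.δ := by
  simp [ENNReal.ofReal_pos, W.hδ]

lemma mu_Dset_pos : 0 < W.mu (Dset bb W) := by
  set δ₀ := ENNReal.ofReal W.δ with hδ₀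
  have hδ₀top : δ₀ ≠ ⊤ := ENNReal.ofReal_ne_top
  have hbound : ∀ x, fav bb x ≤ (Dset bb W).indicator 1 x + δ₀ / 2 := by
    intro x
    by_cases hx : x ∈ Dset bb W
    · calc fav bb x ≤ 1 := fav_le_one bb x
        _ ≤ (Dset bb W).indicator 1 x + δ₀ / 2 := by
            rw [Set.indicator_of_mem hx]; exact le_self_add
    · have : fav bb x < δ₀ / 2 := lt_of_not_ge hx
      rw [Set.indicator_of_notMem hx]
      simpa using this.le
  have hint : ∫⁻ x, fav bb x ∂W.mu ≤ W.mu (Dset bb W) + δ₀ / 2 := by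
    calc ∫⁻ x, fav bb x ∂W.mu
        ≤ ∫⁻ x, ((Dset bb W).indicator 1 x + δ₀ / 2) ∂W.mu :=
          MeasureTheory.lintegral_mono hbound
      _ = W.mu (Dset bb W) + δ₀ / 2 := by
          rw [MeasureTheory.lintegral_add_right _ measurable_const,
            MeasureTheory.lintegral_indicator_one (measurableSet_Dset bb W)]
          simp [MeasureTheory.measure_univ]
  by_contra hzero
  push_neg at hzero
  have h0 : W.mu (Dset bb W) = 0 := le_antisymm hzero zero_le
  have : δ₀ ≤ δ₀ / 2 := by
    calc δ₀ ≤ ∫⁻ x, fav bb x ∂W.mu := lintegral_fav_ge bb W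
      _ ≤ W.mu (Dset bb W) + δ₀ / 2 := hint
      _ = δ₀ / 2 := by rw [h0, zero_add]
  exact absurd this (not_le.2 (ENNReal.half_lt_self (delta0_pos W).ne' hδ₀top))

/-- Bergelson selection: any positive-measure subset of `Dset` meets some `Ecyl (bb i)`
with `i` as large as we like, in positive measure. -/
lemma exists_good_index {D' : Set X} (hD'm : MeasurableSet D') (hD' : D' ⊆ Dset bb W)
    (hpos : 0 < W.mu D') (N₀ : ℕ) :
    ∃ i, N₀ ≤ i ∧ 0 < W.mu (Ecyl (bb i) ∩ D') := by
  by_contra hcon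
  push_neg at hcon
  have hnull : ∀ i, N₀ ≤ i → W.mu (Ecyl (bb i) ∩ D') = 0 := by
    intro i hi
    exact le_antisymm (hcon i hi) zero_le
  set Z : Set X := ⋃ k : ℕ, (Ecyl (bb (N₀ + k)) ∩ D') with hZ
  have hZ0 : W.mu Z = 0 :=
    MeasureTheory.measure_iUnion_null (fun k => hnull (N₀ + k) (Nat.le_add_right _ _))
  have hDZ : 0 < W.mu (D' \ Z) := by
    rwa [MeasureTheory.measure_diff_null hZ0]
  obtain ⟨x, hxD', hxZ⟩ := MeasureTheory.nonempty_of_measure_ne_zero hDZ.ne'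
  -- x avoids all Ecyl (bb i) for i ≥ N₀
  have hxE : ∀ i, N₀ ≤ i → x ∉ Ecyl (bb i) := by
    intro i hi hxEi
    exact hxZ (Set.mem_iUnion.2 ⟨i - N₀, ⟨by rwa [Nat.add_sub_cancel' hi], hxD'⟩⟩)
  -- hence the averages tend to 0 at x
  have hg : ∀ n : ℕ, gav bb n x ≤ (N₀ : ℝ≥0∞) * (n : ℝ≥0∞)⁻¹ := by
    intro n
    have hsum : ∑ i ∈ Finset.range n, (Ecyl (bb i)).indicator (1 : X → ℝ≥0∞) x ≤ N₀ := by
      calc ∑ i ∈ Finset.range n, (Ecyl (bb i)).indicator (1 : X → ℝ≥0∞) x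
          ≤ ∑ i ∈ Finset.range n, (↑(Finset.range N₀) : Set ℕ).indicator
              (1 : ℕ → ℝ≥0∞) i := by
            refine Finset.sum_le_sum (fun i _ => ?_)
            by_cases hxi : x ∈ Ecyl (bb i)
            · have hiN : i < N₀ := by
                by_contra hge
                exact hxE i (le_of_not_gt hge) hxi
              rw [Set.indicator_of_mem hxi, Set.indicator_of_mem (by simpa using hiN)]
              exact le_rfl
            · rw [Set.indicator_of_notMem hxi]
              exact zero_le
        _ ≤ ∑ i ∈ Finset.range N₀, (1 : ℝ≥0∞) := by
            rcases le_or_gt n N₀ with hnN | hnN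
            · calc _ ≤ ∑ i ∈ Finset.range n, (1:ℝ≥0∞) :=
                    Finset.sum_le_sum (fun i _ => Set.indicator_le_self' (by simp) i)
                _ ≤ _ := Finset.sum_le_sum_of_subset
                    (Finset.range_subset_range.2 hnN)
            · rw [← Finset.sum_subset (Finset.range_subset_range.2 hnN.le)
                (fun i _ hiN => Set.indicator_of_notMem (by simpa using hiN) _)]
              exact Finset.sum_le_sum (fun i _ => Set.indicator_le_self' (by simp) i)
        _ = N₀ := by simp
    unfold gav
    rw [mul_comm]
    exact mul_le_mul_left hsum _
  have hfav0 : fav bb x = 0 := by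
    by_contra hne
    have hpos' : 0 < fav bb x := pos_iff_ne_zero.2 hne
    -- pick n with N₀ * n⁻¹ < fav bb x
    have hN₀top : (N₀ : ℝ≥0∞) ≠ ⊤ := ENNReal.natCast_ne_top N₀
    rcases Nat.eq_zero_or_pos N₀ with hN₀ | hN₀
    · have : fav bb x ≤ 0 := by
        refine (iInf_le (fun n => hav bb n x) 1).trans (iSup_le (fun k => ?_))
        simpa [hN₀] using hg (1 + k)
      exact hne (le_antisymm this zero_le)
    · have hN₀0 : (N₀ : ℝ≥0∞) ≠ 0 := by exact_mod_cast hN₀.ne'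
      obtain ⟨n, hn⟩ := ENNReal.exists_inv_nat_lt
        (show fav bb x * (N₀ : ℝ≥0∞)⁻¹ ≠ 0 by
          exact mul_ne_zero hne (ENNReal.inv_ne_zero.2 hN₀top))
      -- N₀ * n⁻¹ < fav x
      have hlt : (N₀ : ℝ≥0∞) * ((n:ℝ≥0∞))⁻¹ < fav bb x := by
        have h1 : (N₀ : ℝ≥0∞) * ((n:ℝ≥0∞))⁻¹ < (N₀:ℝ≥0∞) * (fav bb x * (N₀:ℝ≥0∞)⁻¹) :=
          ENNReal.mul_lt_mul_right hN₀0 hN₀top hn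
        calc (N₀ : ℝ≥0∞) * ((n:ℝ≥0∞))⁻¹ < (N₀:ℝ≥0∞) * (fav bb x * (N₀:ℝ≥0∞)⁻¹) := h1
          _ = fav bb x := by
              rw [mul_comm (fav bb x) _, ← mul_assoc,
                ENNReal.mul_inv_cancel hN₀0 hN₀top, one_mul]
      have hle : fav bb x ≤ (N₀ : ℝ≥0∞) * ((n:ℝ≥0∞))⁻¹ := by
        rcases Nat.eq_zero_or_pos n with rfl | hn0
        · rw [Nat.cast_zero, ENNReal.inv_zero, ENNReal.mul_top hN₀0]
          exact le_top
        calc fav bb x ≤ hav bb n x := iInf_le _ n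
          _ ≤ (N₀ : ℝ≥0∞) * ((n:ℝ≥0∞))⁻¹ := by
              refine iSup_le (fun k => (hg (n+k)).trans ?_)
              refine mul_le_mul_right ?_ _
              exact ENNReal.inv_le_inv.2 (by exact_mod_cast Nat.le_add_right n k)
      exact absurd hlt (not_lt.2 hle)
  have hxD : x ∈ Dset bb W := hD' hxD'
  have : ENNReal.ofReal W.δ / 2 ≤ 0 := by
    calc ENNReal.ofReal W.δ / 2 ≤ fav bb x := hxD
      _ = 0 := hfav0
  have hhalf : (0:ℝ≥0∞) < ENNReal.ofReal W.δ / 2 :=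
    ENNReal.half_pos (delta0_pos W).ne'
  exact absurd this (not_le.2 hhalf)

/-- state of the recursive construction -/
structure Chain (bb : ℕ → ℕ) {A : Set ℕ} (W : Windows A) where
  i : ℕ
  c : ℕ
  Dk : Set X
  Ck : Set X
  hDm : MeasurableSet Dk
  hDsub : Dk ⊆ Dset bb W
  hDpos : 0 < W.mu Dk
  hDC : Dk ⊆ Ck
  hCc : IsClopen Ck
  hCE : Ck ⊆ Ecyl (bb i)
  hcC : pt A c ∈ Ck
  hbc : bb i < c

lemma mu_Ck_pos (s : Chain bb W) : 0 < W.mu s.Ck :=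
  lt_of_lt_of_le s.hDpos (MeasureTheory.measure_mono s.hDC)

lemma exists_chain_step (hbb : StrictMono bb) (s : Chain bb W) :
    ∃ t : Chain bb W, t.Ck ⊆ s.Ck ∧ s.c < bb t.i ∧ s.c < t.c := by
  obtain ⟨i, hi, hpos⟩ := exists_good_index bb W s.hDm s.hDsub s.hDpos (s.c + 1)
  have hbi : s.c < bb i := lt_of_lt_of_le (Nat.lt_of_succ_le hi) hbb.le_apply
  set Ck' : Set X := s.Ck ∩ Ecyl (bb i) with hCk'
  have hCk'c : IsClopen Ck' := s.hCc.inter (isClopen_Ecyl (bb i))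
  have hDk'pos : 0 < W.mu (Ecyl (bb i) ∩ s.Dk) := hpos
  have hCk'pos : 0 < W.mu Ck' := by
    refine lt_of_lt_of_le hDk'pos (MeasureTheory.measure_mono ?_)
    exact fun x hx => ⟨s.hDC hx.2, hx.1⟩
  obtain ⟨c', hc'mem, hc'gt⟩ := (W.infinite_orbit_of_mu_pos hCk'c hCk'pos).exists_gt (bb i)
  refine ⟨⟨i, c', Ecyl (bb i) ∩ s.Dk, Ck', (measurableSet_Ecyl _).inter s.hDm,
    (Set.inter_subset_right).trans s.hDsub, hDk'pos,
    fun x hx => ⟨s.hDC hx.2, hx.1⟩, hCk'c, Set.inter_subset_right, hc'mem, hc'gt⟩,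
    Set.inter_subset_left, hbi, lt_trans hbi hc'gt⟩

lemma exists_chain_start (hbb : StrictMono bb) : Nonempty (Chain bb W) := by
  obtain ⟨i, -, hpos⟩ := exists_good_index bb W (measurableSet_Dset bb W)
    (subset_rfl) (mu_Dset_pos bb W) 0
  have hCpos : 0 < W.mu (Ecyl (bb i)) := by
    refine lt_of_lt_of_le hpos (MeasureTheory.measure_mono Set.inter_subset_left)
  obtain ⟨c', hc'mem, hc'gt⟩ :=
    (W.infinite_orbit_of_mu_pos (isClopen_Ecyl (bb i)) hCpos).exists_gt (bb i)
  exact ⟨⟨i, c', Ecyl (bb i) ∩ Dset bb W, Ecyl (bb i), (measurableSet_Ecyl _).inter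
    (measurableSet_Dset bb W), Set.inter_subset_right, hpos, Set.inter_subset_left,
    isClopen_Ecyl _, subset_rfl, hc'mem, hc'gt⟩⟩

/-- the recursively constructed chain -/
noncomputable def chain (hbb : StrictMono bb) : ℕ → Chain bb W :=
  fun k => Nat.rec (Classical.choice (exists_chain_start bb W hbb))
    (fun _ s => Classical.choose (exists_chain_step bb W hbb s)) k

lemma chain_succ_spec (hbb : StrictMono bb) (k : ℕ) :
    (chain bb W hbb (k+1)).Ck ⊆ (chain bb W hbb k).Ck ∧
      (chain bb W hbb k).c < bb (chain bb W hbb (k+1)).i ∧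
      (chain bb W hbb k).c < (chain bb W hbb (k+1)).c :=
  Classical.choose_spec (exists_chain_step bb W hbb (chain bb W hbb k))

lemma chain_Ck_anti (hbb : StrictMono bb) {j k : ℕ} (h : j ≤ k) :
    (chain bb W hbb k).Ck ⊆ (chain bb W hbb j).Ck := by
  induction k with
  | zero =>
    have hj : j = 0 := Nat.le_zero.1 h
    subst hj; exact subset_rfl
  | succ k ih =>
    by_cases hj : j ≤ k
    · exact ((chain_succ_spec bb W hbb k).1).trans (ih hj)
    · have : j = k + 1 := by omega
      subst this; exact subset_rfl

lemma chain_b_strictMono (hbb : StrictMono bb) :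
    StrictMono (fun k => bb ((chain bb W hbb k).i)) := by
  apply strictMono_nat_of_lt_succ
  intro k
  exact lt_trans (chain bb W hbb k).hbc (chain_succ_spec bb W hbb k).2.1

lemma chain_c_strictMono (hbb : StrictMono bb) :
    StrictMono (fun k => (chain bb W hbb k).c) :=
  strictMono_nat_of_lt_succ (fun k => (chain_succ_spec bb W hbb k).2.2)

lemma chain_main (hbb : StrictMono bb) (j k : ℕ)
    (h : bb ((chain bb W hbb j).i) < (chain bb W hbb k).c) :
    bb ((chain bb W hbb j).i) + (chain bb W hbb k).c ∈ A := by
  rcases le_or_gt j k with hjk | hkj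
  · have h1 : pt A ((chain bb W hbb k).c) ∈ (chain bb W hbb k).Ck := (chain bb W hbb k).hcC
    have h2 : pt A ((chain bb W hbb k).c) ∈ Ecyl (bb ((chain bb W hbb j).i)) :=
      (chain bb W hbb j).hCE (chain_Ck_anti bb W hbb hjk h1)
    exact (pt_mem_Ecyl A).1 h2
  · exfalso
    have h3 : (chain bb W hbb k).c < bb ((chain bb W hbb (k+1)).i) :=
      (chain_succ_spec bb W hbb k).2.1
    have h4 : bb ((chain bb W hbb (k+1)).i) ≤ bb ((chain bb W hbb j).i) :=
      (chain_b_strictMono bb W hbb).monotone hkj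
    omega

end Bergelson

end

end SumsetAux


/-- For any infinite `R ⊆ ℕ` and any `A` with `d*(A) > 0`, there are infinite sets
`B ⊆ R` and `C ⊆ ℕ` with `{b + c : b ∈ B, c ∈ C, b < c} ⊆ A`. -/
theorem infinite_first_summand_ordered_sumset (R : Set ℕ) (hR : R.Infinite)
    (A : Set ℕ) (hA : 0 < upperBanachDensity A) :
    ∃ B C : Set ℕ, B ⊆ R ∧ B.Infinite ∧ C.Infinite ∧
      ∀ b ∈ B, ∀ c ∈ C, b < c → b + c ∈ A := by
  obtain ⟨W⟩ := SumsetAux.exists_windows A hA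
  set bb : ℕ → ℕ := Nat.nth (· ∈ R) with hbbdef
  have hbb : StrictMono bb := Nat.nth_strictMono hR
  have hbbR : ∀ k, bb k ∈ R := fun k => Nat.nth_mem_of_infinite hR k
  set F := SumsetAux.chain bb W hbb with hF
  refine ⟨Set.range (fun k => bb ((F k).i)), Set.range (fun k => (F k).c), ?_, ?_, ?_, ?_⟩
  · rintro x ⟨k, rfl⟩; exact hbbR _
  · exact Set.infinite_range_of_injective (SumsetAux.chain_b_strictMono bb W hbb).injective
  · exact Set.infinite_range_of_injective (SumsetAux.chain_c_strictMono bb W hbb).injective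
  · rintro b ⟨j, rfl⟩ c ⟨k, rfl⟩ hlt
    exact SumsetAux.chain_main bb W hbb j k hlt
end
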